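/- arXiv:1705.03908 — 13 statements merged into one kernel-verified Lean document; each statement's English description precedes it below -/
import Mathlib

section
/- Let n ≥ 2 be an integer and λ > 0. Let f : (1,∞) → ℝ be a smooth function with f'(x) = λ(1 − x^{−n})^{1/n} for all x > 1, and set U = {z ∈ ℂ^n : |z|² > 1}. Then there do not exist a holomorphic function φ : U → ℂ and holomorphic functions h_j : U → ℂ (j ∈ ℕ) such that Σ_{j∈ℕ} |h_j(z)|² = exp(f(|z|²) + 2 Re φ(z)) for every z ∈ U. (That is, for every λ > 0 the Ricci-flat radial Kähler metric λω_{−1} is not projectively induced.) -/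
open MeasureTheory Filter Set Complex
open scoped Real Topology NNReal ENNReal ComplexConjugate

noncomputable section

namespace NotPI





/-- Taylor coefficients of an entire function. -/
def tc (g : ℂ → ℂ) (k : ℕ) : ℂ := (k.factorial : ℂ)⁻¹ * iteratedDeriv k g 0

lemma hasSum_tc {g : ℂ → ℂ} (hg : Differentiable ℂ g) (z : ℂ) :
    HasSum (fun k => tc g k * z ^ k) (g z) := by
  have h := Complex.hasSum_taylorSeries_of_entire hg 0 z
  simp only [sub_zero, smul_eq_mul] at h
  refine h.congr_fun fun k => ?_
  simp only [tc]; ring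

lemma summable_norm_tc {g : ℂ → ℂ} (hg : Differentiable ℂ g) {r : ℝ} (hr : 0 ≤ r) :
    Summable (fun k => ‖tc g k‖ * r ^ k) := by
  set R : ℝ := 2 * r + 1 with hR
  have hR0 : 0 < R := by positivity
  have h1 : Summable (fun k => tc g k * (R : ℂ) ^ k) := (hasSum_tc hg (R : ℂ)).summable
  have h2 : Tendsto (fun k => ‖tc g k * (R : ℂ) ^ k‖) atTop (𝓝 0) := by
    simpa using h1.tendsto_atTop_zero.norm
  obtain ⟨C, hC⟩ := h2.bddAbove_range
  have hCb : ∀ k, ‖tc g k‖ * R ^ k ≤ C := by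
    intro k
    have := hC (Set.mem_range_self k)
    simpa [norm_mul, norm_pow, Complex.norm_real, _root_.abs_of_nonneg hR0.le] using this
  refine Summable.of_nonneg_of_le (fun k => by positivity) (fun k => ?_)
    ((summable_geometric_two).mul_left C)
  have hrR : r ≤ R * (1 / 2) := by rw [hR]; nlinarith
  calc ‖tc g k‖ * r ^ k ≤ ‖tc g k‖ * (R * (1 / 2)) ^ k := by
        gcongr
    _ = (‖tc g k‖ * R ^ k) * (1 / 2) ^ k := by rw [mul_pow]; ring
    _ ≤ C * (1 / 2) ^ k := by
        have : (0:ℝ) ≤ (1/2:ℝ) ^ k := by positivity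
        exact mul_le_mul_of_nonneg_right (hCb k) this

lemma summable_sq_tc {g : ℂ → ℂ} (hg : Differentiable ℂ g) {r : ℝ} (hr : 0 ≤ r) :
    Summable (fun k => ‖tc g k‖ ^ 2 * r ^ (2 * k)) := by
  have h := summable_norm_tc hg hr
  set S := ∑' k, ‖tc g k‖ * r ^ k with hS
  have hterm : ∀ k, ‖tc g k‖ * r ^ k ≤ S :=
    fun k => Summable.le_tsum h k (fun j _ => by positivity)
  refine Summable.of_nonneg_of_le (fun k => by positivity) (fun k => ?_) (h.mul_left S)
  calc ‖tc g k‖ ^ 2 * r ^ (2 * k) = (‖tc g k‖ * r ^ k) * (‖tc g k‖ * r ^ k) := by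
        rw [two_mul, pow_add]; ring
    _ ≤ S * (‖tc g k‖ * r ^ k) :=
        mul_le_mul_of_nonneg_right (hterm k) (by positivity)





-- circle point
lemma norm_circle (r θ : ℝ) (hr : 0 ≤ r) : ‖(r : ℂ) * Complex.exp (θ * Complex.I)‖ = r := by
  simp [map_mul, Complex.norm_exp, _root_.abs_of_nonneg hr]

lemma circle_pow_conj_pow (r θ : ℝ) (k l : ℕ) :
    ((r : ℂ) * Complex.exp (θ * Complex.I)) ^ k *
      conj (((r : ℂ) * Complex.exp (θ * Complex.I)) ^ l)
    = (r : ℂ) ^ (k + l) * Complex.exp (((k : ℂ) - (l : ℂ)) * θ * Complex.I) := by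
  rw [map_pow, map_mul, Complex.conj_ofReal]
  rw [← Complex.exp_conj]
  have hconj : conj ((θ : ℂ) * Complex.I) = -((θ : ℂ) * Complex.I) := by
    simp [map_mul, Complex.conj_ofReal]
  rw [hconj]
  rw [mul_pow, mul_pow, ← Complex.exp_nat_mul, ← Complex.exp_nat_mul]
  rw [pow_add]
  rw [mul_mul_mul_comm, ← Complex.exp_add]
  congr 1
  ring_nf





-- exp integral over a period
lemma integral_exp_eint (m : ℤ) :
    (∫ θ in Ioc 0 (2 * π), Complex.exp ((m : ℂ) * θ * Complex.I))
      = if m = 0 then ((2 * π : ℝ) : ℂ) else 0 := by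
  have h0 : (0:ℝ) ≤ 2 * π := by positivity
  rw [← intervalIntegral.integral_of_le h0]
  rcases eq_or_ne m 0 with hm | hm
  · simp [hm]
  · simp only [hm, if_false]
    have hexp : ∀ θ : ℝ, Complex.exp ((m : ℂ) * θ * Complex.I)
        = Complex.exp (((m : ℂ) * Complex.I) * θ) := by
      intro θ; congr 1; ring
    simp only [hexp]
    rw [integral_exp_mul_complex (by simp [hm, Complex.I_ne_zero])]
    have h1 : (m : ℂ) * Complex.I * (2 * π : ℝ) = (m : ℂ) * (2 * (π : ℂ) * Complex.I) := by
      push_cast; ring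
    rw [h1, Complex.exp_int_mul_two_pi_mul_I]
    simp

lemma integral_exp_eint' (k l : ℕ) :
    (∫ θ in Ioc 0 (2 * π), Complex.exp (((k : ℂ) - (l : ℂ)) * θ * Complex.I))
      = if k = l then ((2 * π : ℝ) : ℂ) else 0 := by
  have h := integral_exp_eint ((k : ℤ) - l)
  have hc : (((k : ℤ) - (l : ℤ) : ℤ) : ℂ) = (k : ℂ) - l := by push_cast; ring
  rw [hc] at h
  rw [h]
  by_cases hkl : k = l
  · simp [hkl]
  · have h2 : ((k : ℤ) - l) ≠ 0 := by omega
    simp [hkl, h2]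


lemma parseval {g : ℂ → ℂ} (hg : Differentiable ℂ g) {r : ℝ} (hr : 0 ≤ r) :
    ∫ θ in Ioc 0 (2 * π), ‖g ((r : ℂ) * Complex.exp (θ * Complex.I))‖ ^ 2
      = (2 * π) * ∑' k, ‖tc g k‖ ^ 2 * r ^ (2 * k) := by
  set z : ℝ → ℂ := fun θ => (r : ℂ) * Complex.exp (θ * Complex.I) with hzdef
  set c : ℕ × ℕ → ℂ := fun p => tc g p.1 * conj (tc g p.2) * (r : ℂ) ^ (p.1 + p.2) with hcdef
  set F : ℕ × ℕ → ℝ → ℂ :=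
    fun p θ => c p * Complex.exp (((p.1 : ℂ) - (p.2 : ℂ)) * θ * Complex.I) with hFdef
  have habs : ∀ w : ℂ, w * conj w = ((‖w‖ ^ 2 : ℝ) : ℂ) := by
    intro w
    rw [Complex.mul_conj]
    norm_cast
    rw [Complex.sq_norm]
  have hF : ∀ θ : ℝ, HasSum (fun p => F p θ) ((‖g (z θ)‖ ^ 2 : ℝ) : ℂ) := by
    intro θ
    have h1 := hasSum_tc hg (z θ)
    have h2 : HasSum (fun k => conj (tc g k * (z θ) ^ k)) (conj (g (z θ))) :=
      Complex.hasSum_conj'.mpr h1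
    have hsn : Summable (fun k => ‖tc g k * (z θ) ^ k‖) := by
      refine (summable_norm_tc hg hr).congr fun k => ?_
      rw [norm_mul, norm_pow, norm_circle r θ hr]
    have hsn2 : Summable (fun k => ‖conj (tc g k * (z θ) ^ k)‖) := by simpa using hsn
    have hmul := h1.mul h2 ((hsn.mul_norm hsn2).of_norm)
    have heq : ∀ p : ℕ × ℕ,
        (tc g p.1 * (z θ) ^ p.1) * conj (tc g p.2 * (z θ) ^ p.2) = F p θ := by
      rintro ⟨k, l⟩
      simp only [map_mul, hFdef, hcdef]
      rw [show tc g k * z θ ^ k * (conj (tc g l) * conj (z θ ^ l))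
          = tc g k * conj (tc g l) * (z θ ^ k * conj (z θ ^ l)) by ring]
      rw [hzdef]
      rw [circle_pow_conj_pow r θ k l]
      ring
    have := hmul.congr_fun (fun p => (heq p).symm)
    rwa [habs (g (z θ))] at this
  have hmeas : ∀ p : ℕ × ℕ, AEStronglyMeasurable (F p) (volume.restrict (Ioc 0 (2 * π))) := by
    intro p
    apply Continuous.aestronglyMeasurable
    fun_prop
  have hnormF : ∀ (p : ℕ × ℕ) (θ : ℝ), ‖F p θ‖ = ‖c p‖ := by
    intro p θ
    simp only [hFdef, norm_mul]
    have h1 : ‖Complex.exp (((p.1 : ℂ) - (p.2 : ℂ)) * θ * Complex.I)‖ = 1 := by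
      rw [Complex.norm_exp]
      have h2 : ((((p.1 : ℂ) - (p.2 : ℂ))) * θ * Complex.I).re = 0 := by
        simp [Complex.mul_I_re, Complex.mul_im]
      rw [h2, Real.exp_zero]
    rw [h1, mul_one]
  have hsc : Summable (fun p : ℕ × ℕ => ‖c p‖) := by
    have h := (summable_norm_tc hg hr).mul_of_nonneg (summable_norm_tc hg hr)
      (fun k => by positivity) (fun k => by positivity)
    refine h.congr fun p => ?_
    simp only [hcdef, norm_mul, norm_pow, RCLike.norm_conj, Complex.norm_real,
      Real.norm_eq_abs, _root_.abs_of_nonneg hr, pow_add]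
    ring
  have hlint : ∀ p : ℕ × ℕ,
      (∫⁻ θ in Ioc 0 (2 * π), ‖F p θ‖₊) = ‖c p‖₊ * ENNReal.ofReal (2 * π) := by
    intro p
    have hpt : ∀ θ : ℝ, (‖F p θ‖₊ : ℝ≥0∞) = (‖c p‖₊ : ℝ≥0∞) := by
      intro θ
      congr 1; exact NNReal.eq (hnormF p θ)
    rw [lintegral_congr hpt, MeasureTheory.setLIntegral_const, Real.volume_Ioc]
    norm_num
  have hsum_ne : (∑' p : ℕ × ℕ, ∫⁻ θ in Ioc 0 (2 * π), ‖F p θ‖₊) ≠ ⊤ := by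
    simp only [hlint]
    rw [ENNReal.tsum_mul_right]
    refine ENNReal.mul_ne_top ?_ ENNReal.ofReal_ne_top
    rw [ENNReal.tsum_coe_ne_top_iff_summable]
    exact NNReal.summable_coe.mp (by simpa using hsc)
  have hint := MeasureTheory.integral_tsum hmeas hsum_ne
  have hFint : ∀ p : ℕ × ℕ,
      (∫ θ in Ioc 0 (2 * π), F p θ) = if p.1 = p.2 then c p * ((2 * π : ℝ) : ℂ) else 0 := by
    intro p
    simp only [hFdef]
    rw [MeasureTheory.integral_const_mul, integral_exp_eint' p.1 p.2]
    by_cases h : p.1 = p.2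
    · simp [h]
    · simp [h]
  have hck : ∀ k : ℕ, c (k, k) * ((2 * π : ℝ) : ℂ)
      = ((‖tc g k‖ ^ 2 * r ^ (2 * k) * (2 * π) : ℝ) : ℂ) := by
    intro k
    simp only [hcdef]
    rw [show tc g k * conj (tc g k) * (r : ℂ) ^ (k + k) * ((2 * π : ℝ) : ℂ)
        = (tc g k * conj (tc g k)) * ((r : ℂ) ^ (k + k) * ((2 * π : ℝ) : ℂ)) by ring]
    rw [habs (tc g k)]
    push_cast
    rw [show 2 * k = k + k by ring]
    ring
  have hdiag : HasSum (fun p : ℕ × ℕ => if p.1 = p.2 then c p * ((2 * π : ℝ) : ℂ) else 0)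
      ((((2 * π) * ∑' k, ‖tc g k‖ ^ 2 * r ^ (2 * k) : ℝ)) : ℂ) := by
    have hGsum : HasSum (fun k => ((‖tc g k‖ ^ 2 * r ^ (2 * k) * (2 * π) : ℝ) : ℂ))
        ((((2 * π) * ∑' k, ‖tc g k‖ ^ 2 * r ^ (2 * k) : ℝ)) : ℂ) := by
      have h0 := ((summable_sq_tc hg hr).hasSum.mul_right (2 * π))
      have h1 := Complex.ofRealCLM.hasSum h0
      simpa [mul_comm] using h1
    set G : ℕ → ℂ := fun k => ((‖tc g k‖ ^ 2 * r ^ (2 * k) * (2 * π) : ℝ) : ℂ) with hGdef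
    refine (hasSum_iff_hasSum_of_ne_zero_bij (i := fun x : Function.support G => ((x : ℕ), (x : ℕ)))
      ?_ ?_ ?_).mpr hGsum
    · intro x y hxy
      have : (x : ℕ) = (y : ℕ) := congrArg Prod.fst hxy
      exact Subtype.ext this
    · rintro ⟨k, l⟩ hp
      simp only [Function.mem_support] at hp
      by_cases h : k = l
      · subst h
        have hG : G k ≠ 0 := by
          intro h0
          apply hp
          rw [if_pos rfl, hck k]
          exact h0
        exact ⟨⟨k, hG⟩, rfl⟩
      · exact absurd (by simp [h]) hp
    · intro x
      show (if ((x : ℕ), (x : ℕ)).1 = ((x : ℕ), (x : ℕ)).2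
        then c ((x : ℕ), (x : ℕ)) * ((2 * π : ℝ) : ℂ) else 0) = G (x : ℕ)
      rw [if_pos rfl]
      exact hck (x : ℕ)
  -- assemble
  have h3 : (∫ θ in Ioc 0 (2 * π), ((‖g (z θ)‖ ^ 2 : ℝ) : ℂ))
      = ((∫ θ in Ioc 0 (2 * π), ‖g (z θ)‖ ^ 2 : ℝ) : ℂ) := by
    have := integral_ofReal (𝕜 := ℂ) (f := fun θ => ‖g (z θ)‖ ^ 2)
      (μ := volume.restrict (Ioc 0 (2 * π)))
    simpa using this
  have key : ((∫ θ in Ioc 0 (2 * π), ‖g (z θ)‖ ^ 2 : ℝ) : ℂ)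
      = (((2 * π) * ∑' k, ‖tc g k‖ ^ 2 * r ^ (2 * k) : ℝ) : ℂ) := by
    rw [← h3]
    calc (∫ θ in Ioc 0 (2 * π), ((‖g (z θ)‖ ^ 2 : ℝ) : ℂ))
        = ∫ θ in Ioc 0 (2 * π), ∑' p : ℕ × ℕ, F p θ := by
          refine integral_congr_ae (Filter.Eventually.of_forall fun θ => ?_)
          exact (hF θ).tsum_eq.symm
      _ = ∑' p : ℕ × ℕ, ∫ θ in Ioc 0 (2 * π), F p θ := hint
      _ = ∑' p : ℕ × ℕ, (if p.1 = p.2 then c p * ((2 * π : ℝ) : ℂ) else 0) := tsum_congr hFint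
      _ = (((2 * π) * ∑' k, ‖tc g k‖ ^ 2 * r ^ (2 * k) : ℝ) : ℂ) := hdiag.tsum_eq
  exact_mod_cast key


lemma nonneg_coeffs (g : ℕ → ℂ → ℂ) (hg : ∀ j, Differentiable ℂ (g j)) (Q : ℝ → ℝ)
    (hQ : ∀ t : ℂ, HasSum (fun j => ‖g j t‖ ^ 2) (Q (‖t‖ ^ 2))) :
    ∃ e : ℕ → ℝ, (∀ k, 0 ≤ e k) ∧
      ∀ x : ℝ, 0 ≤ x → HasSum (fun k => e k * x ^ k) (Q x) := by
  classical
  have hπ : (0:ℝ) < 2 * π := by positivity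
  -- the ENNReal coefficients
  set E : ℕ → ℕ → ℝ≥0∞ := fun j k => ENNReal.ofReal (‖tc (g j) k‖ ^ 2) with hE
  set eb : ℕ → ℝ≥0∞ := fun k => ∑' j, E j k with heb
  -- key identity
  have key : ∀ x : ℝ, 0 ≤ x →
      (∑' k, eb k * (ENNReal.ofReal x) ^ k) = ENNReal.ofReal (Q x) := by
    intro x hx
    set r : ℝ := Real.sqrt x with hrdef
    have hr : 0 ≤ r := Real.sqrt_nonneg x
    have hr2 : r ^ 2 = x := Real.sq_sqrt hx
    set z : ℝ → ℂ := fun θ => (r : ℂ) * Complex.exp (θ * Complex.I) with hzdef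
    have hzU : ∀ θ : ℝ, ‖z θ‖ ^ 2 = x := by
      intro θ; rw [hzdef]; simp only; rw [norm_circle r θ hr]; exact hr2
    have hQz : ∀ θ : ℝ, HasSum (fun j => ‖g j (z θ)‖ ^ 2) (Q x) := by
      intro θ; have := hQ (z θ); rwa [hzU θ] at this
    have hQnn : 0 ≤ Q x := by
      have := (hQz 0).tsum_eq
      rw [← this]
      exact tsum_nonneg fun j => by positivity
    -- lintegral computation
    have hzc : Continuous z := by rw [hzdef]; fun_prop
    have hcont : ∀ j : ℕ, Continuous (fun θ : ℝ => ‖g j (z θ)‖ ^ 2) :=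
      fun j => (((hg j).continuous).comp hzc).norm.pow 2
    have hmeas : ∀ j : ℕ, AEMeasurable (fun θ : ℝ => ENNReal.ofReal (‖g j (z θ)‖ ^ 2))
        (volume.restrict (Ioc 0 (2 * π))) :=
      fun j => (ENNReal.continuous_ofReal.comp (hcont j)).aemeasurable
    have hL : (∫⁻ θ in Ioc 0 (2 * π), ∑' j, ENNReal.ofReal (‖g j (z θ)‖ ^ 2))
        = ∑' j, ∫⁻ θ in Ioc 0 (2 * π), ENNReal.ofReal (‖g j (z θ)‖ ^ 2) :=
      lintegral_tsum hmeas
    have hpt : ∀ θ : ℝ, (∑' j, ENNReal.ofReal (‖g j (z θ)‖ ^ 2)) = ENNReal.ofReal (Q x) := by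
      intro θ
      rw [← ENNReal.ofReal_tsum_of_nonneg (fun j => by positivity) (hQz θ).summable]
      rw [(hQz θ).tsum_eq]
    have hLHS : (∫⁻ θ in Ioc 0 (2 * π), ∑' j, ENNReal.ofReal (‖g j (z θ)‖ ^ 2))
        = ENNReal.ofReal (Q x) * ENNReal.ofReal (2 * π) := by
      rw [lintegral_congr hpt, MeasureTheory.setLIntegral_const, Real.volume_Ioc]
      norm_num
    have hRHSj : ∀ j : ℕ, (∫⁻ θ in Ioc 0 (2 * π), ENNReal.ofReal (‖g j (z θ)‖ ^ 2))
        = ENNReal.ofReal ((2 * π) * ∑' k, ‖tc (g j) k‖ ^ 2 * r ^ (2 * k)) := by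
      intro j
      have hInt : IntegrableOn (fun θ : ℝ => ‖g j (z θ)‖ ^ 2) (Ioc 0 (2 * π)) :=
        (hcont j).integrableOn_Ioc
      rw [← MeasureTheory.ofReal_integral_eq_lintegral_ofReal hInt
        (Filter.Eventually.of_forall fun θ => by positivity)]
      rw [show (∫ θ in Ioc 0 (2 * π), ‖g j (z θ)‖ ^ 2) = (2 * π) * ∑' k, ‖tc (g j) k‖ ^ 2 * r ^ (2 * k)
        from parseval (hg j) hr]
    -- combine
    have hmain : (∑' j, ENNReal.ofReal ((2 * π) * ∑' k, ‖tc (g j) k‖ ^ 2 * r ^ (2 * k)))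
        = ENNReal.ofReal (Q x) * ENNReal.ofReal (2 * π) := by
      rw [← tsum_congr hRHSj, ← hL, hLHS]
    -- pull out the 2π factor
    have hsplit : ∀ j : ℕ, ENNReal.ofReal ((2 * π) * ∑' k, ‖tc (g j) k‖ ^ 2 * r ^ (2 * k))
        = ENNReal.ofReal (2 * π) * ∑' k, E j k * (ENNReal.ofReal x) ^ k := by
      intro j
      rw [ENNReal.ofReal_mul hπ.le]
      congr 1
      rw [ENNReal.ofReal_tsum_of_nonneg (fun k => by positivity) (summable_sq_tc (hg j) hr)]
      refine tsum_congr fun k => ?_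
      rw [ENNReal.ofReal_mul (by positivity)]
      congr 1
      rw [pow_mul, hr2, ← ENNReal.ofReal_pow hx]
    have hmain2 : ENNReal.ofReal (2 * π) * (∑' j, ∑' k, E j k * (ENNReal.ofReal x) ^ k)
        = ENNReal.ofReal (2 * π) * ENNReal.ofReal (Q x) := by
      rw [← ENNReal.tsum_mul_left]
      rw [← tsum_congr hsplit, hmain, mul_comm]
    have hcancel := (ENNReal.mul_right_inj (a := ENNReal.ofReal (2 * π))
      (by simp [hπ, Real.pi_pos]) ENNReal.ofReal_ne_top).mp hmain2
    rw [← hcancel, ENNReal.tsum_comm]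
    refine tsum_congr fun k => ?_
    rw [heb, ENNReal.tsum_mul_right]
  -- coefficients are finite
  have hfin : ∀ k, eb k ≠ ⊤ := by
    intro k
    have h1 := key 1 zero_le_one
    have hle : eb k * (ENNReal.ofReal 1) ^ k ≤ ENNReal.ofReal (Q 1) := by
      rw [← h1]; exact ENNReal.le_tsum k
    simp only [ENNReal.ofReal_one, one_pow, mul_one] at hle
    exact fun htop => by simp [htop] at hle
  refine ⟨fun k => (eb k).toReal, fun k => ENNReal.toReal_nonneg, fun x hx => ?_⟩
  have hkey := key x hx
  have hQnn : 0 ≤ Q x := by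
    have h := hQ ((Real.sqrt x : ℝ) : ℂ)
    have hnorm : ‖((Real.sqrt x : ℝ) : ℂ)‖ ^ 2 = x := by
      rw [Complex.norm_real, Real.norm_eq_abs, _root_.abs_of_nonneg (Real.sqrt_nonneg x), Real.sq_sqrt hx]
    rw [hnorm] at h
    rw [← h.tsum_eq]
    exact tsum_nonneg fun j => by positivity
  have hne : (∑' k, eb k * (ENNReal.ofReal x) ^ k) ≠ ⊤ := by
    rw [hkey]; exact ENNReal.ofReal_ne_top
  have hterm_ne : ∀ k, eb k * (ENNReal.ofReal x) ^ k ≠ ⊤ := fun k =>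
    ENNReal.mul_ne_top (hfin k) (by simp [ENNReal.ofReal_ne_top, ENNReal.pow_ne_top])
  have hsummable := ENNReal.summable_toReal hne
  have htsum := ENNReal.tsum_toReal_eq hterm_ne
  rw [hkey, ENNReal.toReal_ofReal hQnn] at htsum
  have hterm : ∀ k, (eb k * (ENNReal.ofReal x) ^ k).toReal = (eb k).toReal * x ^ k := by
    intro k
    rw [ENNReal.toReal_mul, ENNReal.toReal_pow, ENNReal.toReal_ofReal hx]
  have hs2 : Summable (fun k => (eb k).toReal * x ^ k) := by
    refine hsummable.congr fun k => hterm k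
  have hhs := hs2.hasSum
  have hfinal : (∑' k, (eb k).toReal * x ^ k) = Q x := by
    rw [htsum]
    exact tsum_congr fun k => (hterm k).symm
  rwa [hfinal] at hhs


lemma analytic_tsum (e : ℕ → ℝ) (he : ∀ k, 0 ≤ e k)
    (hs : ∀ x : ℝ, 0 ≤ x → Summable (fun k => e k * x ^ k)) :
    AnalyticOnNhd ℝ (fun y : ℝ => ∑' k, e k * y ^ k) Set.univ := by
  set p := FormalMultilinearSeries.ofScalars ℝ e with hp
  have hrad : p.radius = ⊤ := by
    apply FormalMultilinearSeries.radius_eq_top_of_summable_norm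
    intro r
    refine (hs r r.coe_nonneg).congr fun k => ?_
    rw [hp, FormalMultilinearSeries.ofScalars_norm, Real.norm_eq_abs, _root_.abs_of_nonneg (he k)]
  have hball : HasFPowerSeriesOnBall p.sum p 0 ⊤ := by
    have h0 := p.hasFPowerSeriesOnBall (by rw [hrad]; exact ENNReal.zero_lt_top)
    rwa [hrad] at h0
  have hana := hball.analyticOnNhd
  have huniv : Metric.eball (0 : ℝ) ⊤ = Set.univ := by
    ext y; simp [Metric.mem_eball, edist_lt_top]
  rw [huniv] at hana
  have hfun : (fun y : ℝ => ∑' k, e k * y ^ k) = p.sum := by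
    funext y
    rw [hp, show (FormalMultilinearSeries.ofScalars ℝ e).sum y
      = FormalMultilinearSeries.ofScalarsSum e y from rfl,
      FormalMultilinearSeries.ofScalars_sum_eq]
    exact tsum_congr fun k => by rw [smul_eq_mul]
  rw [hfun]
  exact hana


lemma exists_extension {n : ℕ} (hn : 2 ≤ n) (f : ℝ → ℝ)
    (k : ℕ → EuclideanSpace ℂ (Fin n) → ℂ)
    (hk : ∀ j, DifferentiableOn ℂ (k j) {z : EuclideanSpace ℂ (Fin n) | 1 < ‖z‖ ^ 2})
    (hks : ∀ z : EuclideanSpace ℂ (Fin n), 1 < ‖z‖ ^ 2 →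
      HasSum (fun j => ‖k j z‖ ^ 2) (Real.exp (f (‖z‖ ^ 2))))
    (s : ℝ) (hs : 1 < s) :
    ∃ A : ℝ → ℝ, AnalyticOnNhd ℝ A Set.univ ∧ ∀ x : ℝ, s ^ 2 ≤ x → A x = Real.exp (f x) := by
  obtain ⟨m, rfl⟩ : ∃ m, n = m + 2 := ⟨n - 2, by omega⟩
  set U : Set (EuclideanSpace ℂ (Fin (m + 2))) := {z | 1 < ‖z‖ ^ 2} with hUdef
  have hUopen : IsOpen U := by
    have : U = (fun z : EuclideanSpace ℂ (Fin (m + 2)) => ‖z‖ ^ 2) ⁻¹' (Ioi 1) := rfl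
    rw [this]
    exact isOpen_Ioi.preimage ((continuous_norm).pow 2)
  -- the slice point
  set pt : ℂ → EuclideanSpace ℂ (Fin (m + 2)) :=
    fun t => WithLp.toLp 2 (fun i => if i = 0 then t else if i = 1 then (s : ℂ) else 0) with hptdef
  have h01 : (0 : Fin (m + 2)) ≠ 1 := by
    intro h
    have := congrArg Fin.val h
    simp at this
  have hnorm : ∀ t : ℂ, ‖pt t‖ ^ 2 = ‖t‖ ^ 2 + s ^ 2 := by
    intro t
    rw [EuclideanSpace.norm_eq, Real.sq_sqrt (Finset.sum_nonneg fun i _ => by positivity)]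
    have hterm : ∀ i : Fin (m + 2), ‖pt t i‖ ^ 2
        = (if i = 0 then ‖t‖ ^ 2 else 0) + (if i = 1 then s ^ 2 else 0) := by
      intro i
      by_cases hi0 : i = 0
      · subst hi0
        simp [hptdef, h01]
      · by_cases hi1 : i = 1
        · subst hi1
          simp [hptdef, hi0, Complex.norm_real, _root_.sq_abs]
        · simp [hptdef, hi0, hi1]
    rw [Finset.sum_congr rfl fun i _ => hterm i, Finset.sum_add_distrib]
    rw [Finset.sum_ite_eq' Finset.univ (0 : Fin (m + 2)) (fun _ => ‖t‖ ^ 2)]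
    rw [Finset.sum_ite_eq' Finset.univ (1 : Fin (m + 2)) (fun _ => s ^ 2)]
    simp
  have hptU : ∀ t : ℂ, pt t ∈ U := by
    intro t
    have h2 : 1 < ‖t‖ ^ 2 + s ^ 2 := by nlinarith [norm_nonneg t, sq_nonneg (s - 1)]
    show 1 < ‖pt t‖ ^ 2
    rw [hnorm t]
    exact h2
  have hptdiff : Differentiable ℂ pt := by
    have : pt = (PiLp.continuousLinearEquiv 2 ℂ (fun _ : Fin (m + 2) => ℂ)).symm ∘
        (fun t => fun i : Fin (m + 2) => if i = 0 then t else if i = 1 then (s : ℂ) else 0) := rfl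
    rw [this]
    apply Differentiable.comp
    · exact (PiLp.continuousLinearEquiv 2 ℂ (fun _ : Fin (m + 2) => ℂ)).symm.differentiable
    · rw [differentiable_pi]
      intro i
      by_cases hi0 : i = 0
      · simp only [hi0, if_true]
        exact differentiable_id
      · simp only [hi0, if_false]
        exact differentiable_const _
  -- the slice functions
  set g : ℕ → ℂ → ℂ := fun j t => k j (pt t) with hgdef
  have hgdiff : ∀ j, Differentiable ℂ (g j) := by
    intro j t
    have h1 : DifferentiableAt ℂ (k j) (pt t) :=
      ((hk j) (pt t) (hptU t)).differentiableAt (hUopen.mem_nhds (hptU t))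
    exact h1.comp t (hptdiff t)
  have hQ : ∀ t : ℂ, HasSum (fun j => ‖g j t‖ ^ 2) (Real.exp (f (‖t‖ ^ 2 + s ^ 2))) := by
    intro t
    have := hks (pt t) (by rw [hnorm t]; nlinarith [norm_nonneg t, sq_nonneg (s - 1)])
    rwa [hnorm t] at this
  obtain ⟨e, he, hesum⟩ := nonneg_coeffs g hgdiff (fun x => Real.exp (f (x + s ^ 2))) hQ
  have hsummable : ∀ x : ℝ, 0 ≤ x → Summable (fun k => e k * x ^ k) :=
    fun x hx => (hesum x hx).summable
  have hE := analytic_tsum e he hsummable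
  refine ⟨fun x => ∑' k, e k * (x - s ^ 2) ^ k, ?_, ?_⟩
  · intro x _
    have haff : AnalyticAt ℝ (fun y : ℝ => y - s ^ 2) x := analyticAt_id.sub analyticAt_const
    have hc := AnalyticAt.comp (𝕜 := ℝ) (g := fun y : ℝ => ∑' k, e k * y ^ k)
      (f := fun y : ℝ => y - s ^ 2) (x := x) (hE (x - s ^ 2) (Set.mem_univ _)) haff
    exact hc
  · intro x hx
    have h1 := hesum (x - s ^ 2) (by linarith)
    show (∑' k, e k * (x - s ^ 2) ^ k) = Real.exp (f x)
    rw [h1.tsum_eq, sub_add_cancel]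


lemma exists_global_extension {n : ℕ} (hn : 2 ≤ n) (f : ℝ → ℝ)
    (k : ℕ → EuclideanSpace ℂ (Fin n) → ℂ)
    (hk : ∀ j, DifferentiableOn ℂ (k j) {z : EuclideanSpace ℂ (Fin n) | 1 < ‖z‖ ^ 2})
    (hks : ∀ z : EuclideanSpace ℂ (Fin n), 1 < ‖z‖ ^ 2 →
      HasSum (fun j => ‖k j z‖ ^ 2) (Real.exp (f (‖z‖ ^ 2)))) :
    ∃ A : ℝ → ℝ, AnalyticOnNhd ℝ A Set.univ ∧ ∀ x : ℝ, 1 < x → A x = Real.exp (f x) := by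
  obtain ⟨A, hA, hAeq⟩ := exists_extension hn f k hk hks 2 one_lt_two
  refine ⟨A, hA, ?_⟩
  intro x hx
  set s : ℝ := Real.sqrt ((1 + x) / 2) with hsdef
  have hs2 : s ^ 2 = (1 + x) / 2 := Real.sq_sqrt (by linarith)
  have hs1 : 1 < s := by nlinarith [Real.sqrt_nonneg ((1 + x) / 2)]
  obtain ⟨B, hB, hBeq⟩ := exists_extension hn f k hk hks s hs1
  have hev : A =ᶠ[𝓝 (5 + s ^ 2)] B := by
    have hmem : Ioi (4 + s ^ 2) ∈ 𝓝 (5 + s ^ 2) := Ioi_mem_nhds (by linarith)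
    filter_upwards [hmem] with y hy
    have hy' : 4 + s ^ 2 < y := hy
    have hsq : (0:ℝ) ≤ s ^ 2 := sq_nonneg s
    rw [hAeq y (by nlinarith), hBeq y (by nlinarith)]
  have hfun := hA.eq_of_eventuallyEq hB hev
  rw [hfun]
  exact hBeq x (by rw [hs2]; linarith)


end NotPI

/-- A (potential of a) Kähler metric `Φ` on an open set `U ⊆ ℂⁿ` is projectively induced if
there exist a holomorphic function `φ` and holomorphic functions `h j` on `U` such that
`Σ_j |h j z|² = exp (Φ z + 2 Re (φ z))` for all `z ∈ U` (Calabi's criterion for the existence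
of a Kähler immersion into `(ℂP^∞, g_FS)`). -/
def ProjectivelyInduced {n : ℕ} (U : Set (EuclideanSpace ℂ (Fin n)))
    (Φ : EuclideanSpace ℂ (Fin n) → ℝ) : Prop :=
  ∃ (φ : EuclideanSpace ℂ (Fin n) → ℂ) (h : ℕ → EuclideanSpace ℂ (Fin n) → ℂ),
    DifferentiableOn ℂ φ U ∧ (∀ j, DifferentiableOn ℂ (h j) U) ∧
      ∀ z ∈ U, HasSum (fun j => ‖h j z‖ ^ 2) (Real.exp (Φ z + 2 * (φ z).re))

open NotPI in
/-- For every integer `n ≥ 2` and every `λ > 0`, the Ricci-flat radial Kähler metric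
`λ ω₋₁` on `{z ∈ ℂⁿ : |z|² > 1}`, with radial potential `f` satisfying
`f'(x) = λ (1 - x⁻ⁿ)^{1/n}`, is not projectively induced. -/
theorem lambda_omega_neg_one_not_projectively_induced
    {n : ℕ} (hn : 2 ≤ n) (lam : ℝ) (hlam : 0 < lam)
    (f : ℝ → ℝ) (hf : ContDiffOn ℝ (⊤ : ℕ∞) f (Set.Ioi 1))
    (hf' : ∀ x ∈ Set.Ioi (1 : ℝ),
      HasDerivAt f (lam * (1 - x ^ (-(n : ℝ))) ^ ((n : ℝ)⁻¹)) x) :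
    ¬ ProjectivelyInduced {z : EuclideanSpace ℂ (Fin n) | 1 < ‖z‖ ^ 2}
        (fun z => f (‖z‖ ^ 2)) := by
  rintro ⟨φ, h, hφ, hh, hsum⟩
  classical
  have hn0 : n ≠ 0 := by omega
  have hn0R : (0:ℝ) < (n:ℝ) := by exact_mod_cast (by omega : 0 < n)
  set fd : ℝ → ℝ := fun x => lam * (1 - x ^ (-(n : ℝ))) ^ ((n : ℝ)⁻¹) with hfd
  have hbase : ∀ x : ℝ, 1 < x → 0 ≤ 1 - x ^ (-(n:ℝ)) := by
    intro x hx
    have h1 : x ^ (-(n:ℝ)) ≤ 1 :=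
      Real.rpow_le_one_of_one_le_of_nonpos hx.le (by simp [hn0R.le])
    linarith
  -- transform to the normalized family
  set k : ℕ → EuclideanSpace ℂ (Fin n) → ℂ := fun j z => h j z * Complex.exp (-φ z) with hkdef
  have hkdiff : ∀ j, DifferentiableOn ℂ (k j) {z : EuclideanSpace ℂ (Fin n) | 1 < ‖z‖ ^ 2} :=
    fun j => (hh j).mul (hφ.neg.cexp)
  have hks : ∀ z : EuclideanSpace ℂ (Fin n), 1 < ‖z‖ ^ 2 →
      HasSum (fun j => ‖k j z‖ ^ 2) (Real.exp (f (‖z‖ ^ 2))) := by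
    intro z hz
    have h1 := hsum z hz
    have h2 := h1.mul_right (Real.exp (2 * -(φ z).re))
    have h3 : Real.exp (f (‖z‖ ^ 2) + 2 * (φ z).re) * Real.exp (2 * -(φ z).re)
        = Real.exp (f (‖z‖ ^ 2)) := by
      rw [← Real.exp_add]; ring_nf
    rw [h3] at h2
    refine h2.congr_fun fun j => ?_
    show ‖h j z * Complex.exp (-φ z)‖ ^ 2 = ‖h j z‖ ^ 2 * Real.exp (2 * -(φ z).re)
    rw [norm_mul, mul_pow]
    congr 1
    rw [Complex.norm_exp, Complex.neg_re, ← Real.exp_nat_mul]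
    norm_num
  obtain ⟨A, hA, hAeq⟩ := exists_global_extension hn f k hkdiff hks
  -- bounds on fd
  have hfd_bounds : ∀ x : ℝ, 1 < x → 0 ≤ fd x ∧ fd x ≤ lam := by
    intro x hx
    have hb0 := hbase x hx
    have hb1 : 1 - x ^ (-(n:ℝ)) ≤ 1 := by
      have : 0 < x ^ (-(n:ℝ)) := Real.rpow_pos_of_pos (by linarith) _
      linarith
    refine ⟨mul_nonneg hlam.le (Real.rpow_nonneg hb0 _), ?_⟩
    have h1 : (1 - x ^ (-(n:ℝ))) ^ ((n:ℝ)⁻¹) ≤ 1 := Real.rpow_le_one hb0 hb1 (by positivity)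
    calc lam * (1 - x ^ (-(n:ℝ))) ^ ((n:ℝ)⁻¹) ≤ lam * 1 :=
          mul_le_mul_of_nonneg_left h1 hlam.le
      _ = lam := mul_one lam
  have hcontf : ContinuousOn f (Ioi 1) :=
    fun x hx => (hf' x hx).continuousAt.continuousWithinAt
  -- lower bound for f near 1
  have hflow : ∀ x : ℝ, x ∈ Ioo (1:ℝ) 2 → f 2 - 2 * lam ≤ f x := by
    intro x hx
    obtain ⟨hx1, hx2⟩ := hx
    have hsub1 : Icc x 2 ⊆ Ioi 1 := fun y hy => lt_of_lt_of_le hx1 hy.1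
    have hsub2 : Ioo x 2 ⊆ Ioi (1:ℝ) := fun y hy => lt_trans hx1 hy.1
    obtain ⟨c, hc, hceq⟩ := exists_hasDerivAt_eq_slope f fd hx2
      (hcontf.mono hsub1) (fun y hy => hf' y (hsub2 hy))
    have hb := hfd_bounds c (lt_trans hx1 hc.1)
    have h2x : (0:ℝ) < 2 - x := by linarith
    have heq : f 2 - f x = fd c * (2 - x) := by
      rw [hceq]; field_simp
    nlinarith [hb.1, hb.2]
  -- A is positive at 1
  have hA1pos : 0 < A 1 := by
    have hT : Tendsto A (𝓝[>] (1:ℝ)) (𝓝 (A 1)) :=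
      ((hA 1 (mem_univ 1)).continuousAt.continuousWithinAt :
        ContinuousWithinAt A (Ioi 1) 1)
    have hlb : ∀ᶠ x in 𝓝[>] (1:ℝ), Real.exp (f 2 - 2 * lam) ≤ A x := by
      filter_upwards [Ioo_mem_nhdsGT_of_mem (left_mem_Ico.mpr one_lt_two)] with x hx
      rw [hAeq x hx.1]
      exact Real.exp_le_exp.mpr (hflow x hx)
    exact lt_of_lt_of_le (Real.exp_pos _) (ge_of_tendsto hT hlb)
  -- the logarithmic derivative
  have hderivA : ∀ x : ℝ, 1 < x → deriv A x = Real.exp (f x) * fd x := by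
    intro x hx
    have hev : A =ᶠ[𝓝 x] fun y => Real.exp (f y) := by
      filter_upwards [Ioi_mem_nhds hx] with y hy using hAeq y hy
    rw [hev.deriv_eq]
    exact ((hf' x hx).exp).deriv
  set L : ℝ → ℝ := fun x => deriv A x / A x with hLdef
  have hLval : ∀ x : ℝ, 1 < x → L x = fd x := by
    intro x hx
    show deriv A x / A x = fd x
    rw [hderivA x hx, hAeq x hx, mul_comm, mul_div_assoc, div_self (Real.exp_ne_zero _), mul_one]
  have hLdiff : DifferentiableAt ℝ L 1 := by
    have hdA : AnalyticOnNhd ℝ (deriv A) univ := hA.deriv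
    exact ((hdA 1 (mem_univ 1)).differentiableAt).div
      ((hA 1 (mem_univ 1)).differentiableAt) (ne_of_gt hA1pos)
  have hL1 : L 1 = 0 := by
    have hT1 : Tendsto L (𝓝[>] (1:ℝ)) (𝓝 (L 1)) :=
      (hLdiff.continuousAt.continuousWithinAt : ContinuousWithinAt L (Ioi 1) 1)
    have hfd0 : Tendsto fd (𝓝[>] (1:ℝ)) (𝓝 0) := by
      have hb : Tendsto (fun x : ℝ => 1 - x ^ (-(n:ℝ))) (𝓝 (1:ℝ)) (𝓝 0) := by
        have hc : ContinuousAt (fun x : ℝ => x ^ (-(n:ℝ))) 1 :=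
          Real.continuousAt_rpow_const 1 _ (Or.inl one_ne_zero)
        have h4 : ContinuousAt (fun x : ℝ => 1 - x ^ (-(n:ℝ))) 1 :=
          continuousAt_const.sub hc
        have h5 := h4.tendsto
        simpa [Real.one_rpow] using h5
      have hrp : Tendsto (fun y : ℝ => y ^ ((n:ℝ)⁻¹)) (𝓝 (0:ℝ)) (𝓝 0) := by
        have hc : ContinuousAt (fun y : ℝ => y ^ ((n:ℝ)⁻¹)) 0 :=
          Real.continuousAt_rpow_const 0 _ (Or.inr (by positivity))
        have h4 := hc.tendsto
        rwa [Real.zero_rpow (by positivity)] at h4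
      have h5 := ((hrp.comp hb).const_mul lam).mono_left
        (nhdsWithin_le_nhds : 𝓝[>] (1:ℝ) ≤ 𝓝 1)
      simpa [hfd, Function.comp] using h5
    have hT2 : Tendsto L (𝓝[>] (1:ℝ)) (𝓝 0) := by
      refine hfd0.congr' ?_
      filter_upwards [self_mem_nhdsWithin] with y hy
      exact (hLval y hy).symm
    exact tendsto_nhds_unique hT1 hT2
  -- slope limit
  have hslope : Tendsto (fun x => L x / (x - 1)) (𝓝[>] (1:ℝ)) (𝓝 (deriv L 1)) := by
    have h1 := hasDerivAt_iff_tendsto_slope.mp hLdiff.hasDerivAt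
    have h2 := h1.mono_left (nhdsWithin_mono 1 (fun y (hy : y ∈ Ioi 1) => ne_of_gt hy))
    refine h2.congr' ?_
    filter_upwards [self_mem_nhdsWithin] with y _
    rw [slope_def_field, hL1, sub_zero]
  set W : ℝ → ℝ := fun x => lam ^ n * (1 - x ^ (-(n:ℝ))) / (x - 1) ^ n with hWdef
  -- identification
  have hWeq : ∀ᶠ x in 𝓝[>] (1:ℝ), (L x / (x - 1)) ^ n = W x := by
    filter_upwards [self_mem_nhdsWithin] with x (hx : x ∈ Ioi 1)
    have hx1 : (1:ℝ) < x := hx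
    rw [hLval x hx1, div_pow]
    show (lam * (1 - x ^ (-(n:ℝ))) ^ ((n:ℝ)⁻¹)) ^ n / (x - 1) ^ n = W x
    rw [mul_pow, Real.rpow_inv_natCast_pow (hbase x hx1) hn0, hWdef]
  have hWlim : Tendsto W (𝓝[>] (1:ℝ)) (𝓝 ((deriv L 1) ^ n)) :=
    ((hslope.pow n).congr' hWeq)
  -- but W tends to infinity
  have hq : HasDerivAt (fun x : ℝ => 1 - x ^ (-(n:ℝ))) ((n:ℝ)) 1 := by
    have h1 := Real.hasDerivAt_rpow_const (x := (1:ℝ)) (p := -(n:ℝ)) (Or.inl one_ne_zero)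
    have h2 := h1.const_sub (1:ℝ)
    simpa [Real.one_rpow] using h2
  have hqslope : Tendsto (fun x : ℝ => (1 - x ^ (-(n:ℝ))) / (x - 1)) (𝓝[>] (1:ℝ))
      (𝓝 (n:ℝ)) := by
    have h1 := hasDerivAt_iff_tendsto_slope.mp hq
    have h2 := h1.mono_left (nhdsWithin_mono 1 (fun y (hy : y ∈ Ioi 1) => ne_of_gt hy))
    refine h2.congr' ?_
    filter_upwards [self_mem_nhdsWithin] with y _
    rw [slope_def_field, Real.one_rpow]
    norm_num
  have hpart1 : Tendsto (fun x : ℝ => lam ^ n * ((1 - x ^ (-(n:ℝ))) / (x - 1)))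
      (𝓝[>] (1:ℝ)) (𝓝 (lam ^ n * (n:ℝ))) := hqslope.const_mul _
  have hsub : Tendsto (fun x : ℝ => x - 1) (𝓝[>] (1:ℝ)) (𝓝[>] (0:ℝ)) := by
    apply tendsto_nhdsWithin_of_tendsto_nhds_of_eventually_within
    · have h4 : Tendsto (fun x : ℝ => x - 1) (𝓝 (1:ℝ)) (𝓝 (1 - 1 : ℝ)) :=
        ((continuous_id.sub continuous_const).tendsto (1:ℝ))
      rw [sub_self] at h4
      exact h4.mono_left (nhdsWithin_le_nhds : 𝓝[>] (1:ℝ) ≤ 𝓝 1)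
    · filter_upwards [self_mem_nhdsWithin] with y (hy : y ∈ Ioi 1)
      simpa using hy
  have hpowmap : Tendsto (fun y : ℝ => y ^ (n - 1)) (𝓝[>] (0:ℝ)) (𝓝[>] (0:ℝ)) := by
    apply tendsto_nhdsWithin_of_tendsto_nhds_of_eventually_within
    · have h4 := (continuous_pow (n - 1)).tendsto (0:ℝ)
      rw [zero_pow (by omega : n - 1 ≠ 0)] at h4
      exact h4.mono_left nhdsWithin_le_nhds
    · filter_upwards [self_mem_nhdsWithin] with y (hy : y ∈ Ioi 0)
      exact pow_pos (show (0:ℝ) < y from hy) _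
  have hpart2 : Tendsto (fun x : ℝ => ((x - 1) ^ (n - 1))⁻¹) (𝓝[>] (1:ℝ)) atTop :=
    tendsto_inv_nhdsGT_zero.comp (hpowmap.comp hsub)
  have hWtop : Tendsto W (𝓝[>] (1:ℝ)) atTop := by
    have hmul := Filter.Tendsto.pos_mul_atTop (by positivity : (0:ℝ) < lam ^ n * (n:ℝ))
      hpart1 hpart2
    refine hmul.congr' ?_
    filter_upwards [self_mem_nhdsWithin] with x (hx : x ∈ Ioi 1)
    have hx1 : (1:ℝ) < x := hx
    have hxne : x - 1 ≠ 0 := by intro h0; linarith [sub_eq_zero.mp h0]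
    have hnsucc : n = (n - 1) + 1 := by omega
    rw [hWdef]
    show lam ^ n * ((1 - x ^ (-(n:ℝ))) / (x - 1)) * ((x - 1) ^ (n - 1))⁻¹
      = lam ^ n * (1 - x ^ (-(n:ℝ))) / (x - 1) ^ n
    rw [show (x - 1) ^ n = (x - 1) ^ ((n - 1) + 1) from by rw [← hnsucc], pow_succ]
    rw [← mul_div_assoc, ← div_eq_mul_inv, div_div, mul_comm (x - 1) ((x - 1) ^ (n - 1))]
  exact not_tendsto_atTop_of_tendsto_nhds hWlim hWtop
end
end

section
/- Let n ≥ 2 be an integer and let λ > 0 be a real number that is not an integer. Let f : (0,∞) → ℝ be a smooth function with f'(x) = λ(x^{−n} + 1)^{1/n} for all x > 0, and set U = ℂ^n \ {0}. Then there do not exist a holomorphic function φ : U → ℂ and holomorphic functions h_j : U → ℂ (j ∈ ℕ) such that Σ_{j∈ℕ} |h_j(z)|² = exp(f(|z|²) + 2 Re φ(z)) for every z ∈ U. (That is, for every non-integer λ > 0 the Ricci-flat radial Kähler metric λω_1 is not projectively induced.) -/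
open Set Metric Filter Topology

/-- subadditivity of rpow with exponent in [0,1], real version -/
lemma my_rpow_add_le {a b p : ℝ} (ha : 0 ≤ a) (hb : 0 ≤ b) (hp : 0 ≤ p) (hp1 : p ≤ 1) :
    (a + b) ^ p ≤ a ^ p + b ^ p := by
  have h := NNReal.rpow_add_le_add_rpow a.toNNReal b.toNNReal hp hp1
  have h2 := NNReal.coe_le_coe.2 h
  simpa [NNReal.coe_rpow, Real.coe_toNNReal _ ha, Real.coe_toNNReal _ hb,
    Real.coe_toNNReal _ (add_nonneg ha hb)] using h2

lemma potential_bounds {n : ℕ} (hn : 1 ≤ n) {lam : ℝ} (hlam : 0 < lam) {f : ℝ → ℝ}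
    (hf' : ∀ x ∈ Set.Ioi (0 : ℝ),
      HasDerivAt f (lam * (x ^ (-(n : ℝ)) + 1) ^ ((n : ℝ)⁻¹)) x) :
    ∀ x ∈ Set.Ioc (0:ℝ) 1,
      Real.exp (f 1 - lam) * x ^ lam ≤ Real.exp (f x) ∧
      Real.exp (f x) ≤ Real.exp (f 1) * x ^ lam := by
  have hn0 : (n : ℝ) ≠ 0 := by positivity
  have hninv : (0:ℝ) ≤ (n:ℝ)⁻¹ := by positivity
  set D : ℝ → ℝ := fun t => lam * (t ^ (-(n : ℝ)) + 1) ^ ((n : ℝ)⁻¹) - lam * t⁻¹ with hD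
  have key : ∀ t : ℝ, 0 < t → (t ^ (-(n:ℝ))) ^ ((n:ℝ)⁻¹) = t⁻¹ := by
    intro t ht
    rw [← Real.rpow_mul ht.le, neg_mul, mul_inv_cancel₀ hn0, Real.rpow_neg_one]
  have hg' : ∀ t ∈ Set.Ioi (0:ℝ), HasDerivAt (fun t => f t - lam * Real.log t) (D t) t := by
    intro t ht
    exact (hf' t ht).sub ((Real.hasDerivAt_log (ne_of_gt ht)).const_mul lam)
  have hD0 : ∀ t : ℝ, 0 < t → 0 ≤ D t := by
    intro t ht
    have h1 : t⁻¹ ≤ (t ^ (-(n:ℝ)) + 1) ^ ((n:ℝ)⁻¹) := by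
      rw [← key t ht]
      exact Real.rpow_le_rpow (Real.rpow_nonneg ht.le _) (by linarith) hninv
    have : lam * t⁻¹ ≤ lam * (t ^ (-(n:ℝ)) + 1) ^ ((n:ℝ)⁻¹) :=
      mul_le_mul_of_nonneg_left h1 hlam.le
    simp only [hD]; linarith
  have hDlam : ∀ t : ℝ, 0 < t → D t ≤ lam := by
    intro t ht
    have h1 : (t ^ (-(n:ℝ)) + 1) ^ ((n:ℝ)⁻¹) ≤ t⁻¹ + 1 := by
      have hsub := my_rpow_add_le (Real.rpow_nonneg ht.le (-(n:ℝ))) (zero_le_one) hninv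
        (by rw [inv_le_one_iff₀]; right; exact_mod_cast hn)
      rw [key t ht, Real.one_rpow] at hsub
      exact hsub
    have : lam * (t ^ (-(n:ℝ)) + 1) ^ ((n:ℝ)⁻¹) ≤ lam * (t⁻¹ + 1) :=
      mul_le_mul_of_nonneg_left h1 hlam.le
    simp only [hD]; nlinarith
  intro x hx
  obtain ⟨hx0, hx1⟩ := hx
  have hgb : f 1 - lam ≤ f x - lam * Real.log x ∧ f x - lam * Real.log x ≤ f 1 := by
    rcases eq_or_lt_of_le hx1 with heq | hlt
    · subst heq
      simp only [Real.log_one, mul_zero, sub_zero]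
      exact ⟨by linarith, le_refl _⟩
    · have hcont : ContinuousOn (fun t => f t - lam * Real.log t) (Set.Icc x 1) := by
        intro t ht
        exact ((hg' t (lt_of_lt_of_le hx0 ht.1)).continuousAt).continuousWithinAt
      obtain ⟨c, hc, hceq⟩ := exists_hasDerivAt_eq_slope (fun t => f t - lam * Real.log t) D hlt
        hcont (fun t ht => hg' t (lt_trans hx0 ht.1))
      have hc0 : 0 < c := lt_trans hx0 hc.1
      have h0 := hD0 c hc0
      have h1 := hDlam c hc0
      have heq2 : f 1 - (f x - lam * Real.log x) = D c * (1 - x) := by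
        have h1x : (1:ℝ) - x ≠ 0 := by linarith
        field_simp at hceq
        rw [Real.log_one, mul_zero, sub_zero] at hceq; linarith [hceq]
      constructor <;> nlinarith [heq2, mul_nonneg h0 (by linarith : (0:ℝ) ≤ 1 - x),
        mul_le_mul_of_nonneg_right h1 (by linarith : (0:ℝ) ≤ 1 - x)]
  have hxl : x ^ lam = Real.exp (lam * Real.log x) := by
    rw [Real.rpow_def_of_pos hx0, mul_comm]
  constructor
  · rw [hxl, ← Real.exp_add]
    apply Real.exp_le_exp.2
    linarith [hgb.1]
  · rw [hxl, ← Real.exp_add]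
    apply Real.exp_le_exp.2
    linarith [hgb.2]

lemma my_div_pow (M : ℕ) : ∀ (s C : ℝ) (F : ℂ → ℂ), (M:ℝ) - 1 < s → Differentiable ℂ F →
    (∀ w : ℂ, w ≠ 0 → ‖w‖ ≤ 1 → ‖F w‖ ≤ C * ‖w‖ ^ s) →
    ∃ G : ℂ → ℂ, Differentiable ℂ G ∧ ∀ w, F w = w ^ M * G w := by
  induction M with
  | zero => exact fun s C F _ hF _ => ⟨F, hF, fun w => by simp⟩
  | succ M ih =>
    intro s C F hs hF hb
    have hM0 : (0:ℝ) ≤ (M:ℝ) := Nat.cast_nonneg M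
    have hs0 : 0 < s := by push_cast at hs; linarith
    -- the comparison function tends to 0
    have htend : Tendsto (fun w : ℂ => C * ‖w‖ ^ s) (𝓝 0) (𝓝 0) := by
      have h1 : ContinuousAt (fun x : ℝ => C * x ^ s) (0:ℝ) :=
        (Real.continuousAt_rpow_const 0 s (Or.inr hs0.le)).const_mul C
      have h2 : Tendsto (fun w : ℂ => C * ‖w‖ ^ s) (𝓝 0) (𝓝 (C * (0:ℝ) ^ s)) :=
        h1.tendsto.comp tendsto_norm_zero
      simpa [Real.zero_rpow hs0.ne'] using h2
    have hF0 : F 0 = 0 := by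
      have h1 : Tendsto F (𝓝[≠] (0:ℂ)) (𝓝 (F 0)) :=
        (hF.continuous.tendsto 0).mono_left nhdsWithin_le_nhds
      have hev : ∀ᶠ w in 𝓝[≠] (0:ℂ), ‖F w‖ ≤ C * ‖w‖ ^ s := by
        have hball : ∀ᶠ w in 𝓝 (0:ℂ), ‖w‖ ≤ 1 := by
          filter_upwards [Metric.closedBall_mem_nhds (0:ℂ) one_pos] with w hw
          simpa [mem_closedBall_zero_iff] using hw
        filter_upwards [hball.filter_mono nhdsWithin_le_nhds,
          self_mem_nhdsWithin (s := ({0}ᶜ : Set ℂ))] with w hw1 hw2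
        exact hb w hw2 hw1
      have h2 : Tendsto F (𝓝[≠] (0:ℂ)) (𝓝 0) :=
        squeeze_zero_norm' hev (htend.mono_left nhdsWithin_le_nhds)
      exact tendsto_nhds_unique h1 h2
    set G1 : ℂ → ℂ := dslope F 0 with hG1
    have hG1d : Differentiable ℂ G1 := by
      rw [← differentiableOn_univ]
      exact (Complex.differentiableOn_dslope (Filter.univ_mem)).mpr hF.differentiableOn
    have hG1eq : ∀ w : ℂ, w ≠ 0 → G1 w = F w / w := by
      intro w hw
      rw [hG1, dslope_of_ne _ hw, slope_def_field, hF0, sub_zero, sub_zero]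
    have hG1b : ∀ w : ℂ, w ≠ 0 → ‖w‖ ≤ 1 → ‖G1 w‖ ≤ C * ‖w‖ ^ (s - 1) := by
      intro w hw hw1
      have hwn : 0 < ‖w‖ := norm_pos_iff.2 hw
      rw [hG1eq w hw, norm_div]
      rw [div_le_iff₀ hwn]
      calc ‖F w‖ ≤ C * ‖w‖ ^ s := hb w hw hw1
        _ = C * ‖w‖ ^ (s - 1) * ‖w‖ := by
            rw [mul_assoc, ← Real.rpow_add_one hwn.ne' (s-1)]; ring_nf
    obtain ⟨G, hGd, hGe⟩ := ih (s - 1) C G1 (by push_cast at hs ⊢; linarith) hG1d hG1b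
    refine ⟨G, hGd, fun w => ?_⟩
    by_cases hw : w = 0
    · subst hw; simp [hF0]
    · have h1 : F w = w * G1 w := by
        rw [hG1eq w hw]; field_simp
      rw [h1, hGe w, pow_succ]; ring

set_option maxHeartbeats 1000000 in
/-- For every integer `n ≥ 2` and every non-integer `λ > 0`, the Ricci-flat radial Kähler
metric `λ ω₁` on `ℂⁿ \ {0}`, with radial potential `f` satisfying
`f'(x) = λ (x⁻ⁿ + 1)^{1/n}`, is not projectively induced. -/
theorem lambda_omega_one_not_projectively_induced
    {n : ℕ} (hn : 2 ≤ n) (lam : ℝ) (hlam : 0 < lam) (hlam' : ¬ ∃ m : ℤ, lam = m)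
    (f : ℝ → ℝ) (hf : ContDiffOn ℝ (⊤ : ℕ∞) f (Set.Ioi 0))
    (hf' : ∀ x ∈ Set.Ioi (0 : ℝ),
      HasDerivAt f (lam * (x ^ (-(n : ℝ)) + 1) ^ ((n : ℝ)⁻¹)) x) :
    ¬ ProjectivelyInduced ({0}ᶜ : Set (EuclideanSpace ℂ (Fin n)))
        (fun z => f (‖z‖ ^ 2)) := by
  rintro ⟨φ, h, hφ, hh, hsum⟩
  haveI : NeZero n := ⟨by omega⟩
  -- the line through the origin
  set e : EuclideanSpace ℂ (Fin n) := EuclideanSpace.single (0 : Fin n) (1:ℂ) with he_def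
  have he : ‖e‖ = 1 := by simp [he_def, EuclideanSpace.norm_single]
  have hene : e ≠ 0 := by
    intro h0; rw [h0] at he; simp at he
  set L : ℂ →L[ℂ] EuclideanSpace ℂ (Fin n) := ContinuousLinearMap.toSpanSingleton ℂ e with hLdef
  have hLapp : ∀ w : ℂ, L w = w • e := fun w => rfl
  have hLn : ∀ w : ℂ, ‖L w‖ = ‖w‖ := by
    intro w; rw [hLapp, norm_smul, he, mul_one]
  have hLne : ∀ w : ℂ, w ≠ 0 → L w ∈ ({0}ᶜ : Set (EuclideanSpace ℂ (Fin n))) := by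
    intro w hw
    simp only [Set.mem_compl_iff, Set.mem_singleton_iff]
    rw [hLapp]
    exact smul_ne_zero hw hene
  -- the twisted functions on the punctured plane
  set G : ℕ → ℂ → ℂ := fun j w => h j (L w) * Complex.exp (-φ (L w)) with hGdef
  have hGdiff : ∀ j, DifferentiableOn ℂ (G j) {(0:ℂ)}ᶜ := by
    intro j
    have hmaps : Set.MapsTo L {(0:ℂ)}ᶜ ({0}ᶜ : Set (EuclideanSpace ℂ (Fin n))) :=
      fun w hw => hLne w hw
    have h1 : DifferentiableOn ℂ (fun w => h j (L w)) {(0:ℂ)}ᶜ :=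
      (hh j).comp (L.differentiable.differentiableOn) hmaps
    have h2 : DifferentiableOn ℂ (fun w => φ (L w)) {(0:ℂ)}ᶜ :=
      hφ.comp (L.differentiable.differentiableOn) hmaps
    exact h1.mul h2.neg.cexp
  have hGsum : ∀ w : ℂ, w ≠ 0 → HasSum (fun j => ‖G j w‖^2) (Real.exp (f (‖w‖^2))) := by
    intro w hw
    have h0 := hsum (L w) (hLne w hw)
    have h1 := h0.mul_right (Real.exp (-(2 * (φ (L w)).re)))
    have h3 : Real.exp (f (‖L w‖ ^ 2) + 2 * (φ (L w)).re) *
        Real.exp (-(2 * (φ (L w)).re)) = Real.exp (f (‖w‖ ^ 2)) := by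
      rw [← Real.exp_add, hLn]
      congr 1
      ring
    rw [h3] at h1
    have h2 : ∀ j, ‖h j (L w)‖ ^ 2 * Real.exp (-(2 * (φ (L w)).re)) = ‖G j w‖ ^ 2 := by
      intro j
      rw [hGdef]
      simp only
      rw [norm_mul, mul_pow, Complex.norm_exp]
      rw [← Real.exp_nat_mul, Complex.neg_re]
      norm_num
    simp only [← h2]
    exact h1
  -- bounds for the potential
  have bounds := potential_bounds (by omega : 1 ≤ n) hlam hf'
  set b₁ : ℝ := Real.exp (f 1 - lam) with hb₁def
  set A : ℝ := Real.exp (f 1) with hAdef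
  have hb₁ : 0 < b₁ := Real.exp_pos _
  have hA : 0 < A := Real.exp_pos _
  -- extending G across the origin
  set F : ℕ → ℂ → ℂ := fun j => Function.update (G j) 0 0 with hFdef
  have hFeq : ∀ j (w : ℂ), w ≠ 0 → F j w = G j w := by
    intro j w hw
    rw [hFdef]
    exact Function.update_of_ne hw _ _
  have hF0 : ∀ j, F j 0 = 0 := by
    intro j; rw [hFdef]; exact Function.update_self _ _ _
  have hFbound : ∀ j (w : ℂ), ‖w‖ ≤ 1 → ‖F j w‖ ≤ Real.sqrt A * ‖w‖ ^ lam := by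
    intro j w hw1
    by_cases hw : w = 0
    · subst hw
      rw [hF0 j]
      simp [Real.zero_rpow hlam.ne']
    · have hwn : 0 < ‖w‖ := norm_pos_iff.2 hw
      have hx : ‖w‖ ^ 2 ∈ Set.Ioc (0:ℝ) 1 := by
        constructor
        · positivity
        · calc ‖w‖ ^ 2 ≤ 1 ^ 2 := by gcongr
            _ = 1 := one_pow 2
      have h1 : ‖G j w‖ ^ 2 ≤ Real.exp (f (‖w‖ ^ 2)) :=
        le_hasSum (hGsum w hw) j (fun i _ => by positivity)
      have h2 := (bounds _ hx).2
      have h3 : (‖w‖ ^ 2 : ℝ) ^ lam = (‖w‖ ^ lam) ^ 2 := by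
        have hrhs : (‖w‖ ^ lam) ^ (2:ℕ) = ‖w‖ ^ (lam * 2) := by
          rw [← Real.rpow_natCast (‖w‖ ^ lam) 2, ← Real.rpow_mul (norm_nonneg w)]
          norm_num
        rw [hrhs, ← Real.rpow_natCast ‖w‖ 2, ← Real.rpow_mul (norm_nonneg w)]
        ring_nf
      have h4 : ‖F j w‖ ^ 2 ≤ (Real.sqrt A * ‖w‖ ^ lam) ^ 2 := by
        rw [hFeq j w hw, mul_pow, Real.sq_sqrt hA.le]
        calc ‖G j w‖ ^ 2 ≤ Real.exp (f (‖w‖ ^ 2)) := h1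
          _ ≤ A * (‖w‖ ^ 2 : ℝ) ^ lam := h2
          _ = A * (‖w‖ ^ lam) ^ 2 := by rw [h3]
      have h5 : 0 ≤ Real.sqrt A * ‖w‖ ^ lam := by positivity
      nlinarith [norm_nonneg (F j w)]
  have hFdiff : ∀ j, Differentiable ℂ (F j) := by
    intro j
    rw [← differentiableOn_univ]
    rw [← Complex.differentiableOn_compl_singleton_and_continuousAt_iff
      (Filter.univ_mem : Set.univ ∈ 𝓝 (0:ℂ))]
    constructor
    · refine ((hGdiff j).congr ?_).mono ?_
      · intro w hw
        exact hFeq j w hw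
      · intro w hw
        exact hw.2
    · rw [ContinuousAt, hF0 j]
      have hev : ∀ᶠ w : ℂ in 𝓝 0, ‖F j w‖ ≤ Real.sqrt A * ‖w‖ ^ lam := by
        filter_upwards [Metric.closedBall_mem_nhds (0:ℂ) one_pos] with w hw
        exact hFbound j w (by simpa [mem_closedBall_zero_iff] using hw)
      have h1 : ContinuousAt (fun x : ℝ => Real.sqrt A * x ^ lam) (0:ℝ) :=
        (Real.continuousAt_rpow_const 0 lam (Or.inr hlam.le)).const_mul _
      have h2 := h1.tendsto.comp (tendsto_norm_zero (E := ℂ))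
      have h2' : Tendsto (fun w : ℂ => Real.sqrt A * ‖w‖ ^ lam) (𝓝 0) (𝓝 0) := by
        simpa [Real.zero_rpow hlam.ne', Function.comp_def] using h2
      exact squeeze_zero_norm' hev h2'
  -- dividing by w ^ M
  set M : ℕ := ⌈lam⌉₊ with hMdef
  have hMlt : (M : ℝ) - 1 < lam := by
    have := Nat.ceil_lt_add_one hlam.le
    rw [hMdef]; push_cast; linarith
  have hlamM : lam < M := by
    refine lt_of_le_of_ne (Nat.le_ceil lam) fun hEq => hlam' ⟨M, ?_⟩
    exact_mod_cast hEq
  choose K hKdiff hKeq using fun j =>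
    my_div_pow M lam (Real.sqrt A) (F j) hMlt (hFdiff j) (fun w _ h1 => hFbound j w h1)
  -- maximum principle: uniform bound for partial sums of ‖K j z‖²
  have hcirc : ∀ (N : ℕ) (z : ℂ), ‖z‖ ≤ 1 → ∑ i ∈ Finset.range N, ‖K i z‖ ^ 2 ≤ A := by
    intro N z hz
    set W : ℂ → EuclideanSpace ℂ (Fin N) :=
      fun w => (WithLp.equiv 2 (Fin N → ℂ)).symm (fun i => K i w) with hWdef
    have hWdiff : Differentiable ℂ W := by
      have h1 : Differentiable ℂ (fun w => (fun i : Fin N => K i w)) :=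
        differentiable_pi.mpr fun i => hKdiff i
      exact (PiLp.continuousLinearEquiv 2 ℂ (fun _ : Fin N => ℂ)).symm.differentiable.comp h1
    have hWnorm : ∀ w : ℂ, ‖W w‖ ^ 2 = ∑ i ∈ Finset.range N, ‖K i w‖ ^ 2 := by
      intro w
      rw [hWdef]
      simp only
      rw [EuclideanSpace.norm_eq, Real.sq_sqrt (by positivity)]
      rw [← Fin.sum_univ_eq_sum_range (fun i => ‖K i w‖ ^ 2) N]
      rfl
    have hfr : ∀ w ∈ frontier (Metric.ball (0:ℂ) 1), ‖W w‖ ≤ Real.sqrt A := by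
      intro w hw
      rw [frontier_ball (0:ℂ) one_ne_zero, mem_sphere_zero_iff_norm] at hw
      have hwne : w ≠ 0 := by
        intro h0; rw [h0] at hw; simp at hw
      have hterm : ∀ i, ‖K i w‖ ^ 2 = ‖G i w‖ ^ 2 := by
        intro i
        have h2 : ‖F i w‖ = ‖K i w‖ := by
          rw [hKeq i w, norm_mul, norm_pow, hw]; simp
        rw [← h2, hFeq i w hwne]
      rw [← Real.sqrt_sq (norm_nonneg (W w))]
      apply Real.sqrt_le_sqrt
      rw [hWnorm w]
      calc ∑ i ∈ Finset.range N, ‖K i w‖ ^ 2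
          = ∑ i ∈ Finset.range N, ‖G i w‖ ^ 2 := by
            exact Finset.sum_congr rfl fun i _ => hterm i
        _ ≤ Real.exp (f (‖w‖ ^ 2)) :=
            sum_le_hasSum _ (fun i _ => by positivity) (hGsum w hwne)
        _ = A := by rw [hw, hAdef]; norm_num
    have hcl : z ∈ closure (Metric.ball (0:ℂ) 1) := by
      rw [closure_ball (0:ℂ) one_ne_zero]
      simpa [mem_closedBall_zero_iff] using hz
    have hmax := Complex.norm_le_of_forall_mem_frontier_norm_le isBounded_ball
      hWdiff.diffContOnCl hfr hcl
    calc ∑ i ∈ Finset.range N, ‖K i z‖ ^ 2 = ‖W z‖ ^ 2 := (hWnorm z).symm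
      _ ≤ Real.sqrt A ^ 2 := pow_le_pow_left₀ (norm_nonneg _) hmax 2
      _ = A := Real.sq_sqrt hA.le
  -- key inequality for small radii
  have hkey : ∀ r : ℝ, 0 < r → r < 1 → b₁ * r ^ (2 * lam) ≤ A * r ^ (2 * (M:ℝ)) := by
    intro r hr0 hr1
    set z : ℂ := (r : ℂ) with hzdef
    have hzn : ‖z‖ = r := by
      rw [hzdef, Complex.norm_real, Real.norm_of_nonneg hr0.le]
    have hzne : z ≠ 0 := by
      intro h0
      rw [h0] at hzn; simp at hzn; linarith
    have hzsum := hGsum z hzne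
    -- every partial sum is bounded
    have hub : Real.exp (f (‖z‖ ^ 2)) ≤ A * r ^ (2 * M : ℕ) := by
      apply hasSum_le_of_sum_le hzsum
      intro s
      have hsub : s ⊆ Finset.range (s.sup id + 1) := fun i hi =>
        Finset.mem_range.2 (Nat.lt_succ_of_le (Finset.le_sup (f := id) hi))
      calc ∑ i ∈ s, ‖G i z‖ ^ 2
          ≤ ∑ i ∈ Finset.range (s.sup id + 1), ‖G i z‖ ^ 2 :=
            Finset.sum_le_sum_of_subset_of_nonneg hsub (fun i _ _ => by positivity)
        _ = ∑ i ∈ Finset.range (s.sup id + 1), r ^ (2 * M : ℕ) * ‖K i z‖ ^ 2 := by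
            refine Finset.sum_congr rfl fun i _ => ?_
            rw [← hFeq i z hzne, hKeq i z, norm_mul, mul_pow, norm_pow, hzn]
            rw [← pow_mul]
            ring_nf
        _ = r ^ (2 * M : ℕ) * ∑ i ∈ Finset.range (s.sup id + 1), ‖K i z‖ ^ 2 := by
            rw [Finset.mul_sum]
        _ ≤ r ^ (2 * M : ℕ) * A := by
            apply mul_le_mul_of_nonneg_left _ (by positivity)
            exact hcirc _ z (by rw [hzn]; linarith)
        _ = A * r ^ (2 * M : ℕ) := by ring
    have hlb : b₁ * (‖z‖ ^ 2 : ℝ) ^ lam ≤ Real.exp (f (‖z‖ ^ 2)) := by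
      refine (bounds _ ?_).1
      rw [hzn]
      constructor
      · positivity
      · exact pow_le_one₀ hr0.le hr1.le
    have h3 : (‖z‖ ^ 2 : ℝ) ^ lam = r ^ (2 * lam) := by
      rw [hzn, ← Real.rpow_natCast r 2, ← Real.rpow_mul hr0.le]
      norm_num
    have h4 : (r : ℝ) ^ (2 * M : ℕ) = r ^ (2 * (M:ℝ)) := by
      rw [← Real.rpow_natCast r (2 * M)]
      push_cast
      ring_nf
    rw [h3] at hlb
    rw [h4] at hub
    linarith
  -- contradiction as r → 0
  set t : ℝ := 2 * (M:ℝ) - 2 * lam with htdef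
  have ht : 0 < t := by rw [htdef]; linarith
  have htendA : Tendsto (fun r : ℝ => A * r ^ t) (𝓝[>] 0) (𝓝 0) := by
    have h1 : ContinuousAt (fun x : ℝ => A * x ^ t) (0:ℝ) :=
      (Real.continuousAt_rpow_const 0 t (Or.inr ht.le)).const_mul _
    have h2 := h1.tendsto.mono_left (nhdsWithin_le_nhds (s := Set.Ioi (0:ℝ)))
    simpa [Real.zero_rpow ht.ne'] using h2
  have hev1 : ∀ᶠ r in 𝓝[>] (0:ℝ), A * r ^ t < b₁ := htendA.eventually_lt_const hb₁
  have hev2 : ∀ᶠ r in 𝓝[>] (0:ℝ), r ∈ Set.Ioo (0:ℝ) 1 :=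
    Ioo_mem_nhdsGT_of_mem (by constructor <;> norm_num)
  obtain ⟨r, hr1, hr2⟩ := (hev1.and hev2).exists
  obtain ⟨hr0, hrlt⟩ := hr2
  have hkr := hkey r hr0 hrlt
  have hsplit : A * r ^ (2 * (M:ℝ)) = (A * r ^ t) * r ^ (2 * lam) := by
    rw [mul_assoc, ← Real.rpow_add hr0]
    congr 2
    rw [htdef]; ring
  rw [hsplit] at hkr
  have hrp : 0 < r ^ (2 * lam) := Real.rpow_pos_of_pos hr0 _
  have : b₁ ≤ A * r ^ t := le_of_mul_le_mul_right (by linarith [hkr]) hrp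
  linarith
end

section
/- Let n ≥ 1 be an integer, I ⊆ (0,∞) an open interval, and f : I → ℝ a smooth function with f'(x) > 0 and f'(x) + x f''(x) > 0 for all x ∈ I. Suppose that the function x ↦ (f'(x))^{n−1} (f'(x) + x f''(x)) is constant on I, equal to some c. Then c > 0 and there exists a real constant C such that f'(x) = (C x^{−n} + c)^{1/n} for all x ∈ I, where in particular C x^{−n} + c > 0 on I. -/
/-- Classification of radial Ricci-flat Kähler potentials: if `f` is smooth on an open
interval `I ⊆ (0,∞)` with `f' > 0` and `f' + x f'' > 0` (positivity of the radial metric), and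
the determinant `(f')^{n-1} (f' + x f'')` of the metric is constantly equal to `c` on `I`, then
`c > 0` and `f'(x) = (C x⁻ⁿ + c)^{1/n}` for some real constant `C`. -/
theorem radial_ricci_flat_potential_classification
    {n : ℕ} (hn : 1 ≤ n) (I : Set ℝ) (hIopen : IsOpen I) (hIconn : I.OrdConnected)
    (hIpos : I ⊆ Set.Ioi 0) (hIne : I.Nonempty)
    (f f' f'' : ℝ → ℝ) (hf : ContDiffOn ℝ (⊤ : ℕ∞) f I)
    (hd1 : ∀ x ∈ I, HasDerivAt f (f' x) x)
    (hd2 : ∀ x ∈ I, HasDerivAt f' (f'' x) x)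
    (hpos1 : ∀ x ∈ I, 0 < f' x)
    (hpos2 : ∀ x ∈ I, 0 < f' x + x * f'' x)
    (c : ℝ) (hc : ∀ x ∈ I, (f' x) ^ (n - 1) * (f' x + x * f'' x) = c) :
    0 < c ∧ ∃ C : ℝ, ∀ x ∈ I,
      0 < C * x ^ (-(n : ℝ)) + c ∧ f' x = (C * x ^ (-(n : ℝ)) + c) ^ ((n : ℝ)⁻¹) := by
  obtain ⟨x₀, hx₀⟩ := hIne
  have hcpos : 0 < c := by
    rw [← hc x₀ hx₀]
    exact mul_pos (pow_pos (hpos1 x₀ hx₀) _) (hpos2 x₀ hx₀)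
  refine ⟨hcpos, ?_⟩
  set g : ℝ → ℝ := fun x => x ^ n * (f' x) ^ n - c * x ^ n with hg
  -- derivative of g is zero on I
  have hgderiv : ∀ x ∈ I, HasDerivAt g 0 x := by
    intro x hx
    have h1 : HasDerivAt (fun x : ℝ => x ^ n) ((n : ℝ) * x ^ (n - 1)) x :=
      hasDerivAt_pow n x
    have h2 : HasDerivAt (fun x : ℝ => (f' x) ^ n)
        ((n : ℝ) * (f' x) ^ (n - 1) * f'' x) x := by
      simpa using (hd2 x hx).fun_pow n
    have h3 : HasDerivAt g
        (((n : ℝ) * x ^ (n - 1)) * (f' x) ^ n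
          + x ^ n * ((n : ℝ) * (f' x) ^ (n - 1) * f'' x)
          - c * ((n : ℝ) * x ^ (n - 1))) x :=
      (h1.mul h2).sub (h1.const_mul c)
    convert h3 using 1
    have hfx : (f' x) ^ n = (f' x) ^ (n - 1) * f' x := by
      rw [← pow_succ]
      congr 1
      omega
    have hxn : x ^ n = x ^ (n - 1) * x := by
      rw [← pow_succ]
      congr 1
      omega
    have key := hc x hx
    have : ((n : ℝ) * x ^ (n - 1)) * (f' x) ^ n
        + x ^ n * ((n : ℝ) * (f' x) ^ (n - 1) * f'' x)
        = c * ((n : ℝ) * x ^ (n - 1)) := by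
      rw [hfx, hxn, ← key]; ring
    rw [this]; ring
  -- g is constant on I
  have hconv : Convex ℝ I := convex_iff_ordConnected.mpr hIconn
  have hgdiff : DifferentiableOn ℝ g I := fun x hx =>
    ((hgderiv x hx).differentiableAt).differentiableWithinAt
  have hgfd : ∀ x ∈ I, fderivWithin ℝ g I x = 0 := by
    intro x hx
    rw [fderivWithin_eq_fderiv (hIopen.uniqueDiffOn x hx)
      (hgderiv x hx).differentiableAt]
    have := (hgderiv x hx).deriv
    rw [← toSpanSingleton_deriv, this]
    ext
    simp
  have hgconst : ∀ x ∈ I, g x = g x₀ := fun x hx =>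
    hconv.is_const_of_fderivWithin_eq_zero hgdiff hgfd hx hx₀
  refine ⟨g x₀, fun x hx => ?_⟩
  have hxpos : 0 < x := hIpos hx
  have hxn : (0:ℝ) < x ^ n := pow_pos hxpos n
  have hkey : (f' x) ^ n = g x₀ * x ^ (-(n : ℝ)) + c := by
    have h1 : g x₀ = x ^ n * (f' x) ^ n - c * x ^ n := (hgconst x hx).symm
    have h2 : x ^ (-(n : ℝ)) = (x ^ n)⁻¹ := by
      rw [Real.rpow_neg hxpos.le, Real.rpow_natCast]
    rw [h2, h1]
    field_simp
    ring
  have hfpos := hpos1 x hx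
  have hpos : (0:ℝ) < g x₀ * x ^ (-(n : ℝ)) + c := by
    rw [← hkey]; exact pow_pos hfpos n
  refine ⟨hpos, ?_⟩
  rw [← hkey, Real.pow_rpow_inv_natCast hfpos.le (by omega)]
end

section
/- Let n ≥ 1 be an integer and λ > 0. Let f : (1,∞) → ℝ be a smooth function with f'(x) = λ(1 − x^{−n})^{1/n} for all x > 1, and define g₃(x) = e^{−f(x)} · (d³/dx³)(e^{f})(x). Then for all x > 1: g₃(x) = λ · (x^n − 1)^{(1−2n)/n} · x^{−3} · ( λ²(x^n − 1)^{(2+2n)/n} + 3λ(x^n − 1)^{(1+n)/n} − (x^n(n+1) − 2) ). -/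
open Real Set Filter

namespace GThreeAux

variable {n : ℕ} {lam x : ℝ}

lemma u_pos (hn : 1 ≤ n) (hx : 1 < x) : (0:ℝ) < x ^ n - 1 :=
  sub_pos.mpr (one_lt_pow₀ hx (by omega))

lemma phi_eq (hn : 1 ≤ n) (hx : 1 < x) :
    lam * (1 - x ^ (-(n : ℝ))) ^ ((n : ℝ)⁻¹)
      = lam * (x ^ n - 1) ^ ((n : ℝ)⁻¹) / x := by
  have hx0 : (0:ℝ) < x := lt_trans one_pos hx
  have hxn : (0:ℝ) < x ^ n := pow_pos hx0 n
  have hn0 : (n:ℝ) ≠ 0 := Nat.cast_ne_zero.mpr (by omega)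
  have h1 : x ^ (-(n : ℝ)) = (x ^ n)⁻¹ := by
    rw [Real.rpow_neg hx0.le, Real.rpow_natCast]
  have h2 : 1 - x ^ (-(n : ℝ)) = (x ^ n - 1) / x ^ n := by
    rw [h1]; field_simp
  have h3 : ((x ^ n : ℝ)) ^ ((n:ℝ)⁻¹) = x := by
    rw [← Real.rpow_natCast x n, ← Real.rpow_mul hx0.le,
      mul_inv_cancel₀ hn0, Real.rpow_one]
  rw [h2, Real.div_rpow (u_pos hn hx).le hxn.le, h3, mul_div_assoc]

lemma hasDerivAt_phi (hn : 1 ≤ n) (hx : 1 < x) :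
    HasDerivAt (fun t : ℝ => lam * (t ^ n - 1) ^ ((n : ℝ)⁻¹) / t)
      (lam * (x ^ n - 1) ^ ((1 - (n:ℝ)) / n) / x ^ 2) x := by
  have hx0 : (0:ℝ) < x := lt_trans one_pos hx
  have hu := u_pos hn hx
  have hn0 : (n:ℝ) ≠ 0 := Nat.cast_ne_zero.mpr (by omega)
  have hbase : HasDerivAt (fun t : ℝ => t ^ n - 1) ((n:ℝ) * x ^ (n - 1)) x :=
    (hasDerivAt_pow n x).sub_const 1
  have hr : HasDerivAt (fun t : ℝ => (t ^ n - 1) ^ ((n : ℝ)⁻¹))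
      ((n:ℝ) * x ^ (n - 1) * (n:ℝ)⁻¹ * (x ^ n - 1) ^ ((n:ℝ)⁻¹ - 1)) x :=
    hbase.rpow_const (Or.inl hu.ne')
  have h := ((hr.const_mul lam).div (hasDerivAt_id x) hx0.ne')
  convert h using 1
  case e'_4 => rfl
  case e'_5 => rfl
  case e'_8 => rfl
  have he2 : (n:ℝ)⁻¹ = (1 - (n:ℝ)) / n + 1 := by field_simp; ring
  rw [he2, Real.rpow_add hu, Real.rpow_one] at *
  have hxn1 : x ^ (n - 1) * x = x ^ n := by
    rw [← pow_succ]; congr 1; omega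
  simp only [id]
  field_simp
  ring_nf
  rw [← hxn1]
  ring

lemma hasDerivAt_phi1 (hn : 1 ≤ n) (hx : 1 < x) :
    HasDerivAt (fun t : ℝ => lam * (t ^ n - 1) ^ ((1 - (n:ℝ)) / n) / t ^ 2)
      (lam * (x ^ n - 1) ^ ((1 - 2*(n:ℝ)) / n) / x ^ 3 * (2 - ((n:ℝ) + 1) * x ^ n)) x := by
  have hx0 : (0:ℝ) < x := lt_trans one_pos hx
  have hu := u_pos hn hx
  have hn0 : (n:ℝ) ≠ 0 := Nat.cast_ne_zero.mpr (by omega)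
  have hbase : HasDerivAt (fun t : ℝ => t ^ n - 1) ((n:ℝ) * x ^ (n - 1)) x :=
    (hasDerivAt_pow n x).sub_const 1
  have hr : HasDerivAt (fun t : ℝ => (t ^ n - 1) ^ ((1 - (n:ℝ)) / n))
      ((n:ℝ) * x ^ (n - 1) * ((1 - (n:ℝ)) / n) * (x ^ n - 1) ^ ((1 - (n:ℝ)) / n - 1)) x :=
    hbase.rpow_const (Or.inl hu.ne')
  have h := ((hr.const_mul lam).div (hasDerivAt_pow 2 x) (pow_ne_zero 2 hx0.ne'))
  convert h using 1
  case e'_4 => rfl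
  case e'_5 => rfl
  case e'_8 => rfl
  have he : (1 - (n:ℝ)) / n - 1 = (1 - 2*(n:ℝ)) / n := by field_simp; ring
  have he2 : (1 - (n:ℝ)) / n = (1 - 2*(n:ℝ)) / n + 1 := by field_simp; ring
  rw [he, he2, Real.rpow_add hu, Real.rpow_one]
  have hxn1 : x ^ (n - 1) * x = x ^ n := by
    rw [← pow_succ]; congr 1; omega
  field_simp
  ring_nf
  rw [← hxn1]
  ring

end GThreeAux

/-- Explicit formula for `g₃(x) = e^{-f(x)} (d³/dx³)(e^f)(x)` for the radial potential `f` of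
the Ricci-flat metric `λ ω₋₁`, i.e. with `f'(x) = λ (1 - x⁻ⁿ)^{1/n}` on `(1, ∞)`. -/
theorem g_three_formula_omega_neg_one
    {n : ℕ} (hn : 1 ≤ n) (lam : ℝ) (hlam : 0 < lam)
    (f : ℝ → ℝ) (hf : ContDiffOn ℝ (⊤ : ℕ∞) f (Set.Ioi 1))
    (hf' : ∀ x ∈ Set.Ioi (1 : ℝ),
      HasDerivAt f (lam * (1 - x ^ (-(n : ℝ))) ^ ((n : ℝ)⁻¹)) x)
    (g₃ : ℝ → ℝ)
    (hg₃ : ∀ x, g₃ x = Real.exp (-f x) * iteratedDeriv 3 (fun t => Real.exp (f t)) x) :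
    ∀ x ∈ Set.Ioi (1 : ℝ),
      g₃ x = lam * (x ^ n - 1) ^ ((1 - 2 * (n : ℝ)) / (n : ℝ)) / x ^ 3 *
        (lam ^ 2 * (x ^ n - 1) ^ ((2 + 2 * (n : ℝ)) / (n : ℝ))
          + 3 * lam * (x ^ n - 1) ^ ((1 + (n : ℝ)) / (n : ℝ))
          - (x ^ n * ((n : ℝ) + 1) - 2)) := by
  classical
  set F : ℝ → ℝ := fun t => Real.exp (f t) with hF
  set φ : ℝ → ℝ := fun t => lam * (t ^ n - 1) ^ ((n : ℝ)⁻¹) / t with hφ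
  set φ₁ : ℝ → ℝ := fun t => lam * (t ^ n - 1) ^ ((1 - (n:ℝ)) / n) / t ^ 2 with hφ₁
  set φ₂ : ℝ → ℝ := fun t =>
    lam * (t ^ n - 1) ^ ((1 - 2*(n:ℝ)) / n) / t ^ 3 * (2 - ((n:ℝ) + 1) * t ^ n) with hφ₂
  -- f has derivative φ on Ioi 1
  have hdf : ∀ x ∈ Set.Ioi (1:ℝ), HasDerivAt f (φ x) x := by
    intro x hx
    have := hf' x hx
    rwa [GThreeAux.phi_eq hn hx] at this
  have hdF : ∀ x ∈ Set.Ioi (1:ℝ), HasDerivAt F (φ x * F x) x := by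
    intro x hx
    simpa [hF, mul_comm] using (hdf x hx).exp
  -- first derivative
  have hd1 : ∀ x ∈ Set.Ioi (1:ℝ), deriv F x = φ x * F x := fun x hx => (hdF x hx).deriv
  -- G1 has derivative
  have hdG1 : ∀ x ∈ Set.Ioi (1:ℝ),
      HasDerivAt (fun t => φ t * F t)
        (φ₁ x * F x + φ x * (φ x * F x)) x := by
    intro x hx
    have h1 := GThreeAux.hasDerivAt_phi (lam := lam) hn hx
    exact h1.mul (hdF x hx)
  have hd2 : ∀ x ∈ Set.Ioi (1:ℝ),
      deriv (deriv F) x = φ₁ x * F x + φ x * (φ x * F x) := by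
    intro x hx
    have hev : deriv F =ᶠ[nhds x] fun t => φ t * F t :=
      Filter.eventuallyEq_of_mem (Ioi_mem_nhds hx) (fun t ht => hd1 t ht)
    rw [hev.deriv_eq]
    exact (hdG1 x hx).deriv
  have hdG2 : ∀ x ∈ Set.Ioi (1:ℝ),
      HasDerivAt (fun t => φ₁ t * F t + φ t * (φ t * F t))
        ((φ₂ x * F x + φ₁ x * (φ x * F x))
          + (φ₁ x * (φ x * F x) + φ x * (φ₁ x * F x + φ x * (φ x * F x)))) x := by
    intro x hx
    have h1 := GThreeAux.hasDerivAt_phi (lam := lam) hn hx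
    have h2 := GThreeAux.hasDerivAt_phi1 (lam := lam) hn hx
    exact (h2.mul (hdF x hx)).add (h1.mul (hdG1 x hx))
  have hd3 : ∀ x ∈ Set.Ioi (1:ℝ),
      deriv (deriv (deriv F)) x
        = (φ₂ x * F x + φ₁ x * (φ x * F x))
          + (φ₁ x * (φ x * F x) + φ x * (φ₁ x * F x + φ x * (φ x * F x))) := by
    intro x hx
    have hev : deriv (deriv F) =ᶠ[nhds x]
        fun t => φ₁ t * F t + φ t * (φ t * F t) :=
      Filter.eventuallyEq_of_mem (Ioi_mem_nhds hx) (fun t ht => hd2 t ht)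
    rw [hev.deriv_eq]
    exact (hdG2 x hx).deriv
  intro x hx
  have hx1 : (1:ℝ) < x := hx
  have hx0 : (0:ℝ) < x := lt_trans one_pos hx1
  have hu := GThreeAux.u_pos hn hx1
  have hn0 : (n:ℝ) ≠ 0 := Nat.cast_ne_zero.mpr (by omega)
  have hit : iteratedDeriv 3 F x
      = (φ₂ x * F x + φ₁ x * (φ x * F x))
        + (φ₁ x * (φ x * F x) + φ x * (φ₁ x * F x + φ x * (φ x * F x))) := by
    rw [show (3:ℕ) = 2 + 1 from rfl, iteratedDeriv_succ,
      show (2:ℕ) = 1 + 1 from rfl, iteratedDeriv_succ, iteratedDeriv_one]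
    exact hd3 x hx
  have hg : g₃ x = φ₂ x + 3 * (φ x * φ₁ x) + φ x ^ 3 := by
    have key : Real.exp (-f x) * Real.exp (f x) = 1 := by
      rw [← Real.exp_add]; simp
    rw [hg₃ x, hit]
    simp only [hF]
    linear_combination (φ₂ x + 3 * (φ x * φ₁ x) + φ x ^ 3) * key
  rw [hg]
  -- final algebraic identity
  simp only [hφ, hφ₁, hφ₂]
  set u : ℝ := x ^ n - 1 with hu'
  have hu : (0:ℝ) < u := GThreeAux.u_pos hn hx1
  set v : ℝ := u ^ ((n:ℝ)⁻¹) with hv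
  have hA : u ^ ((1 - (n:ℝ))/n) = v / u := by
    rw [show (1 - (n:ℝ))/n = (n:ℝ)⁻¹ - 1 by field_simp, Real.rpow_sub hu, Real.rpow_one]
  have hB : u ^ ((1 - 2*(n:ℝ))/n) = v / u ^ 2 := by
    rw [show (1 - 2*(n:ℝ))/n = (n:ℝ)⁻¹ - 2 by field_simp, Real.rpow_sub hu]
    congr 1
    rw [show (2:ℝ) = ((2:ℕ):ℝ) by norm_num, Real.rpow_natCast]
  have hC : u ^ ((2 + 2*(n:ℝ))/n) = v ^ 2 * u ^ 2 := by
    rw [show (2 + 2*(n:ℝ))/n = (n:ℝ)⁻¹ * 2 + 2 by field_simp, Real.rpow_add hu,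
      Real.rpow_mul hu.le]
    congr 1
    · rw [show (2:ℝ) = ((2:ℕ):ℝ) by norm_num, Real.rpow_natCast]
    · rw [show (2:ℝ) = ((2:ℕ):ℝ) by norm_num, Real.rpow_natCast]
  have hD : u ^ ((1 + (n:ℝ))/n) = v * u := by
    rw [show (1 + (n:ℝ))/n = (n:ℝ)⁻¹ + 1 by field_simp, Real.rpow_add hu, Real.rpow_one]
  rw [hA, hB, hC, hD]
  have hx' : x ≠ 0 := hx0.ne'
  have hun : u ≠ 0 := hu.ne'
  field_simp
  ring
end

section
/- Let n ≥ 2 be an integer and λ > 0. Let f : (1,∞) → ℝ be a smooth function with f'(x) = λ(1 − x^{−n})^{1/n} for all x > 1, and define g₃(x) = e^{−f(x)} · (d³/dx³)(e^{f})(x). Then g₃(x) tends to −∞ as x tends to 1 from the right. -/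
open Real Filter Set

namespace GThreeAux

noncomputable def U (n : ℕ) (x : ℝ) : ℝ := 1 - x ^ (-(n : ℝ))

noncomputable def Phi (n : ℕ) (lam x : ℝ) : ℝ := lam * U n x ^ ((n : ℝ)⁻¹)

noncomputable def Psi (n : ℕ) (lam x : ℝ) : ℝ :=
  lam * (x ^ (-(n : ℝ) - 1) * U n x ^ ((n : ℝ)⁻¹ - 1))

noncomputable def Chi (n : ℕ) (lam x : ℝ) : ℝ :=
  lam * ((-(n : ℝ) - 1) * x ^ (-(n : ℝ) - 1 - 1) * U n x ^ ((n : ℝ)⁻¹ - 1)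
    + ((n : ℝ)⁻¹ - 1) * (n : ℝ) * (x ^ (-(n : ℝ) - 1) * x ^ (-(n : ℝ) - 1))
      * U n x ^ ((n : ℝ)⁻¹ - 2))

lemma U_pos {n : ℕ} (hn : 2 ≤ n) {x : ℝ} (hx : 1 < x) : 0 < U n x := by
  have hneg : -(n : ℝ) < 0 := by
    have : (0:ℝ) < n := by positivity
    linarith
  have := Real.rpow_lt_one_of_one_lt_of_neg hx hneg
  simp only [U]; linarith

lemma hasDerivAt_U (n : ℕ) {x : ℝ} (hx : 0 < x) :
    HasDerivAt (U n) ((n : ℝ) * x ^ (-(n : ℝ) - 1)) x := by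
  have h := (Real.hasDerivAt_rpow_const (p := -(n : ℝ)) (Or.inl hx.ne')).const_sub 1
  refine h.congr_deriv ?_
  ring

lemma hasDerivAt_Phi {n : ℕ} (hn : 2 ≤ n) (lam : ℝ) {x : ℝ} (hx : 1 < x) :
    HasDerivAt (Phi n lam) (Psi n lam x) x := by
  have hx0 : 0 < x := lt_trans one_pos hx
  have hu := U_pos hn hx
  have hn0 : (n : ℝ) ≠ 0 := by positivity
  have h := ((hasDerivAt_U n hx0).rpow_const (p := (n : ℝ)⁻¹) (Or.inl hu.ne')).const_mul lam
  refine h.congr_deriv ?_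
  simp only [Psi]
  field_simp

lemma hasDerivAt_Psi {n : ℕ} (hn : 2 ≤ n) (lam : ℝ) {x : ℝ} (hx : 1 < x) :
    HasDerivAt (Psi n lam) (Chi n lam x) x := by
  have hx0 : 0 < x := lt_trans one_pos hx
  have hu := U_pos hn hx
  have h1 : HasDerivAt (fun y : ℝ => y ^ (-(n : ℝ) - 1))
      ((-(n : ℝ) - 1) * x ^ (-(n : ℝ) - 1 - 1)) x :=
    Real.hasDerivAt_rpow_const (Or.inl hx0.ne')
  have h2 := (hasDerivAt_U n hx0).rpow_const (p := (n : ℝ)⁻¹ - 1) (Or.inl hu.ne')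
  have h := (h1.mul h2).const_mul lam
  refine h.congr_deriv ?_
  have e : (n : ℝ)⁻¹ - 2 = (n : ℝ)⁻¹ - 1 - 1 := by ring
  simp only [Chi, e]
  ring

theorem main
    {n : ℕ} (hn : 2 ≤ n) (lam : ℝ) (hlam : 0 < lam)
    (f : ℝ → ℝ) (hf : ContDiffOn ℝ (⊤ : ℕ∞) f (Set.Ioi 1))
    (hf' : ∀ x ∈ Set.Ioi (1 : ℝ),
      HasDerivAt f (lam * (1 - x ^ (-(n : ℝ))) ^ ((n : ℝ)⁻¹)) x)
    (g₃ : ℝ → ℝ)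
    (hg₃ : ∀ x, g₃ x = Real.exp (-f x) * iteratedDeriv 3 (fun t => Real.exp (f t)) x) :
    Filter.Tendsto g₃ (nhdsWithin 1 (Set.Ioi 1)) Filter.atBot := by
  have hn0 : (n : ℝ) ≠ 0 := by positivity
  set F : ℝ → ℝ := fun t => Real.exp (f t) with hF_def
  have hF : ∀ x ∈ Ioi (1:ℝ), HasDerivAt F (Phi n lam x * F x) x := by
    intro x hx
    have := (hf' x hx).exp
    simpa [Phi, U, mul_comm] using this
  set D1 : ℝ → ℝ := fun x => Phi n lam x * F x with hD1_def
  set D2 : ℝ → ℝ := fun x => Psi n lam x * F x + Phi n lam x * (Phi n lam x * F x) with hD2_def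
  have hD1' : ∀ x ∈ Ioi (1:ℝ), HasDerivAt D1 (D2 x) x := fun x hx =>
    (hasDerivAt_Phi hn lam hx).mul (hF x hx)
  have hD2' : ∀ x ∈ Ioi (1:ℝ), HasDerivAt D2
      ((Chi n lam x * F x + Psi n lam x * (Phi n lam x * F x))
        + (Psi n lam x * (Phi n lam x * F x)
          + Phi n lam x * (Psi n lam x * F x + Phi n lam x * (Phi n lam x * F x)))) x :=
    fun x hx =>
      ((hasDerivAt_Psi hn lam hx).mul (hF x hx)).add
        ((hasDerivAt_Phi hn lam hx).mul ((hasDerivAt_Phi hn lam hx).mul (hF x hx)))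
  have hEq1 : Set.EqOn (deriv F) D1 (Ioi 1) := fun x hx => (hF x hx).deriv
  have hEq2 : Set.EqOn (deriv (deriv F)) D2 (Ioi 1) := by
    intro x hx
    have e : deriv F =ᶠ[nhds x] D1 :=
      Filter.eventuallyEq_of_mem (isOpen_Ioi.mem_nhds hx) hEq1
    rw [e.deriv_eq, (hD1' x hx).deriv]
  have hEq3 : ∀ x ∈ Ioi (1:ℝ), deriv (deriv (deriv F)) x =
      (Chi n lam x + 3 * Phi n lam x * Psi n lam x + Phi n lam x ^ 3) * F x := by
    intro x hx
    have e : deriv (deriv F) =ᶠ[nhds x] D2 :=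
      Filter.eventuallyEq_of_mem (isOpen_Ioi.mem_nhds hx) hEq2
    rw [e.deriv_eq, (hD2' x hx).deriv]
    ring
  have hkey : ∀ x ∈ Ioi (1:ℝ), g₃ x =
      Chi n lam x + 3 * Phi n lam x * Psi n lam x + Phi n lam x ^ 3 := by
    intro x hx
    have h3 : iteratedDeriv 3 F x = deriv (deriv (deriv F)) x := by
      rw [show (3:ℕ) = 0 + 1 + 1 + 1 from rfl, iteratedDeriv_succ, iteratedDeriv_succ,
        iteratedDeriv_succ, iteratedDeriv_zero]
    have hFx : F x = Real.exp (f x) := rfl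
    rw [hg₃ x, h3, hEq3 x hx, hFx, Real.exp_neg]
    field_simp
  -- The limit computation
  set l := nhdsWithin (1:ℝ) (Ioi 1) with hl_def
  set B : ℝ → ℝ := fun x =>
    lam * ((-(n : ℝ) - 1) * x ^ (-(n : ℝ) - 1 - 1)) * U n x
      + lam * (((n : ℝ)⁻¹ - 1) * (n : ℝ)) * (x ^ (-(n : ℝ) - 1) * x ^ (-(n : ℝ) - 1))
      + 3 * lam ^ 2 * x ^ (-(n : ℝ) - 1) * U n x ^ ((n : ℝ)⁻¹ + 1)
      + lam ^ 3 * U n x ^ (2 * (n : ℝ)⁻¹ + 2) with hB_def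
  have hfact : ∀ x ∈ Ioi (1:ℝ),
      Chi n lam x + 3 * Phi n lam x * Psi n lam x + Phi n lam x ^ 3
        = U n x ^ ((n : ℝ)⁻¹ - 2) * B x := by
    intro x hx
    have hu := U_pos hn hx
    have eA : U n x ^ ((n : ℝ)⁻¹ - 1) = U n x ^ ((n : ℝ)⁻¹ - 2) * U n x := by
      rw [show (n : ℝ)⁻¹ - 1 = ((n : ℝ)⁻¹ - 2) + 1 by ring, Real.rpow_add hu, Real.rpow_one]
    have eB : U n x ^ ((n : ℝ)⁻¹) = U n x ^ ((n : ℝ)⁻¹ - 2) * U n x ^ (2:ℕ) := by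
      rw [← Real.rpow_natCast (U n x) 2, ← Real.rpow_add hu]
      congr 1; push_cast; ring
    have eC : U n x ^ ((n : ℝ)⁻¹ + 1) = U n x ^ ((n : ℝ)⁻¹ - 2) * U n x ^ (3:ℕ) := by
      rw [← Real.rpow_natCast (U n x) 3, ← Real.rpow_add hu]
      congr 1; push_cast; ring
    have eD : U n x ^ (2 * (n : ℝ)⁻¹ + 2)
        = U n x ^ ((n : ℝ)⁻¹ - 2) * (U n x ^ ((n : ℝ)⁻¹ - 2) * U n x ^ (6:ℕ)) := by
      rw [← Real.rpow_natCast (U n x) 6, ← Real.rpow_add hu, ← Real.rpow_add hu]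
      congr 1; push_cast; ring
    simp only [Chi, Phi, Psi, B, eA, eB, eC, eD]
    ring
  have hx1 : ∀ c : ℝ, Tendsto (fun x : ℝ => x ^ c) l (nhds 1) := by
    intro c
    have := (Real.continuousAt_rpow_const 1 c (Or.inl one_ne_zero)).tendsto
    rw [Real.one_rpow] at this
    exact this.mono_left nhdsWithin_le_nhds
  have hUt : Tendsto (U n) l (nhds 0) := by
    have h1 := hx1 (-(n : ℝ))
    have : Tendsto (fun x : ℝ => 1 - x ^ (-(n:ℝ))) l (nhds (1 - 1)) :=
      tendsto_const_nhds.sub h1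
    rw [sub_self] at this; exact this
  have hp0 : (0:ℝ) < (n : ℝ)⁻¹ := by positivity
  have hp2 : (n : ℝ)⁻¹ < 2 := by
    have h2n : (2:ℝ) ≤ (n:ℝ) := by exact_mod_cast hn
    have : (n : ℝ)⁻¹ ≤ 1/2 := by
      rw [inv_le_comm₀ (by positivity) (by norm_num)]
      linarith
    linarith
  have hAt : Tendsto (fun x => U n x ^ ((n : ℝ)⁻¹ - 2)) l atTop := by
    have hU0 : Tendsto (U n) l (nhdsWithin 0 (Ioi 0)) := by
      rw [tendsto_nhdsWithin_iff]
      refine ⟨hUt, ?_⟩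
      filter_upwards [self_mem_nhdsWithin] with x hx
      exact U_pos hn hx
    have h1 : Tendsto (fun x => (U n x)⁻¹) l atTop := tendsto_inv_nhdsGT_zero.comp hU0
    have h2 : Tendsto (fun x => ((U n x)⁻¹) ^ (2 - (n : ℝ)⁻¹)) l atTop :=
      (tendsto_rpow_atTop (by linarith)).comp h1
    refine h2.congr' ?_
    filter_upwards [self_mem_nhdsWithin] with x hx
    have hu := U_pos hn hx
    rw [← Real.rpow_neg_one (U n x), ← Real.rpow_mul hu.le]
    ring_nf
  have hL : lam * (((n : ℝ)⁻¹ - 1) * (n : ℝ)) < 0 := by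
    have he : ((n : ℝ)⁻¹ - 1) * (n : ℝ) = 1 - (n : ℝ) := by field_simp
    rw [he]
    have : (2 : ℝ) ≤ n := by exact_mod_cast hn
    nlinarith
  have hUm : ∀ q : ℝ, 0 < q → Tendsto (fun x => U n x ^ q) l (nhds 0) := by
    intro q hq
    have hc := (Real.continuousAt_rpow_const 0 q (Or.inr hq.le)).tendsto
    have := hc.comp hUt
    rwa [Real.zero_rpow hq.ne'] at this
  have hB : Tendsto B l (nhds (lam * (((n : ℝ)⁻¹ - 1) * (n : ℝ)))) := by
    have t1 : Tendsto (fun x => lam * ((-(n:ℝ) - 1) * x ^ (-(n:ℝ)-1-1)) * U n x) l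
        (nhds 0) := by
      have := (((hx1 (-(n:ℝ)-1-1)).const_mul (-(n:ℝ)-1)).const_mul lam).mul hUt
      simpa using this
    have t2 : Tendsto
        (fun x => lam * (((n : ℝ)⁻¹ - 1) * (n:ℝ)) * (x ^ (-(n:ℝ)-1) * x ^ (-(n:ℝ)-1)))
        l (nhds (lam * (((n : ℝ)⁻¹ - 1) * (n : ℝ)))) := by
      have := ((hx1 (-(n:ℝ)-1)).mul (hx1 (-(n:ℝ)-1))).const_mul
        (lam * (((n : ℝ)⁻¹ - 1) * (n:ℝ)))
      simpa using this
    have t3 : Tendsto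
        (fun x => 3 * lam ^ 2 * x ^ (-(n:ℝ)-1) * U n x ^ ((n : ℝ)⁻¹ + 1)) l
        (nhds 0) := by
      have := ((hx1 (-(n:ℝ)-1)).const_mul (3 * lam ^ 2)).mul
        (hUm ((n : ℝ)⁻¹ + 1) (by linarith))
      simpa [mul_assoc] using this
    have t4 : Tendsto (fun x => lam ^ 3 * U n x ^ (2 * (n : ℝ)⁻¹ + 2)) l
        (nhds 0) := by
      have := (hUm (2 * (n : ℝ)⁻¹ + 2) (by linarith)).const_mul (lam ^ 3)
      simpa using this
    have := ((t1.add t2).add t3).add t4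
    simpa [hB_def] using this
  have hmain : Tendsto (fun x => U n x ^ ((n : ℝ)⁻¹ - 2) * B x) l atBot :=
    hAt.atTop_mul_neg hL hB
  refine hmain.congr' ?_
  filter_upwards [self_mem_nhdsWithin] with x hx
  rw [hkey x hx, hfact x hx]

end GThreeAux

/-- For `n ≥ 2` and `λ > 0`, the function `g₃(x) = e^{-f(x)} (d³/dx³)(e^f)(x)` associated to
the radial potential `f` of the Ricci-flat metric `λ ω₋₁` (with `f'(x) = λ (1 - x⁻ⁿ)^{1/n}`)
tends to `-∞` as `x → 1⁺`. -/
theorem g_three_tendsto_atBot_omega_neg_one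
    {n : ℕ} (hn : 2 ≤ n) (lam : ℝ) (hlam : 0 < lam)
    (f : ℝ → ℝ) (hf : ContDiffOn ℝ (⊤ : ℕ∞) f (Set.Ioi 1))
    (hf' : ∀ x ∈ Set.Ioi (1 : ℝ),
      HasDerivAt f (lam * (1 - x ^ (-(n : ℝ))) ^ ((n : ℝ)⁻¹)) x)
    (g₃ : ℝ → ℝ)
    (hg₃ : ∀ x, g₃ x = Real.exp (-f x) * iteratedDeriv 3 (fun t => Real.exp (f t)) x) :
    Filter.Tendsto g₃ (nhdsWithin 1 (Set.Ioi 1)) Filter.atBot :=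
  GThreeAux.main hn lam hlam f hf hf' g₃ hg₃
end

section
/- Let n ≥ 1 be an integer and λ > 0. Let f : (0,∞) → ℝ be a smooth function with f'(x) = λ(x^{−n} + 1)^{1/n} for all x > 0, let Ψ(x) = (x^n + 1)^{1/n}, and define g_h(x) = e^{−f(x)} · (d^h/dx^h)(e^{f})(x). Then for every integer h ≥ 1 there exists a function φ_h : [0,∞) → ℝ of class C^∞ such that for all x > 0: g_h(x) = (λ / x^h) · ( Ψ(x) · ∏_{j=1}^{h−1} (λΨ(x) − j) + x·φ_h(x) ), where the product over the empty range (h = 1) equals 1. -/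
/-- Structure of the functions `g_h(x) = e^{-f(x)} (dʰ/dxʰ)(e^f)(x)` for the radial potential
`f` of the Ricci-flat metric `λ ω₁` (with `f'(x) = λ (x⁻ⁿ + 1)^{1/n}` on `(0,∞)`): with
`Ψ(x) = (xⁿ + 1)^{1/n}`, for every `h ≥ 1` there is a function `φ_h`, smooth on `[0,∞)`,
with `g_h(x) = (λ / xʰ) (Ψ(x) ∏_{j=1}^{h-1} (λ Ψ(x) - j) + x φ_h(x))` for all `x > 0`. -/
theorem g_h_structure_omega_one
    {n : ℕ} (hn : 1 ≤ n) (lam : ℝ) (hlam : 0 < lam)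
    (f : ℝ → ℝ) (hf : ContDiffOn ℝ (⊤ : ℕ∞) f (Set.Ioi 0))
    (hf' : ∀ x ∈ Set.Ioi (0 : ℝ),
      HasDerivAt f (lam * (x ^ (-(n : ℝ)) + 1) ^ ((n : ℝ)⁻¹)) x)
    (Ψ : ℝ → ℝ) (hΨ : ∀ x, Ψ x = (x ^ n + 1) ^ ((n : ℝ)⁻¹))
    (g : ℕ → ℝ → ℝ)
    (hg : ∀ h x, g h x = Real.exp (-f x) * iteratedDeriv h (fun t => Real.exp (f t)) x) :
    ∀ h : ℕ, 1 ≤ h → ∃ φ : ℝ → ℝ, ContDiffOn ℝ (⊤ : ℕ∞) φ (Set.Ici 0) ∧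
      ∀ x ∈ Set.Ioi (0 : ℝ),
        g h x = lam / x ^ h *
          (Ψ x * (∏ j ∈ Finset.Icc 1 (h - 1), (lam * Ψ x - (j : ℝ))) + x * φ x) := by
  have hn0 : (n : ℝ) ≠ 0 := Nat.cast_ne_zero.mpr (by omega)
  set E : ℝ → ℝ := fun t => Real.exp (f t) with hE_def
  have hE : ContDiffOn ℝ (⊤ : ℕ∞) E (Set.Ioi 0) := Real.contDiff_exp.comp_contDiffOn hf
  -- smoothness of iterated derivatives of E on (0,∞)
  have hEC : ∀ m : ℕ, ContDiffOn ℝ (⊤ : ℕ∞) (iteratedDeriv m E) (Set.Ioi 0) := by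
    intro m
    induction m with
    | zero => simpa [iteratedDeriv_zero] using hE
    | succ m ih =>
        rw [iteratedDeriv_succ]
        exact ih.deriv_of_isOpen isOpen_Ioi (by simp)
  have hD : ∀ (m : ℕ), ∀ x ∈ Set.Ioi (0 : ℝ),
      HasDerivAt (iteratedDeriv m E) (iteratedDeriv (m + 1) E x) x := by
    intro m x hx
    rw [iteratedDeriv_succ]
    exact (((hEC m).differentiableOn (by simp)).differentiableAt (Ioi_mem_nhds hx)).hasDerivAt
  -- key identity : (x^{-n}+1)^{1/n} = Ψ x / x for x > 0
  have hΨdiv : ∀ x ∈ Set.Ioi (0 : ℝ),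
      (x ^ (-(n : ℝ)) + 1) ^ ((n : ℝ)⁻¹) = Ψ x / x := by
    intro x hx
    have hx0 : (0 : ℝ) < x := hx
    have h1 : x ^ (-(n : ℝ)) = (x ^ n)⁻¹ := by
      rw [Real.rpow_neg hx0.le, Real.rpow_natCast]
    have hxn : (0 : ℝ) < x ^ n := pow_pos hx0 n
    have h2 : x ^ (-(n : ℝ)) + 1 = (x ^ n + 1) / x ^ n := by
      rw [h1]; field_simp; ring
    rw [h2, Real.div_rpow (by positivity) hxn.le, hΨ]
    congr 1
    rw [← Real.rpow_natCast x n, ← Real.rpow_mul hx0.le, mul_inv_cancel₀ hn0,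
      Real.rpow_one]
  -- the recurrence for g
  have hrec : ∀ (m : ℕ), ∀ x ∈ Set.Ioi (0 : ℝ),
      HasDerivAt (g m) (g (m + 1) x - lam * (Ψ x / x) * g m x) x := by
    intro m x hx
    have hfd := hf' x hx
    have hexp : HasDerivAt (fun t => Real.exp (-f t))
        (Real.exp (-f x) * -(lam * (x ^ (-(n : ℝ)) + 1) ^ ((n : ℝ)⁻¹))) x := hfd.neg.exp
    have hprod := hexp.mul (hD m x hx)
    have hfun : (fun t => Real.exp (-f t)) * iteratedDeriv m E = g m := by
      funext t; simp only [Pi.mul_apply, hg]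
    rw [hfun] at hprod
    refine HasDerivAt.congr_deriv hprod ?_
    rw [hg, hg, ← hΨdiv x hx]
    ring
  set U : Set ℝ := Set.Ioi (-(1 : ℝ) / 2) with hU_def
  have hUopen : IsOpen U := isOpen_Ioi
  have hIciU : Set.Ici (0 : ℝ) ⊆ U := fun x hx => lt_of_lt_of_le (by norm_num : (-(1:ℝ)/2) < 0) hx
  have hIoiU : ∀ x : ℝ, 0 < x → x ∈ U := fun x hx => lt_trans (by norm_num) hx
  have hposU : ∀ x ∈ U, 0 < x ^ n + 1 := by
    intro x hx
    rcases le_or_gt 0 x with h0 | h0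
    · have : 0 ≤ x ^ n := pow_nonneg h0 n
      linarith
    · have hxgt : -(1 : ℝ) / 2 < x := hx
      have hxabs : |x| < 1 / 2 := by rw [abs_of_neg h0]; linarith
      have h1 : |x ^ n| ≤ |x| := by
        rw [abs_pow]
        exact pow_le_of_le_one (abs_nonneg x) (by linarith) (by omega)
      have h2 := neg_abs_le (x ^ n)
      linarith
  have hΨC : ContDiffOn ℝ (⊤ : ℕ∞) Ψ U := by
    have hfun : Ψ = fun y : ℝ => (y ^ n + 1) ^ ((n : ℝ)⁻¹) := funext hΨ
    rw [hfun]
    intro x hx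
    have h1 : ContDiffAt ℝ (⊤ : ℕ∞) (fun y : ℝ => y ^ n + 1) x :=
      ((contDiff_id.pow n).add contDiff_const).contDiffAt
    have h2 : ContDiffAt ℝ (⊤ : ℕ∞) (fun y : ℝ => y ^ ((n : ℝ)⁻¹)) (x ^ n + 1) :=
      Real.contDiffAt_rpow_const_of_ne (ne_of_gt (hposU x hx))
    exact (h2.comp x h1).contDiffWithinAt
  have hprodC : ∀ s : Finset ℕ,
      ContDiffOn ℝ (⊤ : ℕ∞) (fun x => ∏ j ∈ s, (lam * Ψ x - (j : ℝ))) U := by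
    intro s
    induction s using Finset.induction_on with
    | empty => simpa using (contDiffOn_const : ContDiffOn ℝ (⊤ : ℕ∞) (fun _ : ℝ => (1 : ℝ)) U)
    | @insert a s ha ih =>
        have : (fun x => ∏ j ∈ insert a s, (lam * Ψ x - (j : ℝ)))
            = fun x => (lam * Ψ x - (a : ℝ)) * ∏ j ∈ s, (lam * Ψ x - (j : ℝ)) := by
          funext x; rw [Finset.prod_insert ha]
        rw [this]
        exact ((contDiffOn_const.mul hΨC).sub contDiffOn_const).mul ih
  suffices H : ∀ h : ℕ, 1 ≤ h → ∃ φ : ℝ → ℝ, ContDiffOn ℝ (⊤ : ℕ∞) φ U ∧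
      ∀ x ∈ Set.Ioi (0 : ℝ),
        g h x = lam / x ^ h *
          (Ψ x * (∏ j ∈ Finset.Icc 1 (h - 1), (lam * Ψ x - (j : ℝ))) + x * φ x) by
    intro h hh
    obtain ⟨φ, hφ, hval⟩ := H h hh
    exact ⟨φ, hφ.mono hIciU, hval⟩
  intro h
  induction h with
  | zero => omega
  | succ m ih =>
    intro _
    rcases Nat.eq_zero_or_pos m with rfl | hm
    · -- base case h = 1
      refine ⟨fun _ => 0, contDiffOn_const, ?_⟩
      intro x hx
      have hx0 : (0 : ℝ) < x := hx
      have hEder : HasDerivAt E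
          (Real.exp (f x) * (lam * (x ^ (-(n : ℝ)) + 1) ^ ((n : ℝ)⁻¹))) x := (hf' x hx).exp
      have h1 : iteratedDeriv 1 E x
          = Real.exp (f x) * (lam * (x ^ (-(n : ℝ)) + 1) ^ ((n : ℝ)⁻¹)) := by
        rw [iteratedDeriv_one]; exact hEder.deriv
      rw [hg, h1, hΨdiv x hx]
      have hIcc : Finset.Icc 1 (1 - 1) = (∅ : Finset ℕ) := by decide
      rw [hIcc, Finset.prod_empty]
      rw [Real.exp_neg]
      field_simp
      ring
    · obtain ⟨k, rfl⟩ : ∃ k, m = k + 1 :=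
        ⟨m - 1, by omega⟩
      obtain ⟨φ, hφC, hφval⟩ := ih (by omega)
      set P : ℝ → ℝ := fun x => Ψ x * ∏ j ∈ Finset.Icc 1 k, (lam * Ψ x - (j : ℝ))
        with hP_def
      have hPC : ContDiffOn ℝ (⊤ : ℕ∞) P U := hΨC.mul (hprodC _)
      have hP'C : ContDiffOn ℝ (⊤ : ℕ∞) (deriv P) U := hPC.deriv_of_isOpen hUopen (by simp)
      have hφ'C : ContDiffOn ℝ (⊤ : ℕ∞) (deriv φ) U := hφC.deriv_of_isOpen hUopen (by simp)
      refine ⟨fun x => (lam * Ψ x - ((k : ℝ) + 1)) * φ x + deriv P x + φ x + x * deriv φ x,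
        ?_, ?_⟩
      · exact (((((contDiffOn_const.mul hΨC).sub contDiffOn_const).mul hφC).add hP'C).add
          hφC).add (contDiffOn_id.mul hφ'C)
      intro x hx
      have hx0 : (0 : ℝ) < x := hx
      have hxne : x ≠ 0 := ne_of_gt hx0
      have hxU : x ∈ U := hIoiU x hx0
      -- the function F which agrees with g (k+1) on (0,∞)
      set F : ℝ → ℝ := fun t => lam / t ^ (k + 1) * (P t + t * φ t) with hF_def
      have heq : ∀ t ∈ Set.Ioi (0 : ℝ), g (k + 1) t = F t := by
        intro t ht
        rw [hφval t ht, hF_def, hP_def]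
        norm_num
      have hev : g (k + 1) =ᶠ[nhds x] F :=
        Filter.eventuallyEq_of_mem (Ioi_mem_nhds hx0) heq
      -- derivative of F at x
      have hPd : HasDerivAt P (deriv P x) x :=
        (((hPC.differentiableOn (by simp)).differentiableAt
          (hUopen.mem_nhds hxU))).hasDerivAt
      have hφd : HasDerivAt φ (deriv φ x) x :=
        (((hφC.differentiableOn (by simp)).differentiableAt
          (hUopen.mem_nhds hxU))).hasDerivAt
      have hpow : HasDerivAt (fun t : ℝ => t ^ (k + 1)) (((k : ℝ) + 1) * x ^ k) x := by
        simpa using hasDerivAt_pow (k + 1) x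
      have hdiv : HasDerivAt (fun t : ℝ => lam / t ^ (k + 1))
          ((0 * x ^ (k + 1) - lam * (((k : ℝ) + 1) * x ^ k)) / (x ^ (k + 1)) ^ 2) x :=
        (hasDerivAt_const x lam).div hpow (pow_ne_zero _ hxne)
      have hsum : HasDerivAt (fun t => P t + t * φ t)
          (deriv P x + (1 * φ x + x * deriv φ x)) x :=
        hPd.add ((hasDerivAt_id x).mul hφd)
      have hFd : HasDerivAt F
          ((0 * x ^ (k + 1) - lam * (((k : ℝ) + 1) * x ^ k)) / (x ^ (k + 1)) ^ 2
              * (P x + x * φ x)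
            + lam / x ^ (k + 1) * (deriv P x + (1 * φ x + x * deriv φ x))) x :=
        hdiv.mul hsum
      have hgd : HasDerivAt (g (k + 1)) _ x := hFd.congr_of_eventuallyEq hev
      have hkey := (hrec (k + 1) x hx).unique hgd
      have hgF : g (k + 1) x = F x := heq x hx
      -- expand the product at the top
      have hIcc : (∏ j ∈ Finset.Icc 1 (k + 1 + 1 - 1), (lam * Ψ x - (j : ℝ)))
          = (∏ j ∈ Finset.Icc 1 k, (lam * Ψ x - (j : ℝ))) * (lam * Ψ x - ((k : ℝ) + 1)) := by
        have : k + 1 + 1 - 1 = k + 1 := by omega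
        rw [this, Finset.prod_Icc_succ_top (by omega)]
        push_cast
        ring_nf
      have hgoal : g (k + 1 + 1) x
          = lam * (Ψ x / x) * F x
            + ((0 * x ^ (k + 1) - lam * (((k : ℝ) + 1) * x ^ k)) / (x ^ (k + 1)) ^ 2
                * (P x + x * φ x)
              + lam / x ^ (k + 1) * (deriv P x + (1 * φ x + x * deriv φ x))) := by
        rw [← hgF]; linarith [hkey]
      rw [hgoal, hIcc, hF_def, hP_def]
      field_simp
      ring
end

section
/- Let n ≥ 1 be an integer and let λ > 0 be a real number that is not an integer. Let f : (0,∞) → ℝ be a smooth function with f'(x) = λ(x^{−n} + 1)^{1/n} for all x > 0, and define g_h(x) = e^{−f(x)} · (d^h/dx^h)(e^{f})(x). Then g_{⌊λ⌋+2}(x) tends to −∞ as x tends to 0 from the right, where ⌊λ⌋ denotes the integer part of λ. -/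
open Set Filter Real Topology
open scoped ContDiff

noncomputable def vAux (n : ℕ) (lam : ℝ) : ℝ → ℝ := fun x => lam * (1 + x ^ n) ^ ((n : ℝ)⁻¹)

noncomputable def qAux (n : ℕ) (lam : ℝ) : ℕ → ℝ → ℝ
  | 0 => fun _ => 1
  | (h+1) => fun x => qAux n lam h x * (vAux n lam x - h) + x * deriv (qAux n lam h) x

lemma base_pos {n : ℕ} (hn : 1 ≤ n) {x : ℝ} (hx : x ∈ Ioi (-1 : ℝ)) : 0 < 1 + x ^ n := by
  rcases le_or_gt 0 x with h | h
  · positivity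
  · have hx1 : |x| < 1 := by
      rw [abs_of_neg h]; linarith [mem_Ioi.mp hx]
    have : |x ^ n| < 1 := by
      rw [abs_pow]; exact pow_lt_one₀ (abs_nonneg x) hx1 (by omega)
    nlinarith [neg_abs_le (x ^ n)]

lemma vAux_contDiffOn {n : ℕ} (hn : 1 ≤ n) (lam : ℝ) :
    ContDiffOn ℝ ∞ (vAux n lam) (Ioi (-1 : ℝ)) := by
  apply ContDiffOn.mul contDiffOn_const
  exact (contDiffOn_const.add ((contDiff_id.pow n).contDiffOn)).rpow_const_of_ne
    (fun x hx => (base_pos hn hx).ne')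

lemma qAux_contDiffOn {n : ℕ} (hn : 1 ≤ n) (lam : ℝ) (h : ℕ) :
    ContDiffOn ℝ ∞ (qAux n lam h) (Ioi (-1 : ℝ)) := by
  induction h with
  | zero => exact contDiffOn_const
  | succ h ih =>
    have hd : ContDiffOn ℝ ∞ (deriv (qAux n lam h)) (Ioi (-1 : ℝ)) :=
      ih.deriv_of_isOpen isOpen_Ioi (by norm_num)
    exact (ih.mul ((vAux_contDiffOn hn lam).sub contDiffOn_const)).add
      (contDiffOn_id.mul hd)

lemma vAux_zero {n : ℕ} (hn : 1 ≤ n) (lam : ℝ) : vAux n lam 0 = lam := by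
  simp [vAux, zero_pow (by omega : n ≠ 0)]

lemma qAux_zero {n : ℕ} (hn : 1 ≤ n) (lam : ℝ) (h : ℕ) :
    qAux n lam h 0 = ∏ j ∈ Finset.range h, (lam - j) := by
  induction h with
  | zero => simp [qAux]
  | succ h ih =>
    rw [Finset.prod_range_succ, ← ih]
    simp [qAux, vAux_zero hn lam]

lemma deriv_rw {n : ℕ} (hn : 1 ≤ n) (lam : ℝ) {x : ℝ} (hx : 0 < x) :
    lam * (x ^ (-(n : ℝ)) + 1) ^ ((n : ℝ)⁻¹) = vAux n lam x / x := by
  have hn0 : n ≠ 0 := by omega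
  have h1 : x ^ (-(n : ℝ)) = (x ^ n)⁻¹ := by
    rw [Real.rpow_neg hx.le, Real.rpow_natCast]
  have h2 : x ^ (-(n : ℝ)) + 1 = (1 + x ^ n) / x ^ n := by
    rw [h1]; field_simp
  rw [h2, Real.div_rpow (by positivity) (by positivity),
    Real.pow_rpow_inv_natCast hx.le hn0, vAux]
  ring

lemma key {n : ℕ} (hn : 1 ≤ n) (lam : ℝ) (f : ℝ → ℝ)
    (hf' : ∀ x ∈ Set.Ioi (0 : ℝ),
      HasDerivAt f (lam * (x ^ (-(n : ℝ)) + 1) ^ ((n : ℝ)⁻¹)) x) (h : ℕ) :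
    ∀ x ∈ Set.Ioi (0 : ℝ), iteratedDeriv h (fun t => Real.exp (f t)) x
      = Real.exp (f x) * qAux n lam h x / x ^ h := by
  induction h with
  | zero => intro x hx; simp [qAux]
  | succ h ih =>
    intro x hx
    have hx0 : (0 : ℝ) < x := hx
    have hmem : Ioi (0 : ℝ) ∈ 𝓝 x := isOpen_Ioi.mem_nhds hx
    have hmem' : Ioi (-1 : ℝ) ∈ 𝓝 x := isOpen_Ioi.mem_nhds (by simp only [mem_Ioi]; linarith)
    have heq : iteratedDeriv h (fun t => Real.exp (f t)) =ᶠ[𝓝 x]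
        fun t => Real.exp (f t) * qAux n lam h t / t ^ h :=
      Filter.eventually_of_mem hmem fun t ht => ih t ht
    rw [iteratedDeriv_succ, heq.deriv_eq]
    -- derivative of the RHS
    have hF : HasDerivAt f (lam * (x ^ (-(n : ℝ)) + 1) ^ ((n : ℝ)⁻¹)) x := hf' x hx
    rw [deriv_rw hn lam hx0] at hF
    have hE : HasDerivAt (fun t => Real.exp (f t)) (Real.exp (f x) * (vAux n lam x / x)) x :=
      hF.exp
    have hq : HasDerivAt (qAux n lam h) (deriv (qAux n lam h) x) x := by
      refine DifferentiableAt.hasDerivAt ?_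
      exact (((qAux_contDiffOn hn lam h).differentiableOn (by simp)) x
        (by simp only [mem_Ioi]; linarith)).differentiableAt hmem'
    have hpow : HasDerivAt (fun t : ℝ => t ^ h) ((h : ℝ) * x ^ (h - 1)) x := hasDerivAt_pow h x
    have hD := (hE.mul hq).div hpow (pow_ne_zero h hx0.ne')
    rw [show (fun t => Real.exp (f t) * qAux n lam h t / t ^ h) = ((fun t => Real.exp (f t)) * qAux n lam h / fun t => t ^ h) from rfl, hD.deriv]
    have hpx : (h : ℝ) * x ^ (h - 1) = (h : ℝ) * x ^ h / x := by
      cases h with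
      | zero => simp
      | succ m => rw [pow_succ]; field_simp; simp
    rw [hpx]
    show _ = Real.exp (f x) * (qAux n lam h x * (vAux n lam x - h)
      + x * deriv (qAux n lam h) x) / x ^ (h + 1)
    simp only [Pi.mul_apply]
    field_simp
    ring

/-- For `n ≥ 1` and a non-integer `λ > 0`, the function
`g_{⌊λ⌋+2}(x) = e^{-f(x)} (d^{⌊λ⌋+2}/dx^{⌊λ⌋+2})(e^f)(x)` associated to the radial potential
`f` of the Ricci-flat metric `λ ω₁` (with `f'(x) = λ (x⁻ⁿ + 1)^{1/n}`) tends to `-∞` as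
`x → 0⁺`. -/
theorem g_floor_lambda_add_two_tendsto_atBot_omega_one
    {n : ℕ} (hn : 1 ≤ n) (lam : ℝ) (hlam : 0 < lam) (hlam' : ¬ ∃ m : ℤ, lam = m)
    (f : ℝ → ℝ) (hf : ContDiffOn ℝ (⊤ : ℕ∞) f (Set.Ioi 0))
    (hf' : ∀ x ∈ Set.Ioi (0 : ℝ),
      HasDerivAt f (lam * (x ^ (-(n : ℝ)) + 1) ^ ((n : ℝ)⁻¹)) x)
    (g : ℕ → ℝ → ℝ)
    (hg : ∀ h x, g h x = Real.exp (-f x) * iteratedDeriv h (fun t => Real.exp (f t)) x) :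
    Filter.Tendsto (g (⌊lam⌋₊ + 2)) (nhdsWithin 0 (Set.Ioi 0)) Filter.atBot := by
  set N := ⌊lam⌋₊ with hN
  set k := N + 2 with hk
  set c := ∏ j ∈ Finset.range k, (lam - j) with hc
  -- c < 0
  have hNlam : (N : ℝ) < lam := by
    rcases lt_or_eq_of_le (Nat.floor_le hlam.le) with h | h
    · exact h
    · exact absurd ⟨(N : ℤ), by exact_mod_cast h.symm⟩ hlam'
  have hlamN : lam < (N : ℝ) + 1 := Nat.lt_floor_add_one lam
  have hcneg : c < 0 := by
    rw [hc, hk, Finset.prod_range_succ]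
    apply mul_neg_of_pos_of_neg
    · apply Finset.prod_pos
      intro j hj
      have hjN : j ≤ N := Nat.lt_succ_iff.mp (Finset.mem_range.mp hj)
      have hj' : (j : ℝ) ≤ N := by exact_mod_cast hjN
      linarith
    · push_cast; linarith
  -- q tends to c
  have hq0 : qAux n lam k 0 = c := qAux_zero hn lam k
  have hqcont : ContinuousAt (qAux n lam k) 0 := by
    have := (qAux_contDiffOn hn lam k).continuousOn
    exact this.continuousAt (isOpen_Ioi.mem_nhds (by norm_num))
  have h1 : Filter.Tendsto (qAux n lam k) (nhdsWithin 0 (Set.Ioi 0)) (nhds c) := by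
    rw [← hq0]
    exact hqcont.continuousWithinAt.tendsto
  -- (x^k)⁻¹ tends to atTop
  have h2 : Filter.Tendsto (fun x : ℝ => (x ^ k)⁻¹) (nhdsWithin 0 (Set.Ioi 0)) Filter.atTop := by
    apply tendsto_inv_nhdsGT_zero.comp
    apply tendsto_nhdsWithin_of_tendsto_nhds_of_eventually_within
    · have := ((continuous_pow k).tendsto (0 : ℝ)).mono_left
        (nhdsWithin_le_nhds (s := Set.Ioi (0:ℝ)))
      simpa using this
    · exact eventually_mem_nhdsWithin.mono fun x hx => mem_Ioi.mpr (pow_pos hx k)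
  have hmain : Filter.Tendsto (fun x => qAux n lam k x * (x ^ k)⁻¹)
      (nhdsWithin 0 (Set.Ioi 0)) Filter.atBot := h1.neg_mul_atTop hcneg h2
  apply hmain.congr'
  refine eventually_mem_nhdsWithin.mono fun x hx => ?_
  have hx0 : (0 : ℝ) < x := hx
  rw [hg, key hn lam f hf' k x hx, Real.exp_neg]
  field_simp
end

section
/- Let n ≥ 1 be an integer. Let f : (0,∞) → ℝ be a smooth function with f'(x) = (x^{−n} + 1)^{1/n} for all x > 0, and define g₄(x) = e^{−f(x)} · (d⁴/dx⁴)(e^{f})(x). Then g₄(1) = 2^{(1−3n)/n} · ( 8·(2^{1/n})³ − 24·(2^{1/n})² + 30·2^{1/n} − 15 + 8n·2^{1/n} − 9n ). -/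
open Real Set Filter

private lemma gfour_base {p : ℝ} {x : ℝ} (hx : 0 < x) (q r : ℝ) :
    HasDerivAt (fun t : ℝ => t ^ q * (t ^ (-p) + 1) ^ r)
      (q * x ^ (q - 1) * (x ^ (-p) + 1) ^ r
        - p * r * x ^ (q - p - 1) * (x ^ (-p) + 1) ^ (r - 1)) x := by
  have hwpos : 0 < x ^ (-p) + 1 := by positivity
  have hw : HasDerivAt (fun t : ℝ => t ^ (-p) + 1) (-p * x ^ (-p - 1)) x := by
    simpa using (Real.hasDerivAt_rpow_const (p := -p) (Or.inl hx.ne')).add_const 1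
  have h1 : HasDerivAt (fun t : ℝ => t ^ q) (q * x ^ (q - 1)) x :=
    Real.hasDerivAt_rpow_const (Or.inl hx.ne')
  have h2 : HasDerivAt (fun t : ℝ => (t ^ (-p) + 1) ^ r)
      ((-p * x ^ (-p - 1)) * r * (x ^ (-p) + 1) ^ (r - 1)) x :=
    hw.rpow_const (Or.inl hwpos.ne')
  have h : HasDerivAt (fun t : ℝ => t ^ q * (t ^ (-p) + 1) ^ r)
      (q * x ^ (q - 1) * (x ^ (-p) + 1) ^ r + x ^ q * ((-p * x ^ (-p - 1)) * r * (x ^ (-p) + 1) ^ (r - 1))) x :=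
    h1.mul h2
  convert h using 1
  rw [show q - p - 1 = q + (-p - 1) by ring, Real.rpow_add hx]
  ring

private lemma gfour_base' {p : ℝ} (c₀ : ℝ) {x : ℝ} (hx : 0 < x) (q r : ℝ) :
    HasDerivAt (fun t : ℝ => c₀ * t ^ q * (t ^ (-p) + 1) ^ r)
      (c₀ * (q * x ^ (q - 1) * (x ^ (-p) + 1) ^ r
        - p * r * x ^ (q - p - 1) * (x ^ (-p) + 1) ^ (r - 1))) x := by
  have h := (gfour_base (p := p) hx q r).const_mul c₀
  have hfun : (fun t : ℝ => c₀ * (t ^ q * (t ^ (-p) + 1) ^ r))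
      = fun t : ℝ => c₀ * t ^ q * (t ^ (-p) + 1) ^ r := by
    funext t; ring
  rwa [hfun] at h

/-- Value at `x = 1` of `g₄(x) = e^{-f(x)} (d⁴/dx⁴)(e^f)(x)` for the radial potential `f` of
the Ricci-flat metric `ω₁` (case `λ = 1`, `f'(x) = (x⁻ⁿ + 1)^{1/n}`). -/
theorem g_four_at_one_omega_one
    {n : ℕ} (hn : 1 ≤ n)
    (f : ℝ → ℝ) (hf : ContDiffOn ℝ (⊤ : ℕ∞) f (Set.Ioi 0))
    (hf' : ∀ x ∈ Set.Ioi (0 : ℝ),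
      HasDerivAt f ((x ^ (-(n : ℝ)) + 1) ^ ((n : ℝ)⁻¹)) x)
    (g₄ : ℝ → ℝ)
    (hg₄ : ∀ x, g₄ x = Real.exp (-f x) * iteratedDeriv 4 (fun t => Real.exp (f t)) x) :
    g₄ 1 = (2 : ℝ) ^ ((1 - 3 * (n : ℝ)) / (n : ℝ)) *
      (8 * ((2 : ℝ) ^ ((n : ℝ)⁻¹)) ^ 3 - 24 * ((2 : ℝ) ^ ((n : ℝ)⁻¹)) ^ 2
        + 30 * (2 : ℝ) ^ ((n : ℝ)⁻¹) - 15 + 8 * (n : ℝ) * (2 : ℝ) ^ ((n : ℝ)⁻¹)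
        - 9 * (n : ℝ)) := by
  have hp1 : (1 : ℝ) ≤ (n : ℝ) := by exact_mod_cast hn
  set p : ℝ := (n : ℝ) with hpdef
  have hp0 : p ≠ 0 := by linarith
  set c : ℝ := p⁻¹ with hcdef
  set F : ℝ → ℝ := fun t => Real.exp (f t) with hF
  set U : ℝ → ℝ := fun x => (x ^ (-p) + 1) ^ c with hU
  set V : ℝ → ℝ := fun x => -(x ^ (-p-1) * (x ^ (-p) + 1) ^ (c-1)) with hV
  set W : ℝ → ℝ := fun x => -((-p-1) * x ^ (-p-1-1) * (x ^ (-p) + 1) ^ (c-1)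
      - p * (c-1) * x ^ (-p-1-p-1) * (x ^ (-p) + 1) ^ (c-1-1)) with hW
  have h1mem : (1:ℝ) ∈ Ioi (0:ℝ) := Set.mem_Ioi.mpr one_pos
  -- derivative of U
  have hUd : ∀ x ∈ Ioi (0:ℝ), HasDerivAt U (V x) x := by
    intro x hx
    rw [Set.mem_Ioi] at hx
    have hwpos : (0:ℝ) < x ^ (-p) + 1 := by positivity
    have hw : HasDerivAt (fun t : ℝ => t ^ (-p) + 1) (-p * x ^ (-p - 1)) x := by
      simpa using (Real.hasDerivAt_rpow_const (p := -p) (Or.inl hx.ne')).add_const 1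
    have h := hw.rpow_const (p := c) (Or.inl hwpos.ne')
    simp only [hU, hV]
    convert h using 1
    rw [hcdef]
    field_simp
  -- derivative of V
  have hVd : ∀ x ∈ Ioi (0:ℝ), HasDerivAt V (W x) x := by
    intro x hx
    rw [Set.mem_Ioi] at hx
    simp only [hV, hW]
    exact (gfour_base hx (-p-1) (c-1)).neg
  -- derivative of W at 1
  have hWd := (((gfour_base' (p := p) (-p-1) one_pos (-p-1-1) (c-1)).sub
      (gfour_base' (p := p) (p*(c-1)) one_pos (-p-1-p-1) (c-1-1))).neg)
  replace hWd : HasDerivAt W _ 1 := hWd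
  -- first derivative of F
  have hFd : ∀ x ∈ Ioi (0:ℝ), HasDerivAt F (U x * F x) x := by
    intro x hx
    have h := (hf' x hx).exp
    rw [← hF] at h
    convert h using 1
    simp only [hU, hF]
    ring
  -- second derivative
  have hFd2 : ∀ x ∈ Ioi (0:ℝ), HasDerivAt (deriv F)
      (V x * F x + U x * (U x * F x)) x := by
    intro x hx
    have h : HasDerivAt (fun y => U y * F y) (V x * F x + U x * (U x * F x)) x :=
      (hUd x hx).mul (hFd x hx)
    apply h.congr_of_eventuallyEq
    filter_upwards [isOpen_Ioi.mem_nhds hx] with y hy using (hFd y hy).deriv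
  -- third derivative
  have hFd3 : ∀ x ∈ Ioi (0:ℝ), HasDerivAt (deriv (deriv F))
      ((W x * F x + V x * (U x * F x))
        + (V x * (U x * F x) + U x * (V x * F x + U x * (U x * F x)))) x := by
    intro x hx
    have h : HasDerivAt (fun y => V y * F y + U y * (U y * F y))
        ((W x * F x + V x * (U x * F x))
          + (V x * (U x * F x) + U x * (V x * F x + U x * (U x * F x)))) x :=
      ((hVd x hx).mul (hFd x hx)).add ((hUd x hx).mul ((hUd x hx).mul (hFd x hx)))
    apply h.congr_of_eventuallyEq
    filter_upwards [isOpen_Ioi.mem_nhds hx] with y hy using (hFd2 y hy).deriv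
  -- fourth derivative at 1
  have hU1 := hUd 1 h1mem
  have hV1 := hVd 1 h1mem
  have hF1 := hFd 1 h1mem
  have hev : deriv (deriv (deriv F)) =ᶠ[nhds (1:ℝ)]
      fun y => (W y * F y + V y * (U y * F y))
        + (V y * (U y * F y) + U y * (V y * F y + U y * (U y * F y))) := by
    filter_upwards [isOpen_Ioi.mem_nhds h1mem] with y hy using (hFd3 y hy).deriv
  have h4 := ((((hWd.mul hF1).add (hV1.mul (hU1.mul hF1))).add
      ((hV1.mul (hU1.mul hF1)).add
        (hU1.mul ((hV1.mul hF1).add (hU1.mul (hU1.mul hF1)))))).congr_of_eventuallyEq hev)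
  have hiter : iteratedDeriv 4 F = deriv (deriv (deriv (deriv F))) := by
    rw [show (4:ℕ) = 3+1 from rfl, iteratedDeriv_succ, show (3:ℕ) = 2+1 from rfl,
      iteratedDeriv_succ, show (2:ℕ) = 1+1 from rfl, iteratedDeriv_succ,
      show (1:ℕ) = 0+1 from rfl, iteratedDeriv_succ, iteratedDeriv_zero]
  have hval := h4.deriv
  -- numeric rpow facts
  have e1 : (2:ℝ) ^ (c-1) = (2:ℝ) ^ c / 2 := by
    rw [Real.rpow_sub (by norm_num), Real.rpow_one]
  have e2 : (2:ℝ) ^ (c-1-1) = (2:ℝ) ^ c / 4 := by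
    rw [Real.rpow_sub (by norm_num), Real.rpow_sub (by norm_num), Real.rpow_one]; ring
  have e3 : (2:ℝ) ^ (c-1-1-1) = (2:ℝ) ^ c / 8 := by
    rw [Real.rpow_sub (by norm_num), Real.rpow_sub (by norm_num),
      Real.rpow_sub (by norm_num), Real.rpow_one]; ring
  have e4 : (2:ℝ) ^ ((1 - 3*p)/p) = (2:ℝ) ^ c / 8 := by
    rw [show (1 - 3*p)/p = c-1-1-1 by rw [hcdef]; field_simp; ring, e3]
  rw [hg₄ 1, hiter, hval]
  simp only [hU, hV, hW, hF, Real.one_rpow, Pi.mul_apply, Pi.add_apply, Pi.pow_apply]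
  simp only [show (1:ℝ) + 1 = (2:ℝ) by norm_num]
  rw [e4, e3, e2, e1, Real.exp_neg]
  rw [hcdef]
  field_simp
  ring
end

section
/- For every integer n ≥ 6 one has 2^{(1−3n)/n} · ( 8·(2^{1/n})³ − 24·(2^{1/n})² + 30·2^{1/n} − 15 + 8n·2^{1/n} − 9n ) < 0. -/
/-- For every integer `n ≥ 6` the quantity
`2^{(1-3n)/n} (8 (2^{1/n})³ - 24 (2^{1/n})² + 30 · 2^{1/n} - 15 + 8n · 2^{1/n} - 9n)`
(which equals `g₄(1)` for the Ricci-flat radial metric `ω₁` on `ℂⁿ \ {0}`) is negative. -/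
theorem g_four_at_one_neg_of_six_le
    {n : ℕ} (hn : 6 ≤ n) :
    (2 : ℝ) ^ ((1 - 3 * (n : ℝ)) / (n : ℝ)) *
      (8 * ((2 : ℝ) ^ ((n : ℝ)⁻¹)) ^ 3 - 24 * ((2 : ℝ) ^ ((n : ℝ)⁻¹)) ^ 2
        + 30 * (2 : ℝ) ^ ((n : ℝ)⁻¹) - 15 + 8 * (n : ℝ) * (2 : ℝ) ^ ((n : ℝ)⁻¹)
        - 9 * (n : ℝ)) < 0 := by
  have hn0 : (0:ℝ) < (n:ℝ) := by positivity
  have hnne : ((n:ℝ)) ≠ 0 := ne_of_gt hn0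
  set t : ℝ := (2 : ℝ) ^ ((n : ℝ)⁻¹) with ht
  have ht1 : (1:ℝ) ≤ t := Real.one_le_rpow (by norm_num) (by positivity)
  -- upper bound: t ≤ 449/400 since (449/400)^n ≥ (449/400)^6 ≥ 2
  have h2 : (2:ℝ) ≤ ((449:ℝ)/400) ^ (n:ℕ) := by
    calc (2:ℝ) ≤ ((449:ℝ)/400) ^ (6:ℕ) := by norm_num
    _ ≤ ((449:ℝ)/400) ^ (n:ℕ) := by
        apply pow_le_pow_right₀ (by norm_num) hn
  have ht2 : t ≤ 449/400 := by
    have h3 : t ≤ (((449:ℝ)/400) ^ (n:ℕ)) ^ ((n:ℝ)⁻¹) :=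
      Real.rpow_le_rpow (by norm_num) h2 (by positivity)
    have h4 : (((449:ℝ)/400) ^ (n:ℕ)) ^ ((n:ℝ)⁻¹) = 449/400 := by
      rw [← Real.rpow_natCast ((449:ℝ)/400) n, ← Real.rpow_mul (by norm_num),
        mul_inv_cancel₀ hnne, Real.rpow_one]
    rwa [h4] at h3
  have hN : (6:ℝ) ≤ (n:ℝ) := by exact_mod_cast hn
  apply mul_neg_of_pos_of_neg (Real.rpow_pos_of_pos (by norm_num) _)
  nlinarith [mul_nonneg (sub_nonneg.2 ht1) (sub_nonneg.2 ht2),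
    mul_nonneg (mul_nonneg (sub_nonneg.2 ht1) (sub_nonneg.2 ht2)) (sub_nonneg.2 ht1),
    mul_nonneg (sub_nonneg.2 hN) (sub_nonneg.2 ht2),
    mul_nonneg (mul_nonneg (sub_nonneg.2 ht1) (sub_nonneg.2 ht1)) (sub_nonneg.2 ht2)]
end

section
/- Let f : (0,∞) → ℝ be a smooth function with f'(x) = (x^{−2} + 1)^{1/2} for all x > 0, and define g₇(x) = e^{−f(x)} · (d⁷/dx⁷)(e^{f})(x). Then g₇(3/4) = −12294367331/2373046875; in particular g₇(3/4) < 0. -/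
set_option maxHeartbeats 2000000

open Set Filter

private lemma EH_ratD {p : ℝ → ℝ} {dp : ℝ} (k m : ℕ) {x : ℝ} (hx : 0 < x)
    (hp : HasDerivAt p dp x) :
    HasDerivAt (fun y => p y / (y ^ k * (1 + y ^ 2) ^ m))
      ((dp * (x ^ k * (1 + x ^ 2) ^ m) -
        p x * ((k : ℝ) * x ^ (k - 1) * (1 + x ^ 2) ^ m +
          x ^ k * ((m : ℝ) * (1 + x ^ 2) ^ (m - 1) * (2 * x)))) /
        (x ^ k * (1 + x ^ 2) ^ m) ^ 2) x := by
  have h1 : HasDerivAt (fun y : ℝ => 1 + y ^ 2) (2 * x) x := by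
    simpa using (hasDerivAt_pow 2 x).const_add 1
  have hq := (hasDerivAt_pow k x).mul (h1.pow m)
  exact hp.div hq (by positivity)

private lemma EH_step (f : ℝ → ℝ)
    (hf' : ∀ x ∈ Set.Ioi (0 : ℝ),
      HasDerivAt f ((x ^ (-(2 : ℝ)) + 1) ^ ((2 : ℝ)⁻¹)) x)
    (A B : ℝ → ℝ) (a b c d : ℝ) (x : ℝ) (hx : x ∈ Set.Ioi (0 : ℝ))
    (hA : HasDerivAt A a x) (hB : HasDerivAt B b x)
    (hc : c = a + B x * (1 + x ^ 2) / x)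
    (hd : d = b + B x * x / (1 + x ^ 2) + A x / x) :
    HasDerivAt (fun y => (A y + B y * Real.sqrt (1 + y ^ 2)) * Real.exp (f y))
      ((c + d * Real.sqrt (1 + x ^ 2)) * Real.exp (f x)) x := by
  have hx0 : (0 : ℝ) < x := hx
  have h1x : (0 : ℝ) < 1 + x ^ 2 := by positivity
  have h1 : HasDerivAt (fun y : ℝ => 1 + y ^ 2) (2 * x) x := by
    simpa using (hasDerivAt_pow 2 x).const_add 1
  have hsq : HasDerivAt (fun y : ℝ => Real.sqrt (1 + y ^ 2))
      (1 / (2 * Real.sqrt (1 + x ^ 2)) * (2 * x)) x :=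
    (Real.hasDerivAt_sqrt h1x.ne').comp x h1
  have key : ((x : ℝ) ^ (-(2 : ℝ)) + 1) ^ ((2 : ℝ)⁻¹) = Real.sqrt (1 + x ^ 2) / x := by
    have h2 : (x : ℝ) ^ (-(2 : ℝ)) = (x ^ 2)⁻¹ := by
      rw [show (-(2 : ℝ)) = -((2 : ℕ) : ℝ) by norm_num, Real.rpow_neg hx0.le,
        Real.rpow_natCast]
    rw [h2, show ((x ^ 2)⁻¹ + 1 : ℝ) = (1 + x ^ 2) / x ^ 2 by field_simp,
      show ((2 : ℝ)⁻¹) = (1 / 2 : ℝ) by norm_num, ← Real.sqrt_eq_rpow,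
      Real.sqrt_div (by positivity) (x ^ 2), Real.sqrt_sq hx0.le]
  have hE : HasDerivAt (fun t => Real.exp (f t))
      (Real.exp (f x) * (Real.sqrt (1 + x ^ 2) / x)) x := by
    have h := (hf' x hx).exp
    rwa [key] at h
  have hF := (hA.add (hB.mul hsq)).mul hE
  convert hF using 1
  case e'_4 => rfl
  case e'_5 => rfl
  case e'_8 => rfl
  simp only [Pi.add_apply, Pi.mul_apply]
  have hs2 : Real.sqrt (1 + x ^ 2) ^ 2 = 1 + x ^ 2 := Real.sq_sqrt h1x.le
  have hs0 : Real.sqrt (1 + x ^ 2) ≠ 0 := by positivity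
  set s := Real.sqrt (1 + x ^ 2) with hs
  rw [hc, hd, ← hs2]
  field_simp
  ring

private lemma EH_chain {E G G2 : ℝ → ℝ} {k : ℕ}
    (hk : ∀ x ∈ Set.Ioi (0 : ℝ), iteratedDeriv k E x = G x)
    (hG : ∀ x ∈ Set.Ioi (0 : ℝ), HasDerivAt G (G2 x) x) :
    ∀ x ∈ Set.Ioi (0 : ℝ), iteratedDeriv (k + 1) E x = G2 x := by
  intro x hx
  have hev : iteratedDeriv k E =ᶠ[nhds x] G :=
    Filter.eventuallyEq_of_mem (isOpen_Ioi.mem_nhds hx) (fun y hy => hk y hy)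
  have h2 : HasDerivAt (iteratedDeriv k E) (G2 x) x :=
    (hG x hx).congr_of_eventuallyEq hev
  rw [iteratedDeriv_succ]
  exact h2.deriv

/-- Value at `x = 3/4` of `g₇(x) = e^{-f(x)} (d⁷/dx⁷)(e^f)(x)` for the radial potential `f` of
the Eguchi–Hanson metric (the Ricci-flat radial metric `ω₁` on `ℂ² \ {0}`, `n = 2`, `λ = 1`,
`f'(x) = (x⁻² + 1)^{1/2}`): it equals `-12294367331/2373046875`, in particular it is
negative. -/
theorem g_seven_at_three_quarters_eguchi_hanson
    (f : ℝ → ℝ) (hf : ContDiffOn ℝ (⊤ : ℕ∞) f (Set.Ioi 0))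
    (hf' : ∀ x ∈ Set.Ioi (0 : ℝ),
      HasDerivAt f ((x ^ (-(2 : ℝ)) + 1) ^ ((2 : ℝ)⁻¹)) x)
    (g₇ : ℝ → ℝ)
    (hg₇ : ∀ x, g₇ x = Real.exp (-f x) * iteratedDeriv 7 (fun t => Real.exp (f t)) x) :
    g₇ (3 / 4) = -(12294367331 / 2373046875 : ℝ) ∧ g₇ (3 / 4) < 0 := by
  have H0 : ∀ x ∈ Set.Ioi (0 : ℝ), iteratedDeriv 0 (fun t => Real.exp (f t)) x =
      ((1 : ℝ) + (0 : ℝ) * Real.sqrt (1 + x ^ 2)) * Real.exp (f x) := by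
    intro x hx; simp
  have S0 : ∀ x ∈ Set.Ioi (0 : ℝ), HasDerivAt
      (fun y : ℝ => ((1 : ℝ) + (0 : ℝ) * Real.sqrt (1 + y ^ 2)) * Real.exp (f y))
      ((fun y : ℝ => ((0 : ℝ) / (y ^ 1 * (1 + y ^ 2) ^ 0) + ((1 : ℝ) / (y ^ 1 * (1 + y ^ 2) ^ 0)) * Real.sqrt (1 + y ^ 2)) * Real.exp (f y)) x) x := by
    intro x hx
    have hx0 : (0 : ℝ) < x := hx
    have hxne : x ≠ 0 := hx0.ne'
    have h1x : (1 : ℝ) + x ^ 2 ≠ 0 := by positivity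
    refine EH_step f hf' _ _ _ _ _ _ x hx (hasDerivAt_const x (1 : ℝ)) (hasDerivAt_const x (0 : ℝ)) ?_ ?_
    · norm_num
      all_goals try field_simp
      all_goals try ring
      all_goals try exact Or.inl (by ring)
      all_goals try tauto
    · norm_num
      all_goals try field_simp
      all_goals try ring
      all_goals try exact Or.inl (by ring)
      all_goals try tauto
  have H1 := EH_chain H0 S0
  have S1 : ∀ x ∈ Set.Ioi (0 : ℝ), HasDerivAt
      (fun y : ℝ => ((0 : ℝ) / (y ^ 1 * (1 + y ^ 2) ^ 0) + ((1 : ℝ) / (y ^ 1 * (1 + y ^ 2) ^ 0)) * Real.sqrt (1 + y ^ 2)) * Real.exp (f y))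
      ((fun y : ℝ => ((1 + (1 * y ^ 2)) / (y ^ 2 * (1 + y ^ 2) ^ 0) + (((-1) : ℝ) / (y ^ 2 * (1 + y ^ 2) ^ 1)) * Real.sqrt (1 + y ^ 2)) * Real.exp (f y)) x) x := by
    intro x hx
    have hx0 : (0 : ℝ) < x := hx
    have hxne : x ≠ 0 := hx0.ne'
    have h1x : (1 : ℝ) + x ^ 2 ≠ 0 := by positivity
    have hpA : HasDerivAt (fun y : ℝ => (0 : ℝ)) _ x := hasDerivAt_const x (0 : ℝ)
    have hpB : HasDerivAt (fun y : ℝ => (1 : ℝ)) _ x := hasDerivAt_const x (1 : ℝ)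
    refine EH_step f hf' _ _ _ _ _ _ x hx (EH_ratD 1 0 hx0 hpA) (EH_ratD 1 0 hx0 hpB) ?_ ?_
    · norm_num
      all_goals try field_simp
      all_goals try ring
      all_goals try exact Or.inl (by ring)
      all_goals try tauto
    · norm_num
      all_goals try field_simp
      all_goals try ring
      all_goals try exact Or.inl (by ring)
      all_goals try tauto
  have H2 := EH_chain H1 S1
  have S2 : ∀ x ∈ Set.Ioi (0 : ℝ), HasDerivAt
      (fun y : ℝ => ((1 + (1 * y ^ 2)) / (y ^ 2 * (1 + y ^ 2) ^ 0) + (((-1) : ℝ) / (y ^ 2 * (1 + y ^ 2) ^ 1)) * Real.sqrt (1 + y ^ 2)) * Real.exp (f y))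
      ((fun y : ℝ => (((-3) : ℝ) / (y ^ 3 * (1 + y ^ 2) ^ 0) + ((3 + (6 * y ^ 2 + 3 * y ^ 4 + 1 * y ^ 6)) / (y ^ 3 * (1 + y ^ 2) ^ 2)) * Real.sqrt (1 + y ^ 2)) * Real.exp (f y)) x) x := by
    intro x hx
    have hx0 : (0 : ℝ) < x := hx
    have hxne : x ≠ 0 := hx0.ne'
    have h1x : (1 : ℝ) + x ^ 2 ≠ 0 := by positivity
    have hpA : HasDerivAt (fun y : ℝ => (1 + (1 * y ^ 2))) _ x := (((hasDerivAt_pow 2 x).const_mul (1 : ℝ)).const_add (1 : ℝ))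
    have hpB : HasDerivAt (fun y : ℝ => ((-1) : ℝ)) _ x := hasDerivAt_const x (-1 : ℝ)
    refine EH_step f hf' _ _ _ _ _ _ x hx (EH_ratD 2 0 hx0 hpA) (EH_ratD 2 1 hx0 hpB) ?_ ?_
    · norm_num
      all_goals try field_simp
      all_goals try ring
      all_goals try exact Or.inl (by ring)
      all_goals try tauto
    · norm_num
      all_goals try field_simp
      all_goals try ring
      all_goals try exact Or.inl (by ring)
      all_goals try tauto
  have H3 := EH_chain H2 S2
  have S3 : ∀ x ∈ Set.Ioi (0 : ℝ), HasDerivAt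
      (fun y : ℝ => (((-3) : ℝ) / (y ^ 3 * (1 + y ^ 2) ^ 0) + ((3 + (6 * y ^ 2 + 3 * y ^ 4 + 1 * y ^ 6)) / (y ^ 3 * (1 + y ^ 2) ^ 2)) * Real.sqrt (1 + y ^ 2)) * Real.exp (f y))
      ((fun y : ℝ => ((12 + (15 * y ^ 2 + 3 * y ^ 4 + 1 * y ^ 6)) / (y ^ 4 * (1 + y ^ 2) ^ 1) + (((-12) + ((-33) * y ^ 2 + (-30) * y ^ 4 + (-6) * y ^ 6)) / (y ^ 4 * (1 + y ^ 2) ^ 3)) * Real.sqrt (1 + y ^ 2)) * Real.exp (f y)) x) x := by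
    intro x hx
    have hx0 : (0 : ℝ) < x := hx
    have hxne : x ≠ 0 := hx0.ne'
    have h1x : (1 : ℝ) + x ^ 2 ≠ 0 := by positivity
    have hpA : HasDerivAt (fun y : ℝ => ((-3) : ℝ)) _ x := hasDerivAt_const x (-3 : ℝ)
    have hpB : HasDerivAt (fun y : ℝ => (3 + (6 * y ^ 2 + 3 * y ^ 4 + 1 * y ^ 6))) _ x := (((((hasDerivAt_pow 2 x).const_mul (6 : ℝ)).add ((hasDerivAt_pow 4 x).const_mul (3 : ℝ))).add ((hasDerivAt_pow 6 x).const_mul (1 : ℝ))).const_add (3 : ℝ))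
    refine EH_step f hf' _ _ _ _ _ _ x hx (EH_ratD 3 0 hx0 hpA) (EH_ratD 3 2 hx0 hpB) ?_ ?_
    · norm_num
      all_goals try field_simp
      all_goals try ring
      all_goals try exact Or.inl (by ring)
      all_goals try tauto
    · norm_num
      all_goals try field_simp
      all_goals try ring
      all_goals try exact Or.inl (by ring)
      all_goals try tauto
  have H4 := EH_chain H3 S3
  have S4 : ∀ x ∈ Set.Ioi (0 : ℝ), HasDerivAt
      (fun y : ℝ => ((12 + (15 * y ^ 2 + 3 * y ^ 4 + 1 * y ^ 6)) / (y ^ 4 * (1 + y ^ 2) ^ 1) + (((-12) + ((-33) * y ^ 2 + (-30) * y ^ 4 + (-6) * y ^ 6)) / (y ^ 4 * (1 + y ^ 2) ^ 3)) * Real.sqrt (1 + y ^ 2)) * Real.exp (f y))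
      ((fun y : ℝ => (((-60) + ((-135) * y ^ 2 + (-90) * y ^ 4 + (-10) * y ^ 6)) / (y ^ 5 * (1 + y ^ 2) ^ 2) + ((60 + (225 * y ^ 2 + 315 * y ^ 4 + 205 * y ^ 6 + 45 * y ^ 8 + 6 * y ^ 10 + 1 * y ^ 12)) / (y ^ 5 * (1 + y ^ 2) ^ 4)) * Real.sqrt (1 + y ^ 2)) * Real.exp (f y)) x) x := by
    intro x hx
    have hx0 : (0 : ℝ) < x := hx
    have hxne : x ≠ 0 := hx0.ne'
    have h1x : (1 : ℝ) + x ^ 2 ≠ 0 := by positivity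
    have hpA : HasDerivAt (fun y : ℝ => (12 + (15 * y ^ 2 + 3 * y ^ 4 + 1 * y ^ 6))) _ x := (((((hasDerivAt_pow 2 x).const_mul (15 : ℝ)).add ((hasDerivAt_pow 4 x).const_mul (3 : ℝ))).add ((hasDerivAt_pow 6 x).const_mul (1 : ℝ))).const_add (12 : ℝ))
    have hpB : HasDerivAt (fun y : ℝ => ((-12) + ((-33) * y ^ 2 + (-30) * y ^ 4 + (-6) * y ^ 6))) _ x := (((((hasDerivAt_pow 2 x).const_mul (-33 : ℝ)).add ((hasDerivAt_pow 4 x).const_mul (-30 : ℝ))).add ((hasDerivAt_pow 6 x).const_mul (-6 : ℝ))).const_add (-12 : ℝ))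
    refine EH_step f hf' _ _ _ _ _ _ x hx (EH_ratD 4 1 hx0 hpA) (EH_ratD 4 3 hx0 hpB) ?_ ?_
    · norm_num
      all_goals try field_simp
      all_goals try ring
      all_goals try exact Or.inl (by ring)
      all_goals try tauto
    · norm_num
      all_goals try field_simp
      all_goals try ring
      all_goals try exact Or.inl (by ring)
      all_goals try tauto
  have H5 := EH_chain H4 S4
  have S5 : ∀ x ∈ Set.Ioi (0 : ℝ), HasDerivAt
      (fun y : ℝ => (((-60) + ((-135) * y ^ 2 + (-90) * y ^ 4 + (-10) * y ^ 6)) / (y ^ 5 * (1 + y ^ 2) ^ 2) + ((60 + (225 * y ^ 2 + 315 * y ^ 4 + 205 * y ^ 6 + 45 * y ^ 8 + 6 * y ^ 10 + 1 * y ^ 12)) / (y ^ 5 * (1 + y ^ 2) ^ 4)) * Real.sqrt (1 + y ^ 2)) * Real.exp (f y))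
      ((fun y : ℝ => ((360 + (1170 * y ^ 2 + 1350 * y ^ 4 + 645 * y ^ 6 + 75 * y ^ 8 + 6 * y ^ 10 + 1 * y ^ 12)) / (y ^ 6 * (1 + y ^ 2) ^ 3) + (((-360) + ((-1710) * y ^ 2 + (-3240) * y ^ 4 + (-3060) * y ^ 6 + (-1530) * y ^ 8 + (-270) * y ^ 10 + (-15) * y ^ 12)) / (y ^ 6 * (1 + y ^ 2) ^ 5)) * Real.sqrt (1 + y ^ 2)) * Real.exp (f y)) x) x := by
    intro x hx
    have hx0 : (0 : ℝ) < x := hx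
    have hxne : x ≠ 0 := hx0.ne'
    have h1x : (1 : ℝ) + x ^ 2 ≠ 0 := by positivity
    have hpA : HasDerivAt (fun y : ℝ => ((-60) + ((-135) * y ^ 2 + (-90) * y ^ 4 + (-10) * y ^ 6))) _ x := (((((hasDerivAt_pow 2 x).const_mul (-135 : ℝ)).add ((hasDerivAt_pow 4 x).const_mul (-90 : ℝ))).add ((hasDerivAt_pow 6 x).const_mul (-10 : ℝ))).const_add (-60 : ℝ))
    have hpB : HasDerivAt (fun y : ℝ => (60 + (225 * y ^ 2 + 315 * y ^ 4 + 205 * y ^ 6 + 45 * y ^ 8 + 6 * y ^ 10 + 1 * y ^ 12))) _ x := ((((((((hasDerivAt_pow 2 x).const_mul (225 : ℝ)).add ((hasDerivAt_pow 4 x).const_mul (315 : ℝ))).add ((hasDerivAt_pow 6 x).const_mul (205 : ℝ))).add ((hasDerivAt_pow 8 x).const_mul (45 : ℝ))).add ((hasDerivAt_pow 10 x).const_mul (6 : ℝ))).add ((hasDerivAt_pow 12 x).const_mul (1 : ℝ))).const_add (60 : ℝ))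
    refine EH_step f hf' _ _ _ _ _ _ x hx (EH_ratD 5 2 hx0 hpA) (EH_ratD 5 4 hx0 hpB) ?_ ?_
    · norm_num
      all_goals try field_simp
      all_goals try ring
      all_goals try exact Or.inl (by ring)
      all_goals try tauto
    · norm_num
      all_goals try field_simp
      all_goals try ring
      all_goals try exact Or.inl (by ring)
      all_goals try tauto
  have H6 := EH_chain H5 S5
  have S6 : ∀ x ∈ Set.Ioi (0 : ℝ), HasDerivAt
      (fun y : ℝ => ((360 + (1170 * y ^ 2 + 1350 * y ^ 4 + 645 * y ^ 6 + 75 * y ^ 8 + 6 * y ^ 10 + 1 * y ^ 12)) / (y ^ 6 * (1 + y ^ 2) ^ 3) + (((-360) + ((-1710) * y ^ 2 + (-3240) * y ^ 4 + (-3060) * y ^ 6 + (-1530) * y ^ 8 + (-270) * y ^ 10 + (-15) * y ^ 12)) / (y ^ 6 * (1 + y ^ 2) ^ 5)) * Real.sqrt (1 + y ^ 2)) * Real.exp (f y))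
      ((fun y : ℝ => (((-2520) + ((-10710) * y ^ 2 + (-17640) * y ^ 4 + (-13860) * y ^ 6 + (-5250) * y ^ 8 + (-546) * y ^ 10 + (-21) * y ^ 12)) / (y ^ 7 * (1 + y ^ 2) ^ 4) + ((2520 + (14490 * y ^ 2 + 34650 * y ^ 4 + 44205 * y ^ 6 + 31710 * y ^ 8 + 13146 * y ^ 10 + 2149 * y ^ 12 + 141 * y ^ 14 + 9 * y ^ 16 + 1 * y ^ 18)) / (y ^ 7 * (1 + y ^ 2) ^ 6)) * Real.sqrt (1 + y ^ 2)) * Real.exp (f y)) x) x := by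
    intro x hx
    have hx0 : (0 : ℝ) < x := hx
    have hxne : x ≠ 0 := hx0.ne'
    have h1x : (1 : ℝ) + x ^ 2 ≠ 0 := by positivity
    have hpA : HasDerivAt (fun y : ℝ => (360 + (1170 * y ^ 2 + 1350 * y ^ 4 + 645 * y ^ 6 + 75 * y ^ 8 + 6 * y ^ 10 + 1 * y ^ 12))) _ x := ((((((((hasDerivAt_pow 2 x).const_mul (1170 : ℝ)).add ((hasDerivAt_pow 4 x).const_mul (1350 : ℝ))).add ((hasDerivAt_pow 6 x).const_mul (645 : ℝ))).add ((hasDerivAt_pow 8 x).const_mul (75 : ℝ))).add ((hasDerivAt_pow 10 x).const_mul (6 : ℝ))).add ((hasDerivAt_pow 12 x).const_mul (1 : ℝ))).const_add (360 : ℝ))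
    have hpB : HasDerivAt (fun y : ℝ => ((-360) + ((-1710) * y ^ 2 + (-3240) * y ^ 4 + (-3060) * y ^ 6 + (-1530) * y ^ 8 + (-270) * y ^ 10 + (-15) * y ^ 12))) _ x := ((((((((hasDerivAt_pow 2 x).const_mul (-1710 : ℝ)).add ((hasDerivAt_pow 4 x).const_mul (-3240 : ℝ))).add ((hasDerivAt_pow 6 x).const_mul (-3060 : ℝ))).add ((hasDerivAt_pow 8 x).const_mul (-1530 : ℝ))).add ((hasDerivAt_pow 10 x).const_mul (-270 : ℝ))).add ((hasDerivAt_pow 12 x).const_mul (-15 : ℝ))).const_add (-360 : ℝ))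
    refine EH_step f hf' _ _ _ _ _ _ x hx (EH_ratD 6 3 hx0 hpA) (EH_ratD 6 5 hx0 hpB) ?_ ?_
    · norm_num
      all_goals try field_simp
      all_goals try ring
      all_goals try exact Or.inl (by ring)
      all_goals try tauto
    · norm_num
      all_goals try field_simp
      all_goals try ring
      all_goals try exact Or.inl (by ring)
      all_goals try tauto
  have H7 := EH_chain H6 S6
  have h34 : (3 / 4 : ℝ) ∈ Set.Ioi (0 : ℝ) := by norm_num
  have h7 := H7 (3 / 4) h34
  have hsq : Real.sqrt (1 + (3 / 4 : ℝ) ^ 2) = 5 / 4 := by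
    rw [show (1 + (3 / 4 : ℝ) ^ 2) = (5 / 4) ^ 2 by norm_num]
    exact Real.sqrt_sq (by norm_num)
  have hval : g₇ (3 / 4) = -(12294367331 / 2373046875 : ℝ) := by
    rw [hg₇, h7, hsq]
    rw [show ∀ a b : ℝ, Real.exp (-a) * (b * Real.exp a) = b * (Real.exp (-a) * Real.exp a)
      from fun a b => by ring, ← Real.exp_add, neg_add_cancel, Real.exp_zero, mul_one]
    norm_num
  exact ⟨hval, by rw [hval]; norm_num⟩
end

section
/- Let U = ℂ² \ {0} and let Φ_S : U → ℝ be the Simanca potential Φ_S(z) = |z|² + log(|z|²), where |z|² = |z₁|² + |z₂|². Then Φ_S is projectively induced on U: there exist holomorphic functions h_j : U → ℂ (j ∈ ℕ) — namely an enumeration of the monomials √((j+k)/(j!·k!))·z₁^j·z₂^k for (j,k) ∈ ℕ², (j,k) ≠ (0,0) — such that Σ_{j∈ℕ} |h_j(z)|² = exp(Φ_S(z)) for every z ∈ U. -/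
/-!
Writing `x = |z₁|²`, `y = |z₂|²`, one has `exp Φ_S(z) = (x + y) e^{x+y}`, and multiplying the
series `x e^x = Σ i xⁱ/i!` and `e^y = Σ yᵏ/k!` (and symmetrically) gives
`(x + y) e^{x+y} = Σ_{(i,k)} (i+k)/(i! k!) · xⁱ yᵏ`, whose terms are exactly the squared moduli
of the monomials `√((i+k)/(i! k!)) z₁ⁱ z₂ᵏ`. The `(0,0)` term vanishes, so the sum may be taken
over the nonzero multi-indices, which are enumerated by `ℕ`.
-/

open Real Nat

lemma Real.hasSum_pow_div_factorial (x : ℝ) :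
    HasSum (fun n : ℕ => x ^ n / (n ! : ℝ)) (exp x) := by
  rw [exp_eq_exp_ℝ]
  exact NormedSpace.expSeries_div_hasSum_exp x

lemma Real.hasSum_nat_mul_pow_div_factorial (x : ℝ) :
    HasSum (fun n : ℕ => n * x ^ n / n !) (x * exp x) := by
  refine (hasSum_nat_add_iff' 1).mp ?_
  refine (((hasSum_pow_div_factorial x).mul_left x).congr_fun fun n => ?_).trans_eq (by simp)
  rw [factorial_succ]
  push_cast
  field_simp
  ring

lemma Real.summable_norm_pow_div_factorial (x : ℝ) :
    Summable (fun n : ℕ => ‖x ^ n / (n ! : ℝ)‖) := by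
  simpa [abs_div] using summable_pow_div_factorial |x|

lemma Real.summable_norm_nat_mul_pow_div_factorial (x : ℝ) :
    Summable (fun n : ℕ => ‖n * x ^ n / (n ! : ℝ)‖) := by
  simpa [abs_div, abs_mul] using (hasSum_nat_mul_pow_div_factorial |x|).summable

/-- The coefficient of `xⁱ yᵏ` in the Taylor expansion of `(x + y) e^{x+y}`. -/
noncomputable def simancaCoeff (p : ℕ × ℕ) : ℝ :=
  ((p.1 + p.2 : ℕ) : ℝ) / (p.1 ! * p.2 !)

lemma simancaCoeff_nonneg (p : ℕ × ℕ) : 0 ≤ simancaCoeff p := by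
  unfold simancaCoeff; positivity

@[simp]
lemma simancaCoeff_zero : simancaCoeff (0, 0) = 0 := by
  simp [simancaCoeff]

lemma simancaCoeff_mul_pow (p : ℕ × ℕ) (x y : ℝ) :
    simancaCoeff p * x ^ p.1 * y ^ p.2 =
      p.1 * x ^ p.1 / p.1 ! * (y ^ p.2 / p.2 !) + x ^ p.1 / p.1 ! * (p.2 * y ^ p.2 / p.2 !) := by
  simp only [simancaCoeff]
  push_cast
  field_simp

lemma hasSum_simancaCoeff_mul_pow (x y : ℝ) :
    HasSum (fun p : ℕ × ℕ => simancaCoeff p * x ^ p.1 * y ^ p.2) ((x + y) * exp (x + y)) := by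
  have hx := hasSum_nat_mul_pow_div_factorial x
  have hy := hasSum_nat_mul_pow_div_factorial y
  have ex := hasSum_pow_div_factorial x
  have ey := hasSum_pow_div_factorial y
  have s1 := summable_mul_of_summable_norm (R := ℝ)
    (summable_norm_nat_mul_pow_div_factorial x) (summable_norm_pow_div_factorial y)
  have s2 := summable_mul_of_summable_norm (R := ℝ)
    (summable_norm_pow_div_factorial x) (summable_norm_nat_mul_pow_div_factorial y)
  have hxy := (hx.mul ey s1).add (ex.mul hy s2)
  rw [show (x + y) * exp (x + y) = x * exp x * exp y + exp x * (y * exp y) by rw [exp_add]; ring]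
  exact hxy.congr_fun fun p => simancaCoeff_mul_pow p x y

noncomputable def simancaMonomial (p : ℕ × ℕ) (z : EuclideanSpace ℂ (Fin 2)) : ℂ :=
  (√(simancaCoeff p) : ℂ) * z 0 ^ p.1 * z 1 ^ p.2

lemma differentiable_simancaMonomial (p : ℕ × ℕ) : Differentiable ℂ (simancaMonomial p) := by
  have hproj (i : Fin 2) : Differentiable ℂ (fun z : EuclideanSpace ℂ (Fin 2) => z i) :=
    (EuclideanSpace.proj (𝕜 := ℂ) i).differentiable
  exact ((differentiable_const _).mul ((hproj 0).pow _)).mul ((hproj 1).pow _)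

lemma norm_simancaMonomial_sq (p : ℕ × ℕ) (z : EuclideanSpace ℂ (Fin 2)) :
    ‖simancaMonomial p z‖ ^ 2 = simancaCoeff p * (‖z 0‖ ^ 2) ^ p.1 * (‖z 1‖ ^ 2) ^ p.2 := by
  rw [simancaMonomial, norm_mul, norm_mul, norm_pow, norm_pow, Complex.norm_real,
    norm_of_nonneg (sqrt_nonneg _), mul_pow, mul_pow, sq_sqrt (simancaCoeff_nonneg p)]
  ring

lemma hasSum_norm_simancaMonomial_sq (z : EuclideanSpace ℂ (Fin 2)) :
    HasSum (fun p => ‖simancaMonomial p z‖ ^ 2) (‖z‖ ^ 2 * exp (‖z‖ ^ 2)) := by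
  simp only [norm_simancaMonomial_sq, EuclideanSpace.norm_sq_eq, Fin.sum_univ_two]
  exact hasSum_simancaCoeff_mul_pow _ _

lemma exp_add_log_eq_mul_exp {t : ℝ} (ht : 0 < t) : exp (t + log t) = t * exp t := by
  rw [exp_add, exp_log ht, mul_comm]

instance : Infinite {q : ℕ × ℕ // q ≠ (0, 0)} :=
  (Set.finite_singleton (0, 0)).infinite_compl.to_subtype

/-- The Simanca potential `Φ_S(z) = |z|² + log |z|²` on `ℂ² \ {0}` is projectively induced:
there is a sequence of holomorphic functions `h_j` — an enumeration of the monomials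
`√((j+k)/(j! k!)) z₁ʲ z₂ᵏ`, `(j,k) ≠ (0,0)` — with `Σ_j |h_j(z)|² = exp (Φ_S z)` on
`ℂ² \ {0}`. -/
theorem simanca_projectively_induced :
    ∃ (e : ℕ ≃ {q : ℕ × ℕ // q ≠ (0, 0)}) (h : ℕ → EuclideanSpace ℂ (Fin 2) → ℂ),
      (∀ j z, h j z =
        (Real.sqrt ((((e j).1.1 + (e j).1.2 : ℕ) : ℝ) /
          (((e j).1.1.factorial : ℝ) * ((e j).1.2.factorial : ℝ))) : ℝ)
          * z 0 ^ (e j).1.1 * z 1 ^ (e j).1.2) ∧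
      (∀ j, DifferentiableOn ℂ (h j) ({0}ᶜ : Set (EuclideanSpace ℂ (Fin 2)))) ∧
      ∀ z ∈ ({0}ᶜ : Set (EuclideanSpace ℂ (Fin 2))),
        HasSum (fun j => ‖h j z‖ ^ 2)
          (Real.exp (‖z‖ ^ 2 + Real.log (‖z‖ ^ 2))) := by
  let := Denumerable.ofEncodableOfInfinite {q : ℕ × ℕ // q ≠ (0, 0)}
  let e := (Denumerable.eqv {q : ℕ × ℕ // q ≠ (0, 0)}).symm
  refine ⟨e, fun j => simancaMonomial (e j).1, fun j z => rfl,
    fun j => (differentiable_simancaMonomial _).differentiableOn, fun z hz => ?_⟩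
  have hsupp : Function.support (fun p => ‖simancaMonomial p z‖ ^ 2) ⊆ {(0, 0)}ᶜ := by
    rintro p hp rfl
    simp [norm_simancaMonomial_sq] at hp
  rw [exp_add_log_eq_mul_exp (by simpa [sq_pos_iff] using hz)]
  have hsub := (hasSum_subtype_iff_of_support_subset hsupp).mpr (hasSum_norm_simancaMonomial_sq z)
  exact (e.hasSum_iff (f := fun q : {q : ℕ × ℕ // q ≠ (0, 0)} => ‖simancaMonomial q.1 z‖ ^ 2)).mpr
    hsub
end

section
/- Let f : (0,∞) → ℝ be f(x) = x + log x (the radial Simanca potential, x = |z|²), and set D(x) = f'(x)·(f'(x) + x·f''(x)) and ψ(x) = log D(x). Then for all x > 0: (1/(f'(x) + x·f''(x)))·(ψ'(x) + x·ψ''(x)) + (1/f'(x))·ψ'(x) = 0. Explicitly, with f'(x) = 1 + 1/x, f'(x) + x f''(x) = 1, and D(x) = 1 + 1/x, the identity (ψ'(x) + x·ψ''(x)) + (x/(x+1))·ψ'(x) = 0 holds for all x > 0. -/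
/-!
Since `(x f')' = f' + x f''` and `x f'(x) = x + 1`, the second factor of `D` is `1`, so
`D = f' = (x + 1) / x` and `ψ = log (x + 1) - log x` on `(0, ∞)`. Then `x ψ' = -1 / (x + 1)`,
so `ψ' + x ψ'' = (x ψ')' = 1 / (x + 1)²`, which is cancelled by `(x / (x + 1)) ψ' = -1 / (x + 1)²`.
-/

open Real Set

lemma hasDerivAt_add_log {x : ℝ} (hx : x ≠ 0) :
    HasDerivAt (fun x => x + log x) (1 + x⁻¹) x :=
  (hasDerivAt_id x).add (hasDerivAt_log hx)

lemma eqOn_deriv_add_log : EqOn (deriv fun x => x + log x) (fun x => 1 + x⁻¹) {0}ᶜ :=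
  fun _ hx => (hasDerivAt_add_log hx).deriv

lemma deriv_deriv_add_log {x : ℝ} (hx : x ≠ 0) :
    deriv (deriv fun x => x + log x) x = -(x ^ 2)⁻¹ := by
  rw [eqOn_deriv_add_log.deriv isOpen_compl_singleton hx, deriv_const_add, deriv_inv]

lemma deriv_add_log_add_mul_deriv_deriv {x : ℝ} (hx : x ≠ 0) :
    deriv (fun x => x + log x) x + x * deriv (deriv fun x => x + log x) x = 1 := by
  rw [(hasDerivAt_add_log hx).deriv, deriv_deriv_add_log hx]
  field_simp
  ring

lemma deriv_add_log_mul_add_mul_deriv_deriv {x : ℝ} (hx : x ≠ 0) :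
    deriv (fun x => x + log x) x *
      (deriv (fun x => x + log x) x + x * deriv (deriv fun x => x + log x) x) = 1 + 1 / x := by
  rw [deriv_add_log_add_mul_deriv_deriv hx, (hasDerivAt_add_log hx).deriv, mul_one, one_div]

lemma log_one_add_one_div {x : ℝ} (hx : 0 < x) : log (1 + 1 / x) = log (x + 1) - log x := by
  rw [← log_div (by positivity) hx.ne']
  congr 1
  field_simp

lemma hasDerivAt_log_add_one_sub_log {x : ℝ} (hx : 0 < x) :
    HasDerivAt (fun x => log (x + 1) - log x) ((x + 1)⁻¹ - x⁻¹) x := by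
  have hlog : HasDerivAt (fun x => log (x + 1)) (1 / (x + 1)) x :=
    ((hasDerivAt_id x).add_const 1).log (by positivity)
  rw [one_div] at hlog
  exact hlog.sub (hasDerivAt_log hx.ne')

lemma eqOn_deriv_log_add_one_sub_log :
    EqOn (deriv fun x => log (x + 1) - log x) (fun x => (x + 1)⁻¹ - x⁻¹) (Ioi 0) :=
  fun _ hx => (hasDerivAt_log_add_one_sub_log hx).deriv

lemma deriv_deriv_log_add_one_sub_log {x : ℝ} (hx : 0 < x) :
    deriv (deriv fun x => log (x + 1) - log x) x = (x ^ 2)⁻¹ - ((x + 1) ^ 2)⁻¹ := by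
  have hinv : HasDerivAt (fun x : ℝ => (x + 1)⁻¹) (-1 / (x + 1) ^ 2) x :=
    ((hasDerivAt_id x).add_const 1).inv (by positivity)
  rw [eqOn_deriv_log_add_one_sub_log.deriv isOpen_Ioi hx,
    (hinv.fun_sub (hasDerivAt_inv hx.ne')).deriv]
  ring

/-- Scalar-flatness of the Simanca metric: for the radial Simanca potential
`f(x) = x + log x`, with `D(x) = f'(x)(f'(x) + x f''(x))` and `ψ = log D`, one has
`(1/(f' + x f''))(ψ' + x ψ'') + (1/f') ψ' = 0` on `(0,∞)`; explicitly `f'(x) = 1 + 1/x`,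
`f'(x) + x f''(x) = 1`, `D(x) = 1 + 1/x` and `(ψ' + x ψ'') + (x/(x+1)) ψ' = 0`. -/
theorem simanca_scalar_flat
    (f D ψ : ℝ → ℝ)
    (hf : f = fun x => x + Real.log x)
    (hD : D = fun x => deriv f x * (deriv f x + x * deriv (deriv f) x))
    (hψ : ψ = fun x => Real.log (D x)) :
    ∀ x ∈ Set.Ioi (0 : ℝ),
      deriv f x = 1 + 1 / x ∧
      deriv f x + x * deriv (deriv f) x = 1 ∧
      D x = 1 + 1 / x ∧
      (1 / (deriv f x + x * deriv (deriv f) x)) * (deriv ψ x + x * deriv (deriv ψ) x)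
        + (1 / deriv f x) * deriv ψ x = 0 ∧
      (deriv ψ x + x * deriv (deriv ψ) x) + (x / (x + 1)) * deriv ψ x = 0 := by
  subst hf
  have hD_eq : EqOn D (fun x => 1 + 1 / x) (Ioi 0) := fun x hx => by
    rw [hD]
    exact deriv_add_log_mul_add_mul_deriv_deriv (ne_of_gt hx)
  have hψ_eq : EqOn ψ (fun x => log (x + 1) - log x) (Ioi 0) := fun x hx => by
    rw [hψ]
    exact (congrArg log (hD_eq hx)).trans (log_one_add_one_div hx)
  intro x (hx : 0 < x)
  have hψ' : deriv ψ x = (x + 1)⁻¹ - x⁻¹ := by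
    rw [hψ_eq.deriv isOpen_Ioi hx, eqOn_deriv_log_add_one_sub_log hx]
  have hψ'' : deriv (deriv ψ) x = (x ^ 2)⁻¹ - ((x + 1) ^ 2)⁻¹ := by
    rw [(hψ_eq.deriv isOpen_Ioi).deriv isOpen_Ioi hx, deriv_deriv_log_add_one_sub_log hx]
  have hf' : deriv (fun x => x + log x) x = 1 + 1 / x := by
    rw [one_div]
    exact (hasDerivAt_add_log hx.ne').deriv
  have hflat : (deriv ψ x + x * deriv (deriv ψ) x) + (x / (x + 1)) * deriv ψ x = 0 := by
    rw [hψ', hψ'']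
    field_simp
    ring
  refine ⟨hf', deriv_add_log_add_mul_deriv_deriv hx.ne', hD_eq hx, ?_, hflat⟩
  rw [deriv_add_log_add_mul_deriv_deriv hx.ne', hf', ← hflat]
  field_simp
end

section
/- Let n ≥ 2 be an integer and ε ∈ {−1, 0, 1}, and let J = {x > 0 : x^n + ε > 0}. Let f be a smooth function on J with f'(x) = (ε x^{−n} + 1)^{1/n}, and define F : J → ℝ by F(x) = n(n−1)(n+1)(n+2)·ε²·(x^n + ε)^{−2(n+1)/n}. Then for all x ∈ J: (1/(f'(x) + x·f''(x)))·(F'(x) + x·F''(x)) + (n−1)·(1/f'(x))·F'(x) = 2n(n−1)(n+2)(n+1)²·ε²·(x^n + ε)^{−3(n+1)/n}·(x^n(n+3) − nε). In particular, for ε = ±1 this expression is not identically zero on J, while for ε = 0 it vanishes identically. -/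
set_option maxHeartbeats 3200000 in
/-- The Laplacian of `|R|²` for the Ricci-flat radial metric `ω_ε`: with
`J = {x > 0 : xⁿ + ε > 0}`, `f'(x) = (ε x⁻ⁿ + 1)^{1/n}` and
`F(x) = n(n-1)(n+1)(n+2) ε² (xⁿ + ε)^{-2(n+1)/n}` (the squared norm of the curvature tensor),
one has `ΔF = (1/(f'+xf''))(F' + x F'') + (n-1)(1/f') F'
  = 2n(n-1)(n+2)(n+1)² ε² (xⁿ+ε)^{-3(n+1)/n} (xⁿ(n+3) - nε)` on `J`;
in particular this expression (which up to a positive constant is the TYZ coefficient `a₃`)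
is not identically zero on `J` for `ε = ±1`, while it vanishes identically for `ε = 0`. -/
theorem laplacian_norm_curvature_omega_eps
    {n : ℕ} (hn : 2 ≤ n) (ε : ℝ) (hε : ε = -1 ∨ ε = 0 ∨ ε = 1)
    (J : Set ℝ) (hJ : J = {x : ℝ | 0 < x ∧ 0 < x ^ n + ε})
    (f f' f'' : ℝ → ℝ) (hf : ContDiffOn ℝ (⊤ : ℕ∞) f J)
    (hd1 : ∀ x ∈ J, HasDerivAt f (f' x) x)
    (hf' : ∀ x ∈ J, f' x = (ε * x ^ (-(n : ℝ)) + 1) ^ ((n : ℝ)⁻¹))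
    (hd2 : ∀ x ∈ J, HasDerivAt f' (f'' x) x)
    (F : ℝ → ℝ)
    (hF : F = fun x => (n : ℝ) * ((n : ℝ) - 1) * ((n : ℝ) + 1) * ((n : ℝ) + 2) * ε ^ 2 *
      (x ^ n + ε) ^ ((-2 * ((n : ℝ) + 1)) / (n : ℝ))) :
    let L : ℝ → ℝ := fun x =>
      (1 / (f' x + x * f'' x)) * (deriv F x + x * deriv (deriv F) x)
        + ((n : ℝ) - 1) * (1 / f' x) * deriv F x;
    (∀ x ∈ J, L x =
      2 * (n : ℝ) * ((n : ℝ) - 1) * ((n : ℝ) + 2) * ((n : ℝ) + 1) ^ 2 * ε ^ 2 *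
        (x ^ n + ε) ^ ((-3 * ((n : ℝ) + 1)) / (n : ℝ)) * (x ^ n * ((n : ℝ) + 3) - (n : ℝ) * ε))
    ∧ (ε ≠ 0 → ∃ x ∈ J, L x ≠ 0)
    ∧ (ε = 0 → ∀ x ∈ J, L x = 0) := by
  intro L
  obtain ⟨m, rfl⟩ : ∃ m, n = m + 2 := ⟨n - 2, by omega⟩
  have hJopen : IsOpen J := by
    rw [hJ]
    exact (isOpen_lt continuous_const continuous_id).and
      (isOpen_lt continuous_const ((continuous_pow _).add continuous_const))
  have hNm : (m + 2 : ℕ) ≠ 0 := by omega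
  have hN0 : (0:ℝ) < ((m+2:ℕ):ℝ) := by positivity
  have key : ∀ x ∈ J, L x =
      2 * ((m+2:ℕ) : ℝ) * (((m+2:ℕ) : ℝ) - 1) * (((m+2:ℕ) : ℝ) + 2) * (((m+2:ℕ) : ℝ) + 1) ^ 2 * ε ^ 2 *
        (x ^ (m+2) + ε) ^ ((-3 * (((m+2:ℕ) : ℝ) + 1)) / ((m+2:ℕ) : ℝ)) *
        (x ^ (m+2) * (((m+2:ℕ) : ℝ) + 3) - ((m+2:ℕ) : ℝ) * ε) := by
    intro x hxJ
    have hx : 0 < x ∧ 0 < x ^ (m+2) + ε := by rwa [hJ] at hxJ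
    obtain ⟨hx0, hu0⟩ := hx
    set N : ℝ := ((m+2:ℕ) : ℝ) with hNdef
    set p : ℝ := (-2 * (N + 1)) / N with hpdef
    set q : ℝ := N⁻¹ with hqdef
    set C : ℝ := N * (N - 1) * (N + 1) * (N + 2) * ε ^ 2 with hCdef
    set u : ℝ := x ^ (m+2) + ε with hudef
    set a : ℝ := u ^ q with hadef
    have ha : 0 < a := Real.rpow_pos_of_pos hu0 _
    -- power conversion machinery
    have hkey : ∀ (k l : ℕ), u ^ (-((k:ℝ) + (l:ℝ) * q)) = (u ^ k * a ^ l)⁻¹ := by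
      intro k l
      rw [Real.rpow_neg hu0.le]
      congr 1
      rw [Real.rpow_add hu0, Real.rpow_natCast, mul_comm ((l:ℝ)) q,
        Real.rpow_mul hu0.le, Real.rpow_natCast]
    have e1 : p - 1 = -(((3:ℕ):ℝ) + ((2:ℕ):ℝ) * q) := by
      rw [hpdef, hqdef]; push_cast; field_simp; ring
    have e2 : p - 1 - 1 = -(((4:ℕ):ℝ) + ((2:ℕ):ℝ) * q) := by
      rw [hpdef, hqdef]; push_cast; field_simp; ring
    have e3 : (-3 * (N + 1)) / N = -(((3:ℕ):ℝ) + ((3:ℕ):ℝ) * q) := by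
      rw [hqdef]; push_cast; field_simp
    have hu1 : u ^ (p - 1) = (u ^ 3 * a ^ 2)⁻¹ := by
      rw [e1, hkey 3 2]
    have hu2 : u ^ (p - 1 - 1) = (u ^ 4 * a ^ 2)⁻¹ := by
      rw [e2, hkey 4 2]
    have hu3 : u ^ ((-3 * (N + 1)) / N) = (u ^ 3 * a ^ 3)⁻¹ := by
      rw [e3, hkey 3 3]
    -- derivative of F on J
    have hdF_on : ∀ y, 0 < y ^ (m+2) + ε →
        HasDerivAt F (C * ((((m+2:ℕ):ℝ) * y ^ (m+1)) * p * (y ^ (m+2) + ε) ^ (p - 1))) y := by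
      intro y hy
      rw [hF]
      exact (((hasDerivAt_pow (m+2) y).add_const ε).rpow_const (Or.inl hy.ne')).const_mul C
    have hFG : ∀ y ∈ J, deriv F y =
        C * ((((m+2:ℕ):ℝ) * y ^ (m+1)) * p * (y ^ (m+2) + ε) ^ (p - 1)) := by
      intro y hy
      have hy' : 0 < y ^ (m+2) + ε := by
        rw [hJ] at hy; exact hy.2
      exact (hdF_on y hy').deriv
    have hdFx : deriv F x = C * ((N * x ^ (m+1)) * p * u ^ (p - 1)) := hFG x hxJ
    -- second derivative of F at x
    have hG : HasDerivAt (fun y => C * ((((m+2:ℕ):ℝ) * y ^ (m+1)) * p * (y ^ (m+2) + ε) ^ (p - 1)))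
        (C * ((N * (((m+1:ℕ):ℝ) * x ^ m) * p) * u ^ (p-1)
          + (N * x ^ (m+1) * p) * ((N * x ^ (m+1)) * (p-1) * u ^ (p - 1 - 1)))) x := by
      have h1 : HasDerivAt (fun y : ℝ => ((m+2:ℕ):ℝ) * y ^ (m+1) * p)
          (N * (((m+1:ℕ):ℝ) * x ^ m) * p) x :=
        (((hasDerivAt_pow (m+1) x).const_mul (((m+2:ℕ):ℝ))).mul_const p)
      have h2 : HasDerivAt (fun y : ℝ => (y ^ (m+2) + ε) ^ (p - 1))
          ((N * x ^ (m+1)) * (p-1) * u ^ (p - 1 - 1)) x :=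
        ((hasDerivAt_pow (m+2) x).add_const ε).rpow_const (Or.inl hu0.ne')
      exact (h1.mul h2).const_mul C
    have hddFx : deriv (deriv F) x =
        C * ((N * (((m+1:ℕ):ℝ) * x ^ m) * p) * u ^ (p-1)
          + (N * x ^ (m+1) * p) * ((N * x ^ (m+1)) * (p-1) * u ^ (p - 1 - 1))) := by
      have heq : deriv F =ᶠ[nhds x]
          (fun y => C * ((((m+2:ℕ):ℝ) * y ^ (m+1)) * p * (y ^ (m+2) + ε) ^ (p - 1))) :=
        Filter.eventuallyEq_of_mem (hJopen.mem_nhds hxJ) hFG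
      rw [heq.deriv_eq]
      exact hG.deriv
    -- f' at x
    have hxneg : x ^ (-(((m+2:ℕ)):ℝ)) = (x ^ (m+2))⁻¹ := by
      rw [Real.rpow_neg hx0.le, Real.rpow_natCast]
    have hv_eq : ε * x ^ (-(((m+2:ℕ)):ℝ)) + 1 = u / x ^ (m+2) := by
      rw [hxneg, hudef]
      field_simp
      ring
    have hv : 0 < ε * x ^ (-(((m+2:ℕ)):ℝ)) + 1 := by
      rw [hv_eq]; positivity
    have hf'x : f' x = a / x := by
      rw [hf' x hxJ, hv_eq, Real.div_rpow hu0.le (by positivity),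
        Real.pow_rpow_inv_natCast hx0.le hNm, hadef]
    -- f'' at x
    have hφ : HasDerivAt (fun y => (ε * y ^ (-(((m+2:ℕ)):ℝ)) + 1) ^ (((m+2:ℕ):ℝ))⁻¹)
        ((ε * (-(((m+2:ℕ)):ℝ) * x ^ (-(((m+2:ℕ)):ℝ) - 1))) * (((m+2:ℕ):ℝ))⁻¹ *
          (ε * x ^ (-(((m+2:ℕ)):ℝ)) + 1) ^ ((((m+2:ℕ):ℝ))⁻¹ - 1)) x := by
      exact (((Real.hasDerivAt_rpow_const (Or.inl hx0.ne')).const_mul ε).add_const 1).rpow_const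
        (Or.inl hv.ne')
    have hf''x : f'' x =
        (ε * (-N * x ^ (-N - 1))) * q * (ε * x ^ (-N) + 1) ^ (q - 1) := by
      rw [← (hd2 x hxJ).deriv,
        (Filter.eventuallyEq_of_mem (hJopen.mem_nhds hxJ) hf').deriv_eq]
      exact hφ.deriv
    -- simplify pieces of f''
    have hxneg1 : x ^ (-N - 1) = (x ^ (m+2) * x)⁻¹ := by
      rw [show -N - 1 = -(N + 1) by ring, Real.rpow_neg hx0.le, Real.rpow_add hx0,
        Real.rpow_natCast, Real.rpow_one]
    have hvq1 : (ε * x ^ (-N) + 1) ^ (q - 1) = (a / x) / (u / x ^ (m+2)) := by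
      rw [Real.rpow_sub hv, Real.rpow_one, ← hf' x hxJ, hf'x, hv_eq]
    -- assemble
    show (1 / (f' x + x * f'' x)) * (deriv F x + x * deriv (deriv F) x)
        + (N - 1) * (1 / f' x) * deriv F x = _
    rw [hdFx, hddFx, hf'x, hf''x, hvq1, hxneg1, hu1, hu2, hu3]
    have hsum : a / x + x * (ε * (-N * (x ^ (m+2) * x)⁻¹) * q * ((a / x) / (u / x ^ (m+2))))
        = x ^ (m+1) * a / u := by
      rw [hqdef, hNdef, hudef]
      push_cast
      have hne : x ^ (m+2) + ε ≠ 0 := hu0.ne'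
      field_simp
      ring
    rw [hsum]
    rw [hpdef, hqdef, hNdef, hCdef, hudef] at *
    push_cast
    have hx2 : (0:ℝ) < x ^ (m+2) + ε := hu0
    field_simp
    ring
  refine ⟨key, ?_, ?_⟩
  · -- ε ≠ 0
    intro hεne
    have hε1 : ε = -1 ∨ ε = 1 := by rcases hε with h | h | h <;> [exact Or.inl h; exact absurd h hεne; exact Or.inr h]
    have h4 : (4:ℝ) ≤ 2 ^ (m+2) := by
      calc (4:ℝ) = 2 ^ 2 := by norm_num
      _ ≤ 2 ^ (m+2) := by
        apply pow_le_pow_right₀ (by norm_num) (by omega)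
    have h2J : (2:ℝ) ∈ J := by
      rw [hJ]
      refine ⟨by norm_num, ?_⟩
      rcases hε1 with h | h <;> rw [h] <;> nlinarith
    refine ⟨2, h2J, ?_⟩
    rw [key 2 h2J]
    have hu2 : (0:ℝ) < 2 ^ (m+2) + ε := by rcases hε1 with h | h <;> rw [h] <;> nlinarith
    have hr : (0:ℝ) < ((2:ℝ) ^ (m+2) + ε) ^ ((-3 * (((m+2:ℕ):ℝ) + 1)) / ((m+2:ℕ):ℝ)) :=
      Real.rpow_pos_of_pos hu2 _
    have hfac : (0:ℝ) < (2:ℝ) ^ (m+2) * (((m+2:ℕ):ℝ) + 3) - ((m+2:ℕ):ℝ) * ε := by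
      have hm : (0:ℝ) ≤ (m:ℝ) := Nat.cast_nonneg m
      rcases hε1 with h | h <;> rw [h] <;> push_cast <;> nlinarith
    have hε2 : (0:ℝ) < ε ^ 2 := by rcases hε1 with h | h <;> rw [h] <;> norm_num
    have hm : (0:ℝ) ≤ (m:ℝ) := Nat.cast_nonneg m
    have hsub : (0:ℝ) < ((m+2:ℕ):ℝ) - 1 := by push_cast; linarith
    have hA : (0:ℝ) < 2 * ((m+2:ℕ):ℝ) * (((m+2:ℕ):ℝ) - 1) * (((m+2:ℕ):ℝ) + 2) *
        (((m+2:ℕ):ℝ) + 1) ^ 2 * ε ^ 2 := by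
      exact mul_pos (mul_pos (mul_pos (mul_pos (mul_pos two_pos hN0) hsub)
        (by positivity)) (by positivity)) hε2
    exact ne_of_gt (mul_pos (mul_pos hA hr) hfac)
  · intro h0 x hx
    rw [key x hx, h0]
    ring
end
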